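/- arXiv:0911.3253 — 7 statements merged into one kernel-verified Lean document; each statement's English description precedes it below -/
import Mathlib

section
/- Let k < n be positive integers, p a symmetric polynomial in k variables and q a symmetric polynomial in n-k variables with deg(p) + deg(q) < k(n-k). Then the sum over all k-element subsets I of {1,...,n} of p(z_I)·q(z_{Ī}) / ∏_{i∈I, j∉I}(z_i - z_j) equals 0, as an identity of rational functions in z_1,...,z_n. -/
open MvPolynomial Finset

namespace LagLoc

noncomputable section

variable {n : ℕ}

/-- product of differences over a set of pairs -/
def dP (v : Fin n → ℂ) (s : Finset (Fin n × Fin n)) : ℂ := ∏ x ∈ s, (v x.2 - v x.1)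

def pairsLT (s : Finset (Fin n)) : Finset (Fin n × Fin n) :=
  (s ×ˢ s).filter fun x => x.1 < x.2

lemma mem_pairsLT {s : Finset (Fin n)} {x : Fin n × Fin n} :
    x ∈ pairsLT s ↔ x.1 ∈ s ∧ x.2 ∈ s ∧ x.1 < x.2 := by
  simp [pairsLT, mem_filter, mem_product, and_assoc]

def Vd (v : Fin n → ℂ) : ℂ := (Matrix.vandermonde v).det

lemma Vd_eq (v : Fin n → ℂ) : Vd v = dP v (pairsLT univ) := by
  rw [Vd, Matrix.det_vandermonde, dP, pairsLT, prod_filter,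
    Finset.prod_product' (f := fun i j => if i < j then v j - v i else 1)]
  refine prod_congr rfl fun i _ => ?_
  rw [← prod_filter]
  refine prod_congr ?_ (fun _ _ => rfl)
  ext j; simp [mem_Ioi]

lemma dP_ne_zero {z : Fin n → ℂ} (hz : Function.Injective z)
    {s : Finset (Fin n × Fin n)} (h : ∀ x ∈ s, x.1 ≠ x.2) : dP z s ≠ 0 := by
  rw [dP, prod_ne_zero_iff]
  intro x hx
  exact sub_ne_zero.mpr (fun e => h x hx (hz e).symm)

lemma Vd_ne_zero {z : Fin n → ℂ} (hz : Function.Injective z) : Vd z ≠ 0 := by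
  rw [Vd_eq]
  exact dP_ne_zero hz (fun x hx => (mem_pairsLT.mp hx).2.2.ne)

lemma Vd_eq_zero {z : Fin n → ℂ} (hz : ¬ Function.Injective z) : Vd z = 0 := by
  rw [Function.Injective] at hz
  push_neg at hz
  obtain ⟨a, b, hab, hne⟩ := hz
  rw [Vd_eq, dP]
  rcases hne.lt_or_gt with h | h
  · exact prod_eq_zero (s := pairsLT univ) (i := (a, b))
      (mem_pairsLT.mpr ⟨mem_univ a, mem_univ b, h⟩) (by simp [hab])
  · exact prod_eq_zero (s := pairsLT univ) (i := (b, a))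
      (mem_pairsLT.mpr ⟨mem_univ b, mem_univ a, h⟩) (by simp [hab])


section PermOf

variable {k : ℕ} (I : Finset (Fin n)) (hI : I.card = k)

lemma card_comp (I : Finset (Fin n)) (hI : I.card = k) : Iᶜ.card = n - k := by
  rw [card_compl, hI, Fintype.card_fin]

/-- the map listing `I` in increasing order, then `Iᶜ` in increasing order -/
def fI : Fin n → Fin n := fun i =>
  if h : (i : ℕ) < k then I.orderEmbOfFin hI ⟨i, h⟩
  else Iᶜ.orderEmbOfFin (card_comp I hI) ⟨(i : ℕ) - k, by
    have := i.isLt; omega⟩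

lemma fI_mem_low {i : Fin n} (h : (i : ℕ) < k) : fI I hI i ∈ I := by
  rw [fI, dif_pos h]; exact Finset.orderEmbOfFin_mem _ _ _

lemma fI_mem_high {i : Fin n} (h : ¬ (i : ℕ) < k) : fI I hI i ∈ Iᶜ := by
  rw [fI, dif_neg h]; exact Finset.orderEmbOfFin_mem _ _ _

lemma fI_lt_low {i j : Fin n} (hi : (i : ℕ) < k) (hj : (j : ℕ) < k) :
    fI I hI i < fI I hI j ↔ i < j := by
  rw [fI, fI, dif_pos hi, dif_pos hj, OrderEmbedding.lt_iff_lt]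
  simp only [Fin.mk_lt_mk, Fin.lt_def]

lemma fI_lt_high {i j : Fin n} (hi : ¬ (i : ℕ) < k) (hj : ¬ (j : ℕ) < k) :
    fI I hI i < fI I hI j ↔ i < j := by
  rw [fI, fI, dif_neg hi, dif_neg hj, OrderEmbedding.lt_iff_lt]
  simp only [Fin.lt_def, Fin.mk_lt_mk]
  omega

lemma fI_inj : Function.Injective (fI I hI) := by
  intro i j hij
  by_cases hi : (i : ℕ) < k <;> by_cases hj : (j : ℕ) < k
  · rw [fI, fI, dif_pos hi, dif_pos hj] at hij
    have := (I.orderEmbOfFin hI).injective hij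
    exact Fin.ext (by simpa [Fin.ext_iff] using this)
  · exact absurd ((mem_compl.mp (fI_mem_high I hI hj)))
      (by rw [← hij] at *; simp [fI_mem_low I hI hi, hij ▸ fI_mem_low I hI hi])
  · exact absurd ((mem_compl.mp (fI_mem_high I hI hi)))
      (by simp [hij ▸ fI_mem_low I hI hj])
  · rw [fI, fI, dif_neg hi, dif_neg hj] at hij
    have := (Iᶜ.orderEmbOfFin (card_comp I hI)).injective hij
    have h2 : (i : ℕ) - k = (j : ℕ) - k := by simpa [Fin.ext_iff] using this
    exact Fin.ext (by omega)

/-- the permutation of `Fin n` listing `I` then `Iᶜ` -/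
def permOf : Equiv.Perm (Fin n) :=
  Equiv.ofBijective (fI I hI) (Finite.injective_iff_bijective.mp (fI_inj I hI))

lemma permOf_apply (i : Fin n) : permOf I hI i = fI I hI i := rfl

/-- key factorization of a permuted Vandermonde -/
lemma L1 (v : Fin n → ℂ) :
    Vd (v ∘ fI I hI) =
      dP v (pairsLT I) * dP v (I ×ˢ Iᶜ) * dP v (pairsLT Iᶜ) := by
  have hinj : Function.Injective (Prod.map (fI I hI) (fI I hI)) :=
    (fI_inj I hI).prodMap (fI_inj I hI)
  have hQ : (pairsLT (univ : Finset (Fin n))).image (Prod.map (fI I hI) (fI I hI)) =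
      pairsLT I ∪ I ×ˢ Iᶜ ∪ pairsLT Iᶜ := by
    ext x
    simp only [mem_image, mem_union, mem_product]
    constructor
    · rintro ⟨⟨i, j⟩, hmem, rfl⟩
      obtain ⟨-, -, hij⟩ := mem_pairsLT.mp hmem
      replace hij : i < j := hij
      by_cases hi : (i : ℕ) < k <;> by_cases hj : (j : ℕ) < k
      · exact Or.inl (Or.inl (mem_pairsLT.mpr
          ⟨fI_mem_low I hI hi, fI_mem_low I hI hj, (fI_lt_low I hI hi hj).mpr hij⟩))
      · exact Or.inl (Or.inr ⟨fI_mem_low I hI hi, fI_mem_high I hI hj⟩)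
      · exact absurd hij (by have := Fin.lt_def.mp hij; omega)
      · exact Or.inr (mem_pairsLT.mpr
          ⟨fI_mem_high I hI hi, fI_mem_high I hI hj, (fI_lt_high I hI hi hj).mpr hij⟩)
    · have hsurj := (Finite.injective_iff_bijective.mp (fI_inj I hI)).surjective
      intro hx
      obtain ⟨i, hi⟩ := hsurj x.1
      obtain ⟨j, hj⟩ := hsurj x.2
      refine ⟨(i, j), mem_pairsLT.mpr ⟨mem_univ i, mem_univ j, show i < j from ?_⟩, by
        simp [Prod.map, hi, hj]⟩
      have hlow : ∀ a : Fin n, fI I hI a ∈ I → (a : ℕ) < k := by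
        intro a ha
        by_contra hcon
        exact (mem_compl.mp (fI_mem_high I hI hcon)) ha
      have hhigh : ∀ a : Fin n, fI I hI a ∈ Iᶜ → ¬ (a : ℕ) < k := by
        intro a ha hcon
        exact (mem_compl.mp ha) (fI_mem_low I hI hcon)
      rcases hx with (h1 | h1) | h1
      · obtain ⟨m1, m2, hlt⟩ := mem_pairsLT.mp h1
        rw [← hi] at m1 hlt; rw [← hj] at m2 hlt
        exact (fI_lt_low I hI (hlow i m1) (hlow j m2)).mp hlt
      · obtain ⟨m1, m2⟩ := h1
        rw [← hi] at m1; rw [← hj] at m2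
        have h1 := hlow i m1
        have h2 := hhigh j m2
        exact Fin.lt_def.mpr (by omega)
      · obtain ⟨m1, m2, hlt⟩ := mem_pairsLT.mp h1
        rw [← hi] at m1 hlt; rw [← hj] at m2 hlt
        exact (fI_lt_high I hI (hhigh i m1) (hhigh j m2)).mp hlt
  have hd1 : Disjoint (pairsLT I) (I ×ˢ Iᶜ) := by
    rw [disjoint_left]
    intro x hx hx'
    exact (mem_compl.mp (mem_product.mp hx').2) (mem_pairsLT.mp hx).2.1
  have hd2 : Disjoint (pairsLT I ∪ I ×ˢ Iᶜ) (pairsLT Iᶜ) := by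
    rw [disjoint_left]
    intro x hx hx'
    have h2 := (mem_pairsLT.mp hx').1
    rcases mem_union.mp hx with h | h
    · exact (mem_compl.mp h2) (mem_pairsLT.mp h).1
    · exact (mem_compl.mp h2) (mem_product.mp h).1
  rw [Vd_eq, dP]
  calc ∏ x ∈ pairsLT univ, ((v ∘ fI I hI) x.2 - (v ∘ fI I hI) x.1)
      = ∏ x ∈ pairsLT (univ : Finset (Fin n)),
          (fun y : Fin n × Fin n => v y.2 - v y.1) (Prod.map (fI I hI) (fI I hI) x) := rfl
    _ = ∏ x ∈ (pairsLT (univ : Finset (Fin n))).image (Prod.map (fI I hI) (fI I hI)),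
          (v x.2 - v x.1) :=
            (prod_image (f := fun y : Fin n × Fin n => v y.2 - v y.1)
              (fun x _ y _ h => hinj h)).symm
    _ = dP v (pairsLT I) * dP v (I ×ˢ Iᶜ) * dP v (pairsLT Iᶜ) := by
          rw [hQ, prod_union hd2, prod_union hd1, dP, dP, dP]

end PermOf

/-- permuted Vandermonde picks up the sign -/
lemma L2 (σ : Equiv.Perm (Fin n)) (v : Fin n → ℂ) :
    Vd (v ∘ σ) = ((Equiv.Perm.sign σ : ℤ) : ℂ) * Vd v := by
  have h : Matrix.vandermonde (v ∘ σ) = (Matrix.vandermonde v).submatrix σ id := by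
    ext i j; simp [Matrix.vandermonde]
  rw [Vd, h, Matrix.det_permute, Vd]


/-- polynomial Vandermonde -/
def Vp : MvPolynomial (Fin n) ℂ :=
  (Matrix.vandermonde (fun i => (X i : MvPolynomial (Fin n) ℂ))).det

lemma eval_Vp (z : Fin n → ℂ) : eval z (Vp (n := n)) = Vd z := by
  rw [Vp, Vd, RingHom.map_det]
  congr 1
  ext i j
  simp [Matrix.vandermonde]

lemma Vp_ne_zero : (Vp (n := n)) ≠ 0 := by
  intro h
  have hz : Function.Injective (fun i : Fin n => ((i : ℕ) : ℂ)) := by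
    intro a b hab
    exact Fin.ext (Nat.cast_injective hab)
  have h2 := Vd_ne_zero hz
  rw [← eval_Vp, h] at h2
  simp at h2

lemma eq_of_eval_inj (P Q : MvPolynomial (Fin n) ℂ)
    (h : ∀ z : Fin n → ℂ, Function.Injective z → eval z P = eval z Q) : P = Q := by
  have h0 : (P - Q) * Vp = 0 := by
    apply MvPolynomial.funext
    intro z
    rw [map_mul, map_sub, eval_Vp, map_zero]
    by_cases hz : Function.Injective z
    · rw [h z hz]; ring
    · rw [Vd_eq_zero hz]; ring
  rcases mul_eq_zero.mp h0 with h1 | h1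
  · exact sub_eq_zero.mp h1
  · exact absurd h1 Vp_ne_zero

/-- evaluation of a symmetric polynomial along two enumerations of the same set -/
lemma eval_symm_congr {r : ℕ} (P : MvPolynomial (Fin r) ℂ) (hP : P.IsSymmetric)
    (z : Fin n → ℂ) (e₁ e₂ : Fin r → Fin n) (h₁ : Function.Injective e₁)
    (him : univ.image e₁ = univ.image e₂) :
    eval (z ∘ e₁) P = eval (z ∘ e₂) P := by
  have hex : ∀ i, ∃ j, e₂ j = e₁ i := by
    intro i
    have h2 : e₁ i ∈ univ.image e₂ := him ▸ mem_image_of_mem _ (mem_univ i)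
    simpa [mem_image] using h2
  choose τ hτ using hex
  have hτinj : Function.Injective τ := fun a b hab => h₁ (by rw [← hτ, ← hτ, hab])
  let τe : Equiv.Perm (Fin r) := Equiv.ofBijective τ (Finite.injective_iff_bijective.mp hτinj)
  have hcomp : z ∘ e₁ = (z ∘ e₂) ∘ τe := by
    funext i
    simp only [Function.comp_apply]
    rw [show (τe i) = τ i from rfl, hτ]
  rw [hcomp, ← eval_rename, hP τe]

lemma image_orderEmbOfFin {α : Type*} [LinearOrder α] [DecidableEq α]
    (s : Finset α) {r : ℕ} (h : s.card = r) :
    univ.image (fun i => s.orderEmbOfFin h i) = s := by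
  apply Finset.coe_injective
  rw [coe_image, coe_univ, Set.image_univ]
  exact Finset.range_orderEmbOfFin s h

lemma compl_image (σ : Equiv.Perm (Fin n)) (I : Finset (Fin n)) :
    (I.image σ)ᶜ = Iᶜ.image σ := by
  ext a
  simp only [mem_compl, mem_image]
  constructor
  · intro h
    exact ⟨σ.symm a, fun hmem => h ⟨σ.symm a, hmem, by simp⟩, by simp⟩
  · rintro ⟨b, hb, rfl⟩ ⟨c, hc, hcb⟩
    exact hb (by rwa [← σ.injective hcb])

lemma prodMap_image (σ : Equiv.Perm (Fin n)) (A B : Finset (Fin n)) :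
    (A.image σ) ×ˢ (B.image σ) = (A ×ˢ B).image (Prod.map σ σ) := by
  ext x
  simp only [mem_product, mem_image, Prod.ext_iff, Prod.map]
  constructor
  · rintro ⟨⟨a, ha, h1⟩, ⟨b, hb, h2⟩⟩
    exact ⟨(a, b), ⟨ha, hb⟩, h1, h2⟩
  · rintro ⟨⟨a, b⟩, ⟨ha, hb⟩, h1, h2⟩
    exact ⟨⟨a, ha, h1⟩, ⟨b, hb, h2⟩⟩

lemma dP_comp (σ : Equiv.Perm (Fin n)) (z : Fin n → ℂ) (s : Finset (Fin n × Fin n)) :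
    dP (z ∘ σ) s = dP z (s.image (Prod.map σ σ)) := by
  rw [dP, dP, prod_image (f := fun y : Fin n × Fin n => z y.2 - z y.1)
    (fun x _ y _ h => (σ.injective.prodMap σ.injective) h)]
  rfl

lemma two_mul_card_pairsLT (s : Finset (Fin n)) :
    2 * (pairsLT s).card = s.card * (s.card - 1) := by
  classical
  have hsplit : s.offDiag = pairsLT s ∪ (pairsLT s).image Prod.swap := by
    ext x
    simp only [mem_offDiag, mem_union, mem_image, mem_pairsLT, Prod.ext_iff]
    constructor
    · rintro ⟨h1, h2, h3⟩
      rcases h3.lt_or_gt with h | h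
      · exact Or.inl ⟨h1, h2, h⟩
      · exact Or.inr ⟨(x.2, x.1), ⟨h2, h1, h⟩, rfl, rfl⟩
    · rintro (⟨h1, h2, h3⟩ | ⟨⟨a, b⟩, ⟨ha, hb, hab⟩, h1, h2⟩)
      · exact ⟨h1, h2, h3.ne⟩
      · exact ⟨h1 ▸ hb, h2 ▸ ha, by rw [← h1, ← h2]; exact hab.ne'⟩
  have hdisj : Disjoint (pairsLT s) ((pairsLT s).image Prod.swap) := by
    rw [disjoint_left]
    rintro x hx hx'
    obtain ⟨-, -, h1⟩ := mem_pairsLT.mp hx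
    obtain ⟨⟨a, b⟩, hab, rfl⟩ := mem_image.mp hx'
    obtain ⟨-, -, h2⟩ := mem_pairsLT.mp hab
    exact absurd h1 (asymm h2)
  have hc : s.offDiag.card = 2 * (pairsLT s).card := by
    rw [hsplit, card_union_of_disjoint hdisj,
      card_image_of_injective _ Prod.swap_injective]
    omega
  have hoff := Finset.offDiag_card s
  have hident : s.card * s.card = s.card * (s.card - 1) + s.card := by
    rcases Nat.eq_zero_or_pos s.card with h | h
    · simp [h]
    · obtain ⟨d, hd⟩ : ∃ d, s.card = d + 1 := ⟨s.card - 1, by omega⟩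
      rw [hd]
      simp only [Nat.add_sub_cancel]
      ring
  omega

lemma sum_fin_le_of_injective {g : Fin n → ℕ} (hg : Function.Injective g) :
    ∑ i : Fin n, (i : ℕ) ≤ ∑ i : Fin n, g i := by
  classical
  have hcard : (univ.image g).card = n := by
    rw [card_image_of_injective _ hg, card_univ, Fintype.card_fin]
  set e := (univ.image g).orderEmbOfFin hcard with he
  have h1 : ∑ i : Fin n, g i = ∑ a ∈ univ.image g, a :=
    (sum_image (f := fun a : ℕ => a) (fun x _ y _ h => hg h)).symm
  have h2 : ∑ a ∈ univ.image g, a = ∑ i : Fin n, e i := by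
    conv_lhs => rw [← image_orderEmbOfFin (univ.image g) hcard]
    rw [sum_image (fun x _ y _ h => e.injective h)]
  have h3 : ∀ m : ℕ, ∀ hm : m < n, m ≤ e ⟨m, hm⟩ := by
    intro m
    induction m with
    | zero => intro hm; exact Nat.zero_le _
    | succ d ih =>
      intro hm
      have hd : d < n := by omega
      have h4 := ih hd
      have hlt : e ⟨d, hd⟩ < e ⟨d + 1, hm⟩ := e.lt_iff_lt.mpr (by simp [Fin.lt_def])
      omega
  rw [h1, h2]
  refine sum_le_sum fun i _ => ?_
  have h5 := h3 i.val i.isLt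
  simpa using h5


def sgn (σ : Equiv.Perm (Fin n)) : ℂ := ((Equiv.Perm.sign σ : ℤ) : ℂ)

lemma sgn_mul_self (σ : Equiv.Perm (Fin n)) : sgn σ * sgn σ = 1 := by
  have h := Int.units_mul_self (Equiv.Perm.sign σ)
  rw [sgn, ← Int.cast_mul, ← Units.val_mul, h]
  norm_num

lemma L2' (σ : Equiv.Perm (Fin n)) (v : Fin n → ℂ) :
    Vd (v ∘ σ) = sgn σ * Vd v := L2 σ v

lemma key_eq {k : ℕ} (I : Finset (Fin n)) (hI : I.card = k) (v : Fin n → ℂ) :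
    dP v (pairsLT I) * dP v (I ×ˢ Iᶜ) * dP v (pairsLT Iᶜ) =
      sgn (permOf I hI) * Vd v := by
  rw [← L1 I hI v]
  exact L2' (permOf I hI) v

section Main

variable {k : ℕ}

def embk (I : Finset (Fin n)) (hI : I.card = k) : Fin k → Fin n :=
  fun i => I.orderEmbOfFin hI i

def embm (I : Finset (Fin n)) (hI : I.card = k) : Fin (n - k) → Fin n :=
  fun i => Iᶜ.orderEmbOfFin (card_comp I hI) i

def PLT (s : Finset (Fin n)) : MvPolynomial (Fin n) ℂ :=
  ∏ x ∈ pairsLT s, (X x.2 - X x.1)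

lemma eval_PLT (z : Fin n → ℂ) (s : Finset (Fin n)) :
    eval z (PLT s) = dP z (pairsLT s) := by
  rw [PLT, map_prod, dP]
  simp

lemma image_embk (I : Finset (Fin n)) (hI : I.card = k) :
    univ.image (embk I hI) = I := image_orderEmbOfFin I hI

lemma image_embm (I : Finset (Fin n)) (hI : I.card = k) :
    univ.image (embm I hI) = Iᶜ := image_orderEmbOfFin Iᶜ (card_comp I hI)

variable (p : MvPolynomial (Fin k) ℂ) (q : MvPolynomial (Fin (n - k)) ℂ)

/-- scalar value of one summand -/
def tval (I : Finset (Fin n)) (hI : I.card = k) (z : Fin n → ℂ) : ℂ :=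
  sgn (permOf I hI) * eval (z ∘ embk I hI) p * eval (z ∘ embm I hI) q *
    dP z (pairsLT I) * dP z (pairsLT Iᶜ)

/-- the global polynomial -/
def SP : MvPolynomial (Fin n) ℂ :=
  ∑ I : {I : Finset (Fin n) // I.card = k},
    C (sgn (permOf I.1 I.2)) * rename (embk I.1 I.2) p * rename (embm I.1 I.2) q *
      PLT I.1 * PLT I.1ᶜ

lemma eval_SP (z : Fin n → ℂ) :
    eval z (SP p q) = ∑ I : {I : Finset (Fin n) // I.card = k}, tval p q I.1 I.2 z := by
  rw [SP, map_sum]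
  refine Finset.sum_congr rfl fun I _ => ?_
  rw [tval]
  simp only [map_mul, eval_C, eval_rename, eval_PLT]

def subE (σ : Equiv.Perm (Fin n)) :
    {I : Finset (Fin n) // I.card = k} ≃ {I : Finset (Fin n) // I.card = k} where
  toFun I := ⟨I.1.image σ, by rw [card_image_of_injective _ σ.injective, I.2]⟩
  invFun I := ⟨I.1.image σ.symm, by rw [card_image_of_injective _ σ.symm.injective, I.2]⟩
  left_inv I := Subtype.ext (by simp [image_image])
  right_inv I := Subtype.ext (by simp [image_image])

lemma term_transform (hp : p.IsSymmetric) (hq : q.IsSymmetric)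
    (σ : Equiv.Perm (Fin n)) (z : Fin n → ℂ) (hz : Function.Injective z)
    (I : Finset (Fin n)) (hI : I.card = k) (hJ : (I.image σ).card = k) :
    tval p q I hI (z ∘ σ) = sgn σ * tval p q (I.image σ) hJ z := by
  set J := I.image σ with hJdef
  -- p-part
  have hpp : eval ((z ∘ σ) ∘ embk I hI) p = eval (z ∘ embk J hJ) p := by
    have h1 : (z ∘ σ) ∘ embk I hI = z ∘ (σ ∘ embk I hI) := rfl
    rw [h1]
    refine eval_symm_congr p hp z _ _
      (σ.injective.comp (fun a b hab => (I.orderEmbOfFin hI).injective hab)) ?_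
    have h2 : univ.image (σ ∘ embk I hI) = (univ.image (embk I hI)).image σ :=
      (image_image).symm
    rw [h2, image_embk I hI, image_embk J hJ]
  -- q-part
  have hqq : eval ((z ∘ σ) ∘ embm I hI) q = eval (z ∘ embm J hJ) q := by
    have h1 : (z ∘ σ) ∘ embm I hI = z ∘ (σ ∘ embm I hI) := rfl
    rw [h1]
    refine eval_symm_congr q hq z _ _
      (σ.injective.comp (fun a b hab => (Iᶜ.orderEmbOfFin (card_comp I hI)).injective hab)) ?_
    have h2 : univ.image (σ ∘ embm I hI) = (univ.image (embm I hI)).image σ :=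
      (image_image).symm
    rw [h2, image_embm I hI, image_embm J hJ, ← compl_image]
  -- delta-part
  have hRJ : dP z (J ×ˢ Jᶜ) ≠ 0 := by
    refine dP_ne_zero hz fun x hx => ?_
    obtain ⟨h1, h2⟩ := mem_product.mp hx
    intro he
    exact (mem_compl.mp h2) (he ▸ h1)
  have hA : dP (z ∘ σ) (pairsLT I) * dP z (J ×ˢ Jᶜ) * dP (z ∘ σ) (pairsLT Iᶜ) =
      sgn (permOf I hI) * (sgn σ * Vd z) := by
    have h3 : dP (z ∘ σ) (I ×ˢ Iᶜ) = dP z (J ×ˢ Jᶜ) := by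
      rw [dP_comp, ← prodMap_image, ← compl_image]
    rw [← h3, key_eq I hI (z ∘ σ), L2' σ z]
  have hB : dP z (pairsLT J) * dP z (J ×ˢ Jᶜ) * dP z (pairsLT Jᶜ) =
      sgn (permOf J hJ) * Vd z := key_eq J hJ z
  have hdelta : sgn (permOf I hI) * dP (z ∘ σ) (pairsLT I) * dP (z ∘ σ) (pairsLT Iᶜ) =
      sgn σ * sgn (permOf J hJ) * dP z (pairsLT J) * dP z (pairsLT Jᶜ) := by
    have hsI := sgn_mul_self (permOf I hI)
    have hsJ := sgn_mul_self (permOf J hJ)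
    apply mul_right_cancel₀ hRJ
    linear_combination sgn (permOf I hI) * hA - sgn σ * sgn (permOf J hJ) * hB +
      (sgn σ * Vd z) * hsI - (sgn σ * Vd z) * hsJ
  rw [tval, tval, hpp, hqq]
  linear_combination (eval (z ∘ embk J hJ) p * eval (z ∘ embm J hJ) q) * hdelta

lemma rename_SP (hp : p.IsSymmetric) (hq : q.IsSymmetric) (σ : Equiv.Perm (Fin n)) :
    rename ⇑σ (SP p q) = C (sgn σ) * SP p q := by
  apply eq_of_eval_inj
  intro z hz
  rw [eval_rename, map_mul, eval_C, eval_SP, eval_SP, mul_sum]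
  exact Fintype.sum_equiv (subE σ) _ _
    (fun I => term_transform p q hp hq σ z hz I.1 I.2 (subE σ I).2)


lemma SP_eq_zero (hk : 0 < k) (hkn : k < n)
    (hp : p.IsSymmetric) (hq : q.IsSymmetric)
    (hdeg : p.totalDegree + q.totalDegree < k * (n - k)) :
    SP p q = 0 := by
  by_contra h0
  obtain ⟨α, hα⟩ := support_nonempty.mpr h0
  -- all exponents of α are distinct
  have hainj : Function.Injective fun i : Fin n => α i := by
    intro a b hab
    by_contra hne
    have hswap := rename_SP p q hp hq (Equiv.swap a b)
    have hsgn : sgn (Equiv.swap a b) = -1 := by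
      rw [sgn, Equiv.Perm.sign_swap hne]
      norm_num
    have hmd : Finsupp.mapDomain (⇑(Equiv.swap a b)) α = α := by
      have hval : ∀ c, α (Equiv.swap a b c) = α c := by
        intro c
        rcases eq_or_ne c a with rfl | hca
        · rw [Equiv.swap_apply_left]; exact hab.symm
        rcases eq_or_ne c b with rfl | hcb
        · rw [Equiv.swap_apply_right]; exact hab
        · rw [Equiv.swap_apply_of_ne_of_ne hca hcb]
      ext c
      conv_lhs => rw [show c = Equiv.swap a b (Equiv.swap a b c) from
        (Equiv.swap_apply_self a b c).symm]
      rw [Finsupp.mapDomain_apply (Equiv.injective _)]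
      exact hval c
    have h1 : coeff α (SP p q) = coeff α (rename (⇑(Equiv.swap a b)) (SP p q)) := by
      conv_rhs => rw [← hmd]
      rw [coeff_rename_mapDomain _ (Equiv.injective _)]
    rw [hswap, hsgn, coeff_C_mul] at h1
    have h2 : coeff α (SP p q) = 0 := by
      have h3 : (2 : ℂ) * coeff α (SP p q) = 0 := by linear_combination h1
      exact (mul_eq_zero.mp h3).resolve_left two_ne_zero
    exact (mem_support_iff.mp hα) h2
  have hlow : ∑ i : Fin n, (i : ℕ) ≤ ∑ i : Fin n, α i := sum_fin_le_of_injective hainj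
  have hsupd : (∑ i : Fin n, α i) ≤ (SP p q).totalDegree := by
    have h2 := le_totalDegree hα
    rwa [Finsupp.sum_fintype _ _ (fun _ => rfl)] at h2
  have hup : (SP p q).totalDegree ≤
      p.totalDegree + q.totalDegree + k * (k - 1) / 2 + (n - k) * ((n - k) - 1) / 2 := by
    rw [SP]
    refine le_trans (totalDegree_finset_sum _ _) ?_
    refine Finset.sup_le fun I _ => ?_
    have hPLT : ∀ s : Finset (Fin n), (PLT s).totalDegree ≤ (pairsLT s).card := by
      intro s
      rw [PLT]
      refine le_trans (totalDegree_finset_prod _ _) ?_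
      calc ∑ x ∈ pairsLT s, (X x.2 - X x.1 : MvPolynomial (Fin n) ℂ).totalDegree
          ≤ ∑ _x ∈ pairsLT s, 1 := by
            refine sum_le_sum fun x _ => ?_
            refine le_trans (totalDegree_sub _ _) ?_
            simp [totalDegree_X]
        _ = (pairsLT s).card := by simp
    have hc1 : 2 * (pairsLT I.1).card = k * (k - 1) := by
      have h3 := two_mul_card_pairsLT I.1
      rwa [I.2] at h3
    have hc2 : 2 * (pairsLT I.1ᶜ).card = (n - k) * ((n - k) - 1) := by
      have h3 := two_mul_card_pairsLT I.1ᶜ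
      rwa [card_comp I.1 I.2] at h3
    have hA : ((rename (embk I.1 I.2)) p).totalDegree ≤ p.totalDegree :=
      totalDegree_rename_le _ _
    have hB : ((rename (embm I.1 I.2)) q).totalDegree ≤ q.totalDegree :=
      totalDegree_rename_le _ _
    have hchain : (C (sgn (permOf I.1 I.2)) * rename (embk I.1 I.2) p *
        rename (embm I.1 I.2) q * PLT I.1 * PLT I.1ᶜ).totalDegree ≤
        ((rename (embk I.1 I.2) p).totalDegree + (rename (embm I.1 I.2) q).totalDegree)
          + (PLT I.1).totalDegree + (PLT I.1ᶜ).totalDegree := by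
      refine le_trans (totalDegree_mul _ _) (add_le_add ?_ le_rfl)
      refine le_trans (totalDegree_mul _ _) (add_le_add ?_ le_rfl)
      refine le_trans (totalDegree_mul _ _) ?_
      refine add_le_add ?_ le_rfl
      refine le_trans (totalDegree_mul _ _) ?_
      simp [totalDegree_C]
    have hp1 := hPLT I.1
    have hp2 := hPLT I.1ᶜ
    omega
  have hgauss : 2 * ∑ i : Fin n, (i : ℕ) = n * (n - 1) := by
    rw [Fin.sum_univ_eq_sum_range (fun i => i) n, mul_comm]
    exact Finset.sum_range_id_mul_two n
  have hprod : n * (n - 1) = k * (k - 1) + (n - k) * ((n - k) - 1) + 2 * (k * (n - k)) := by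
    obtain ⟨k', rfl⟩ : ∃ k', k = k' + 1 := ⟨k - 1, by omega⟩
    obtain ⟨m', hm'⟩ : ∃ m', n - (k' + 1) = m' + 1 := ⟨n - k' - 2, by omega⟩
    have hn : n = k' + m' + 2 := by omega
    rw [hm', hn]
    have e1 : k' + m' + 2 - 1 = k' + m' + 1 := by omega
    rw [e1]
    simp only [Nat.add_sub_cancel]
    ring
  omega

end Main

end

end LagLoc

open LagLoc

/-- Generalized Lagrange interpolation identity (equivariant localization on the
Grassmannian): for `0 < k < n`, symmetric polynomials `p` in `k` variables and `q`
in `n-k` variables with `deg p + deg q < k(n-k)`, the sum over all `k`-element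
subsets `I` of the index set of `p(z_I) q(z_{Ī}) / ∏_{i∈I, j∉I} (z_i - z_j)`
vanishes. -/
theorem lagrange_localization_identity
    (k n : ℕ) (hk : 0 < k) (hkn : k < n)
    (p : MvPolynomial (Fin k) ℂ) (q : MvPolynomial (Fin (n - k)) ℂ)
    (hp : p.IsSymmetric) (hq : q.IsSymmetric)
    (hdeg : p.totalDegree + q.totalDegree < k * (n - k))
    (z : Fin n → ℂ) (hz : Function.Injective z) :
    ∑ I : {I : Finset (Fin n) // I.card = k},
      (MvPolynomial.eval (fun i => z ((I.1.orderIsoOfFin I.2) i)) p *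
        MvPolynomial.eval
          (fun i => z ((I.1ᶜ.orderIsoOfFin
            (by rw [Finset.card_compl, I.2, Fintype.card_fin])) i)) q) /
      (∏ i ∈ I.1, ∏ j ∈ I.1ᶜ, (z i - z j)) = 0 := by
  classical
  have hVd := Vd_ne_zero hz
  have hterm : ∀ I : {I : Finset (Fin n) // I.card = k},
      (MvPolynomial.eval (fun i => z ((I.1.orderIsoOfFin I.2) i)) p *
        MvPolynomial.eval
          (fun i => z ((I.1ᶜ.orderIsoOfFin
            (by rw [Finset.card_compl, I.2, Fintype.card_fin])) i)) q) /
      (∏ i ∈ I.1, ∏ j ∈ I.1ᶜ, (z i - z j)) =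
      (-1 : ℂ) ^ (k * (n - k)) * tval p q I.1 I.2 z / Vd z := by
    intro I
    have hfp : (fun i => z ((I.1.orderIsoOfFin I.2) i)) = z ∘ embk I.1 I.2 := by
      funext i
      simp [embk, Function.comp, Finset.coe_orderIsoOfFin_apply]
    have hfq : (fun i => z ((I.1ᶜ.orderIsoOfFin
        (by rw [Finset.card_compl, I.2, Fintype.card_fin] : I.1ᶜ.card = n - k)) i)) =
        z ∘ embm I.1 I.2 := by
      funext i
      simp [embm, Function.comp, Finset.coe_orderIsoOfFin_apply]
    have hR : dP z (I.1 ×ˢ I.1ᶜ) ≠ 0 := by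
      refine dP_ne_zero hz fun x hx => ?_
      obtain ⟨h1, h2⟩ := mem_product.mp hx
      intro he
      exact (mem_compl.mp h2) (he ▸ h1)
    have hD : (∏ i ∈ I.1, ∏ j ∈ I.1ᶜ, (z i - z j)) =
        (-1 : ℂ) ^ (k * (n - k)) * dP z (I.1 ×ˢ I.1ᶜ) := by
      rw [← prod_product' (f := fun i j => z i - z j)]
      calc ∏ x ∈ I.1 ×ˢ I.1ᶜ, (z x.1 - z x.2)
          = ∏ x ∈ I.1 ×ˢ I.1ᶜ, ((-1) * (z x.2 - z x.1)) :=
            prod_congr rfl (fun x _ => by ring)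
        _ = ((-1 : ℂ) ^ (I.1 ×ˢ I.1ᶜ).card) * ∏ x ∈ I.1 ×ˢ I.1ᶜ, (z x.2 - z x.1) := by
            rw [prod_mul_distrib, prod_const]
        _ = (-1 : ℂ) ^ (k * (n - k)) * dP z (I.1 ×ˢ I.1ᶜ) := by
            rw [card_product, I.2, card_comp I.1 I.2, dP]
    have hDne : (∏ i ∈ I.1, ∏ j ∈ I.1ᶜ, (z i - z j)) ≠ 0 := by
      rw [hD]
      exact mul_ne_zero (pow_ne_zero _ (by norm_num)) hR
    have key := key_eq I.1 I.2 z
    have hsg := sgn_mul_self (permOf I.1 I.2)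
    have hee : ((-1 : ℂ) ^ (k * (n - k))) * ((-1 : ℂ) ^ (k * (n - k))) = 1 := by
      rw [← mul_pow]
      norm_num
    rw [hfp, hfq, div_eq_div_iff hDne hVd, hD, tval]
    set ε := (-1 : ℂ) ^ (k * (n - k))
    set sg := sgn (permOf I.1 I.2)
    set Np := eval (z ∘ embk I.1 I.2) p
    set Nq := eval (z ∘ embm I.1 I.2) q
    linear_combination (-(ε * ε * sg * Np * Nq)) * key - (ε * ε * Np * Nq * Vd z) * hsg -
      (Np * Nq * Vd z) * hee
  calc ∑ I : {I : Finset (Fin n) // I.card = k},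
      (MvPolynomial.eval (fun i => z ((I.1.orderIsoOfFin I.2) i)) p *
        MvPolynomial.eval
          (fun i => z ((I.1ᶜ.orderIsoOfFin
            (by rw [Finset.card_compl, I.2, Fintype.card_fin])) i)) q) /
      (∏ i ∈ I.1, ∏ j ∈ I.1ᶜ, (z i - z j))
      = ∑ I : {I : Finset (Fin n) // I.card = k},
        (-1 : ℂ) ^ (k * (n - k)) * tval p q I.1 I.2 z / Vd z :=
        Finset.sum_congr rfl fun I _ => hterm I
    _ = (-1 : ℂ) ^ (k * (n - k)) *
        (∑ I : {I : Finset (Fin n) // I.card = k}, tval p q I.1 I.2 z) / Vd z := by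
        rw [← sum_div, ← mul_sum]
    _ = 0 := by
        rw [← eval_SP, SP_eq_zero p q hk hkn hp hq hdeg]
        simp
end

section
/- Let λ = (λ_1,...,λ_m) be a partition and define P_z(λ) = ∑_I (∏_{j=1}^m ∏_{a∈I_j} y_a^{(j)}) / ∏_{j<k} ∏_{a∈I_j, b∈I_k}(z_a − z_b), summed over ordered set partitions I = (I_1,...,I_m) of {1,...,|λ|} with |I_j| = λ_j. Then for any k < l with λ_k ≥ λ_l, the differential operator e_{k,l} = ∑_{a=1}^{|λ|} y_a^{(k)} ∂/∂y_a^{(l)} annihilates P_z(λ): e_{k,l} P_z(λ) = 0. -/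
open MvPolynomial Finset

section EklHelpers
open Polynomial Function

lemma basis_coeff {ι : Type*} [DecidableEq ι] (s : Finset ι) (v : ι → ℂ)
    (hv : Set.InjOn v s) {i : ι} (hi : i ∈ s) :
    (Lagrange.basis s v i).coeff (s.card - 1) = Lagrange.nodalWeight s v i := by
  rw [Lagrange.basis_eq_prod_sub_inv_mul_nodal_div hi, ← Lagrange.nodal_erase_eq_nodal_div hi, Polynomial.coeff_C_mul]
  have h1 : (Lagrange.nodal (s.erase i) v).natDegree = s.card - 1 := by
    rw [Lagrange.natDegree_nodal, Finset.card_erase_of_mem hi]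
  rw [← h1, Polynomial.coeff_natDegree, Lagrange.nodal_monic.leadingCoeff, mul_one]

lemma lagrange_sum_zero {ι : Type*} [DecidableEq ι] (s : Finset ι) (v : ι → ℂ)
    (hv : Set.InjOn v s) (Q : Polynomial ℂ) (hdeg : Q.degree < ((s.card - 1 : ℕ) : WithBot ℕ)) :
    ∑ i ∈ s, Q.eval (v i) * Lagrange.nodalWeight s v i = 0 := by
  rcases s.eq_empty_or_nonempty with rfl | hs
  · simp
  have hdeg' : Q.degree < s.card := lt_of_lt_of_le hdeg (by exact_mod_cast Nat.sub_le _ _)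
  have hQ : Q = Lagrange.interpolate s v (fun i => Q.eval (v i)) :=
    Lagrange.eq_interpolate hv hdeg'
  have h0 : Q.coeff (s.card - 1) = 0 := Polynomial.coeff_eq_zero_of_degree_lt hdeg
  rw [hQ, Lagrange.interpolate_apply, Polynomial.finset_sum_coeff] at h0
  rw [← h0]
  refine Finset.sum_congr rfl fun i hi => ?_
  rw [Polynomial.coeff_C_mul, basis_coeff s v hv hi]

section
variable {m n : ℕ}

lemma pointwise_prod_id (k l j : Fin m) (hkl : k < l) (x y : ℂ) :
    (if l < j then x - y else 1) * ((if j < l then y - x else 1) *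
      (if k < j ∧ j ≤ l then x - y else 1))
    = (if k < j then x - y else 1) * ((if j < k then y - x else 1) *
      (if k ≤ j ∧ j < l then y - x else 1)) := by
  simp only [Fin.lt_def, Fin.le_def] at hkl ⊢
  split_ifs <;> first | ring1 | (exfalso; omega)

end

section
variable {m n : ℕ}

private def Dd (z : Fin n → ℂ) (f : Fin n → Fin m) : ℂ :=
  ∏ p, ∏ q ∈ Finset.univ.filter (fun q => f p < f q), (z p - z q)

private lemma Dd_eq (z : Fin n → ℂ) (f : Fin n → Fin m) :
    Dd z f = ∏ p, ∏ q, (if f p < f q then z p - z q else 1) :=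
  Finset.prod_congr rfl fun p _ => Finset.prod_filter _ _

private lemma Dd_split (z : Fin n → ℂ) (a : Fin n) (f : Fin n → Fin m) :
    Dd z f = (∏ q ∈ Finset.univ.erase a,
        ((if f a < f q then z a - z q else 1) * (if f q < f a then z q - z a else 1))) *
      ∏ p ∈ Finset.univ.erase a, ∏ q ∈ Finset.univ.erase a,
        (if f p < f q then z p - z q else 1) := by
  classical
  set e : Fin n → Fin n → ℂ := fun p q => if f p < f q then z p - z q else 1 with he
  have h1 : Dd z f = (∏ q, e a q) * ∏ p ∈ Finset.univ.erase a, ∏ q, e p q := by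
    rw [Dd_eq]; exact (Finset.mul_prod_erase Finset.univ _ (Finset.mem_univ a)).symm
  have h2 : ∏ q, e a q = ∏ q ∈ Finset.univ.erase a, e a q := by
    rw [← Finset.mul_prod_erase Finset.univ _ (Finset.mem_univ a)]
    simp [he, lt_irrefl]
  have h3 : ∀ p, ∏ q, e p q = e p a * ∏ q ∈ Finset.univ.erase a, e p q := fun p =>
    (Finset.mul_prod_erase Finset.univ _ (Finset.mem_univ a)).symm
  rw [h1, h2, Finset.prod_congr rfl (fun p _ => h3 p), Finset.prod_mul_distrib,
    Finset.prod_mul_distrib]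
  ring

private lemma claim1 (z : Fin n → ℂ) (k l : Fin m) (hkl : k < l)
    (g : Fin n → Fin m) (a : Fin n) (ha : g a = k) :
    Dd z (Function.update g a l) *
        ∏ q ∈ Finset.univ.filter (fun q => k < g q ∧ g q ≤ l), (z a - z q)
      = Dd z g *
        ∏ p ∈ (Finset.univ.filter (fun p => k ≤ g p ∧ g p < l)).erase a, (z p - z a) := by
  classical
  rw [Dd_split z a (Function.update g a l), Dd_split z a g]
  have hT : ∀ p ∈ Finset.univ.erase a, ∀ q ∈ Finset.univ.erase a,
      (if Function.update g a l p < Function.update g a l q then z p - z q else 1)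
        = (if g p < g q then z p - z q else 1) := by
    intro p hp q hq
    rw [Function.update_of_ne (Finset.mem_erase.mp hp).1, Function.update_of_ne (Finset.mem_erase.mp hq).1]
  have hTeq : (∏ p ∈ Finset.univ.erase a, ∏ q ∈ Finset.univ.erase a,
      (if Function.update g a l p < Function.update g a l q then z p - z q else 1))
      = ∏ p ∈ Finset.univ.erase a, ∏ q ∈ Finset.univ.erase a,
      (if g p < g q then z p - z q else 1) :=
    Finset.prod_congr rfl fun p hp => Finset.prod_congr rfl fun q hq => hT p hp q hq
  rw [hTeq]
  have hB : (Finset.univ.filter (fun q => k < g q ∧ g q ≤ l))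
      = (Finset.univ.erase a).filter (fun q => k < g q ∧ g q ≤ l) := by
    rw [Finset.filter_erase, Finset.erase_eq_of_notMem]
    simp only [Finset.mem_filter, Finset.mem_univ, true_and, ha]
    exact fun h => lt_irrefl _ h.1
  have hA : (Finset.univ.filter (fun p => k ≤ g p ∧ g p < l)).erase a
      = (Finset.univ.erase a).filter (fun p => k ≤ g p ∧ g p < l) :=
    by rw [Finset.filter_erase]
  rw [hB, hA, Finset.prod_filter, Finset.prod_filter]
  have H : (∏ q ∈ Finset.univ.erase a,
      ((if Function.update g a l a < Function.update g a l q then z a - z q else 1) *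
        (if Function.update g a l q < Function.update g a l a then z q - z a else 1))) *
      (∏ q ∈ Finset.univ.erase a, (if k < g q ∧ g q ≤ l then z a - z q else 1))
      = (∏ q ∈ Finset.univ.erase a,
        ((if g a < g q then z a - z q else 1) * (if g q < g a then z q - z a else 1))) *
      (∏ q ∈ Finset.univ.erase a, (if k ≤ g q ∧ g q < l then z q - z a else 1)) := by
    rw [← Finset.prod_mul_distrib, ← Finset.prod_mul_distrib]
    refine Finset.prod_congr rfl fun q hq => ?_
    have hqa : q ≠ a := (Finset.mem_erase.mp hq).1
    rw [Function.update_of_ne hqa, Function.update_self, ha]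
    rw [mul_assoc, mul_assoc]
    exact pointwise_prod_id k l (g q) hkl (z a) (z q)
  linear_combination (∏ p ∈ Finset.univ.erase a, ∏ q ∈ Finset.univ.erase a,
      (if g p < g q then z p - z q else 1)) * H

end

section
variable {m n : ℕ}

private lemma kernel (z : Fin n → ℂ) (hz : Function.Injective z) (k l : Fin m) (hkl : k < l)
    (g : Fin n → Fin m)
    (hcard : (Finset.univ.filter fun b : Fin n => g b = l).card + 1
      < (Finset.univ.filter fun b : Fin n => g b = k).card) :
    ∑ a ∈ Finset.univ.filter (fun a : Fin n => g a = k),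
      (∏ p, ∏ q ∈ Finset.univ.filter
        (fun q => Function.update g a l p < Function.update g a l q), (z p - z q))⁻¹ = 0 := by
  classical
  set K := Finset.univ.filter (fun a : Fin n => g a = k) with hK
  set L := Finset.univ.filter (fun a : Fin n => g a = l) with hL
  set M := Finset.univ.filter (fun q : Fin n => k < g q ∧ g q < l) with hM
  show ∑ a ∈ K, (Dd z (Function.update g a l))⁻¹ = 0
  have key : ∀ a ∈ K, (Dd z (Function.update g a l))⁻¹
      = ((Dd z g)⁻¹ * ((-1) ^ M.card * (-1) ^ (K.card - 1)))
        * (Polynomial.eval (z a) (Lagrange.nodal L z) * Lagrange.nodalWeight K z a) := by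
    intro a haK
    have ha : g a = k := (Finset.mem_filter.mp haK).2
    set B := ∏ q ∈ Finset.univ.filter (fun q => k < g q ∧ g q ≤ l), (z a - z q) with hB
    set A := ∏ p ∈ (Finset.univ.filter (fun p => k ≤ g p ∧ g p < l)).erase a, (z p - z a) with hA
    have hBne : B ≠ 0 := by
      rw [hB]
      refine Finset.prod_ne_zero_iff.mpr fun q hq => ?_
      have hq' := (Finset.mem_filter.mp hq).2
      have hqa : q ≠ a := fun h => by rw [h, ha] at hq'; exact lt_irrefl _ hq'.1
      exact sub_ne_zero.mpr (fun h => hqa (hz h).symm)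
    have hD : Dd z (Function.update g a l) = Dd z g * A * B⁻¹ := by
      rw [eq_mul_inv_iff_mul_eq₀ hBne]; exact claim1 z k l hkl g a ha
    rw [hD, mul_inv, mul_inv, inv_inv]
    have hdisjML : Disjoint M L := by
      rw [Finset.disjoint_left]
      intro q hqM hqL
      have h1 := (Finset.mem_filter.mp hqM).2
      have h2 := (Finset.mem_filter.mp hqL).2
      rw [h2] at h1; exact lt_irrefl _ h1.2
    have hsetB : Finset.univ.filter (fun q => k < g q ∧ g q ≤ l) = M ∪ L := by
      ext q
      simp only [hM, hL, Finset.mem_union, Finset.mem_filter, Finset.mem_univ, true_and,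
        Fin.lt_def, Fin.le_def, Fin.ext_iff]
      omega
    have hBsplit : B = (∏ q ∈ M, (z a - z q)) * ∏ q ∈ L, (z a - z q) := by
      rw [hB, hsetB, Finset.prod_union hdisjML]
    have hdisjKM : Disjoint (K.erase a) M := by
      rw [Finset.disjoint_left]
      intro q hqK hqM
      have h1 := (Finset.mem_filter.mp (Finset.mem_of_mem_erase hqK)).2
      have h2 := (Finset.mem_filter.mp hqM).2
      rw [h1] at h2; exact lt_irrefl _ h2.1
    have hsetA : (Finset.univ.filter (fun p => k ≤ g p ∧ g p < l)).erase a
        = (K.erase a) ∪ M := by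
      ext p
      by_cases hpa : p = a
      · subst hpa
        simp [hM, ha, lt_irrefl]
      · simp only [hK, hM, Finset.mem_erase, Finset.mem_union, Finset.mem_filter,
          Finset.mem_univ, true_and, hpa, ne_eq, not_false_eq_true,
          Fin.lt_def, Fin.le_def, Fin.ext_iff]
        omega
    have hAsplit : A = (∏ p ∈ K.erase a, (z p - z a)) * ∏ p ∈ M, (z p - z a) := by
      rw [hA, hsetA, Finset.prod_union hdisjKM]
    have h1 : (∏ p ∈ K.erase a, (z p - z a))⁻¹
        = (-1) ^ (K.card - 1) * Lagrange.nodalWeight K z a := by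
      rw [← Finset.prod_inv_distrib]
      calc ∏ p ∈ K.erase a, (z p - z a)⁻¹
          = ∏ p ∈ K.erase a, ((-1) * (z a - z p)⁻¹) := by
            refine Finset.prod_congr rfl fun p hp => ?_
            rw [show z p - z a = -(z a - z p) by ring, inv_neg]; ring
        _ = (-1) ^ (K.erase a).card * ∏ p ∈ K.erase a, (z a - z p)⁻¹ := by
            rw [Finset.prod_mul_distrib, Finset.prod_const]
        _ = (-1) ^ (K.card - 1) * Lagrange.nodalWeight K z a := by
            rw [Finset.card_erase_of_mem haK, Lagrange.nodalWeight]
    have h2 : (∏ p ∈ M, (z p - z a))⁻¹ * (∏ q ∈ M, (z a - z q)) = (-1) ^ M.card := by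
      rw [← Finset.prod_inv_distrib, ← Finset.prod_mul_distrib]
      rw [show ((-1 : ℂ) ^ M.card) = ∏ _q ∈ M, (-1 : ℂ) from (Finset.prod_const _).symm]
      refine Finset.prod_congr rfl fun p hp => ?_
      have h2' := (Finset.mem_filter.mp hp).2
      have hpa : p ≠ a := fun h => by rw [h, ha] at h2'; exact lt_irrefl _ h2'.1
      have hne : z p - z a ≠ 0 := sub_ne_zero.mpr (fun h => hpa (hz h))
      rw [show z a - z p = -(z p - z a) by ring]
      rw [mul_neg, inv_mul_cancel₀ hne]
    have h3 : ∏ q ∈ L, (z a - z q) = Polynomial.eval (z a) (Lagrange.nodal L z) := by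
      rw [Lagrange.eval_nodal]
    rw [hAsplit, hBsplit, mul_inv, h1, h3]
    linear_combination ((Dd z g)⁻¹ * ((-1 : ℂ) ^ (K.card - 1) * Lagrange.nodalWeight K z a)
      * Polynomial.eval (z a) (Lagrange.nodal L z)) * h2
  rw [Finset.sum_congr rfl key, ← Finset.mul_sum]
  have hdeg : (Lagrange.nodal L z).degree < ((K.card - 1 : ℕ) : WithBot ℕ) := by
    rw [Lagrange.degree_nodal]
    exact_mod_cast (by omega : L.card < K.card - 1)
  rw [lagrange_sum_zero K z ((Set.injOn_of_injective hz : Set.InjOn z ↑K)) (Lagrange.nodal L z) hdeg, mul_zero]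

end

section
open MvPolynomial
variable {m n : ℕ}

private noncomputable def Sf (f : Fin n → Fin m) : (Fin m × Fin n) →₀ ℕ :=
  ∑ a, Finsupp.single (f a, a) 1

private lemma Sf_split (f : Fin n → Fin m) (a : Fin n) :
    Sf f = Finsupp.single (f a, a) 1 +
      ∑ b ∈ Finset.univ.erase a, Finsupp.single (f b, b) 1 :=
  (Finset.add_sum_erase Finset.univ _ (Finset.mem_univ a)).symm

private lemma Sf_update (f : Fin n → Fin m) (a : Fin n) (j : Fin m) :
    Sf (Function.update f a j) = Finsupp.single (j, a) 1 +
      ∑ b ∈ Finset.univ.erase a, Finsupp.single (f b, b) 1 := by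
  rw [Sf_split (Function.update f a j) a, Function.update_self]
  congr 1
  exact Finset.sum_congr rfl fun b hb => by
    rw [Function.update_of_ne (Finset.mem_erase.mp hb).1]

private lemma Sf_apply (f : Fin n → Fin m) (j : Fin m) (a : Fin n) :
    Sf f (j, a) = if f a = j then 1 else 0 := by
  classical
  rw [Sf, Finset.sum_apply']
  rw [Finset.sum_eq_single a (fun b _ hb => by
    rw [Finsupp.single_apply, if_neg]; exact fun h => hb (congrArg Prod.snd h))
    (fun h => absurd (Finset.mem_univ a) h)]
  rw [Finsupp.single_apply]
  by_cases h : f a = j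
  · rw [if_pos h, if_pos (by rw [h])]
  · rw [if_neg h, if_neg (fun hh => h (congrArg Prod.fst hh))]

private lemma prod_X_eq (f : Fin n → Fin m) :
    (∏ a, (X (f a, a) : MvPolynomial (Fin m × Fin n) ℂ)) = monomial (Sf f) 1 := by
  rw [Sf, monomial_sum_one]
  rfl

private lemma deriv_step (k l : Fin m) (f : Fin n → Fin m) (a : Fin n) (c : ℂ) :
    (X (k, a) : MvPolynomial (Fin m × Fin n) ℂ) * pderiv (l, a) (monomial (Sf f) c)
      = if f a = l then monomial (Sf (Function.update f a k)) c else 0 := by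
  classical
  rw [pderiv_monomial, Sf_apply]
  by_cases h : f a = l
  · rw [if_pos h, if_pos h, MvPolynomial.X, monomial_mul, one_mul, Nat.cast_one, mul_one]
    congr 1
    rw [Sf_split f a, h, add_tsub_cancel_left, Sf_update]
  · rw [if_neg h, if_neg h, Nat.cast_zero, mul_zero, monomial_zero, mul_zero]

private lemma fiber_update_self (f : Fin n → Fin m) (a : Fin n) (v : Fin m) (hva : f a ≠ v) :
    Finset.univ.filter (fun b => Function.update f a v b = v)
      = insert a (Finset.univ.filter (fun b => f b = v)) := by
  ext b
  by_cases hba : b = a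
  · subst hba; simp [Function.update_self]
  · simp [Function.update_of_ne hba, hba]

private lemma fiber_update_ne (f : Fin n → Fin m) (a : Fin n) (v j : Fin m) (hj : j ≠ v) :
    Finset.univ.filter (fun b => Function.update f a v b = j)
      = (Finset.univ.filter (fun b => f b = j)).erase a := by
  ext b
  by_cases hba : b = a
  · subst hba; simp [Function.update_self, hj.symm]
  · simp [Function.update_of_ne hba, hba]

end

section
open MvPolynomial
variable {m n : ℕ}

private lemma main_aux (lam : Fin m → ℕ) (z : Fin n → ℂ) (hz : Function.Injective z)
    (k l : Fin m) (hkl : k < l) (hlamkl : lam l ≤ lam k) :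
    ∑ a : Fin n, (X (k, a) : MvPolynomial (Fin m × Fin n) ℂ) * pderiv (l, a)
      (∑ f ∈ Finset.univ.filter
        (fun f : Fin n → Fin m => ∀ j, (Finset.univ.filter fun a => f a = j).card = lam j),
      MvPolynomial.C ((∏ a : Fin n, ∏ b ∈ Finset.univ.filter (fun b => f a < f b), (z a - z b))⁻¹) *
        ∏ a : Fin n, X (f a, a)) = 0 := by
  classical
  set F := Finset.univ.filter
    (fun f : Fin n → Fin m => ∀ j, (Finset.univ.filter fun a => f a = j).card = lam j) with hF
  have hkl' : k ≠ l := ne_of_lt hkl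
  have hlk : l ≠ k := Ne.symm (ne_of_lt hkl)
  have step1 : ∑ a : Fin n, (X (k, a) : MvPolynomial (Fin m × Fin n) ℂ) * pderiv (l, a)
      (∑ f ∈ F, MvPolynomial.C ((∏ a : Fin n, ∏ b ∈ Finset.univ.filter (fun b => f a < f b),
        (z a - z b))⁻¹) * ∏ a : Fin n, X (f a, a))
      = ∑ f ∈ F, ∑ a : Fin n,
        (if f a = l then monomial (Sf (Function.update f a k)) ((Dd z f)⁻¹) else 0) := by
    simp only [map_sum, Finset.mul_sum]
    rw [Finset.sum_comm]
    refine Finset.sum_congr rfl fun f _ => Finset.sum_congr rfl fun a _ => ?_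
    rw [prod_X_eq, MvPolynomial.C_mul_monomial, mul_one, deriv_step]
    rfl
  rw [step1]
  rcases Nat.eq_zero_or_pos (lam l) with h0 | hpos
  · refine Finset.sum_eq_zero fun f hf => Finset.sum_eq_zero fun a _ => ?_
    have hcard := (Finset.mem_filter.mp hf).2 l
    rw [h0, Finset.card_eq_zero] at hcard
    rw [if_neg]
    intro h
    have hmem : a ∈ Finset.univ.filter (fun b => f b = l) :=
      Finset.mem_filter.mpr ⟨Finset.mem_univ a, h⟩
    rw [hcard] at hmem
    exact absurd hmem (Finset.notMem_empty a)
  · set lam' : Fin m → ℕ := fun j => if j = k then lam k + 1 else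
      if j = l then lam l - 1 else lam j with hlam'
    set F' := Finset.univ.filter
      (fun g : Fin n → Fin m => ∀ j, (Finset.univ.filter fun a => g a = j).card = lam' j) with hF'
    have fwd : ∀ f ∈ F, ∀ a : Fin n, f a = l → Function.update f a k ∈ F' := by
      intro f hf a hfa
      have hfj := (Finset.mem_filter.mp hf).2
      rw [hF', Finset.mem_filter]
      refine ⟨Finset.mem_univ _, fun j => ?_⟩
      by_cases hjk : j = k
      · subst hjk
        rw [fiber_update_self f a j (by rw [hfa]; exact hkl'.symm),
          Finset.card_insert_of_notMem (fun hmem => by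
            have := (Finset.mem_filter.mp hmem).2
            rw [hfa] at this; exact hkl' this.symm),
          hfj j]
        simp [hlam']
      · rw [fiber_update_ne f a k j hjk]
        by_cases hjl : j = l
        · subst hjl
          rw [Finset.card_erase_of_mem (Finset.mem_filter.mpr ⟨Finset.mem_univ a, hfa⟩),
            hfj j]
          simp [hlam', hjk]
        · rw [Finset.erase_eq_of_notMem (fun hmem => by
            have := (Finset.mem_filter.mp hmem).2
            rw [hfa] at this; exact hjl this.symm), hfj j, hlam']
          simp [hjk, hjl]
    have bwd : ∀ g ∈ F', ∀ a : Fin n, g a = k → Function.update g a l ∈ F := by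
      intro g hg a hga
      have hgj := (Finset.mem_filter.mp hg).2
      rw [hF, Finset.mem_filter]
      refine ⟨Finset.mem_univ _, fun j => ?_⟩
      by_cases hjl : j = l
      · rw [hjl, fiber_update_self g a l (by rw [hga]; exact hkl'),
          Finset.card_insert_of_notMem (fun hmem => by
            have := (Finset.mem_filter.mp hmem).2
            rw [hga] at this; exact hkl' this),
          hgj l]
        have e : lam' l = lam l - 1 := by simp [hlam', hlk]
        rw [e]; omega
      · rw [fiber_update_ne g a l j hjl]
        by_cases hjk : j = k
        · rw [hjk, Finset.card_erase_of_mem (Finset.mem_filter.mpr ⟨Finset.mem_univ a, hga⟩),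
            hgj k]
          have e : lam' k = lam k + 1 := by simp [hlam']
          rw [e]
          omega
        · rw [Finset.erase_eq_of_notMem (fun hmem => by
            have := (Finset.mem_filter.mp hmem).2
            rw [hga] at this; exact hjk this.symm), hgj j]
          simp [hlam', hjk, hjl]
    calc ∑ f ∈ F, ∑ a : Fin n,
          (if f a = l then monomial (Sf (Function.update f a k)) ((Dd z f)⁻¹) else 0)
        = ∑ p ∈ F ×ˢ Finset.univ, (if p.1 p.2 = l then
            monomial (Sf (Function.update p.1 p.2 k)) ((Dd z p.1)⁻¹) else 0) :=
          (Finset.sum_product' _ _ _).symm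
      _ = ∑ p ∈ (F ×ˢ Finset.univ).filter (fun p => p.1 p.2 = l),
            monomial (Sf (Function.update p.1 p.2 k)) ((Dd z p.1)⁻¹) :=
          (Finset.sum_filter _ _).symm
      _ = ∑ q ∈ (F' ×ˢ Finset.univ).filter (fun q => q.1 q.2 = k),
            monomial (Sf q.1) ((Dd z (Function.update q.1 q.2 l))⁻¹) := by
          refine Finset.sum_nbij' (fun p => (Function.update p.1 p.2 k, p.2))
            (fun q => (Function.update q.1 q.2 l, q.2)) ?_ ?_ ?_ ?_ ?_
          · intro p hp
            obtain ⟨hp1, hp2⟩ := Finset.mem_filter.mp hp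
            obtain ⟨hpF, -⟩ := Finset.mem_product.mp hp1
            exact Finset.mem_filter.mpr ⟨Finset.mem_product.mpr
              ⟨fwd p.1 hpF p.2 hp2, Finset.mem_univ _⟩, Function.update_self _ _ _⟩
          · intro q hq
            obtain ⟨hq1, hq2⟩ := Finset.mem_filter.mp hq
            obtain ⟨hqF, -⟩ := Finset.mem_product.mp hq1
            exact Finset.mem_filter.mpr ⟨Finset.mem_product.mpr
              ⟨bwd q.1 hqF q.2 hq2, Finset.mem_univ _⟩, Function.update_self _ _ _⟩
          · intro p hp
            have hp2 := (Finset.mem_filter.mp hp).2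
            ext : 1
            · simp only [Function.update_idem]
              rw [← hp2]
              exact Function.update_eq_self _ _
            · rfl
          · intro q hq
            have hq2 := (Finset.mem_filter.mp hq).2
            ext : 1
            · simp only [Function.update_idem]
              rw [← hq2]
              exact Function.update_eq_self _ _
            · rfl
          · intro p hp
            have hp2 := (Finset.mem_filter.mp hp).2
            congr 2
            rw [Function.update_idem, ← hp2, Function.update_eq_self]
      _ = ∑ q ∈ F' ×ˢ Finset.univ, (if q.1 q.2 = k then
            monomial (Sf q.1) ((Dd z (Function.update q.1 q.2 l))⁻¹) else 0) :=
          Finset.sum_filter _ _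
      _ = ∑ g ∈ F', ∑ a : Fin n, (if g a = k then
            monomial (Sf g) ((Dd z (Function.update g a l))⁻¹) else 0) :=
          Finset.sum_product' F' Finset.univ (fun g a => if g a = k then
            monomial (Sf g) ((Dd z (Function.update g a l))⁻¹) else 0)
      _ = 0 := by
          refine Finset.sum_eq_zero fun g hg => ?_
          have hgj := (Finset.mem_filter.mp hg).2
          have hcardg : (Finset.univ.filter fun b : Fin n => g b = l).card + 1
              < (Finset.univ.filter fun b : Fin n => g b = k).card := by
            have e1 : lam' l = lam l - 1 := by simp [hlam', hlk]
            have e2 : lam' k = lam k + 1 := by simp [hlam']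
            rw [hgj l, hgj k, e1, e2]
            omega
          have hker := kernel z hz k l hkl g hcardg
          calc ∑ a : Fin n, (if g a = k then
                monomial (Sf g) ((Dd z (Function.update g a l))⁻¹) else 0)
              = ∑ a ∈ Finset.univ.filter (fun a : Fin n => g a = k),
                monomial (Sf g) ((Dd z (Function.update g a l))⁻¹) :=
                (Finset.sum_filter _ _).symm
            _ = monomial (Sf g) (∑ a ∈ Finset.univ.filter (fun a : Fin n => g a = k),
                (Dd z (Function.update g a l))⁻¹) := (map_sum _ _ _).symm
            _ = monomial (Sf g) 0 := by
                rw [show (∑ a ∈ Finset.univ.filter (fun a : Fin n => g a = k),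
                  (Dd z (Function.update g a l))⁻¹) = 0 from hker]
            _ = 0 := map_zero _

end

end EklHelpers

/-- Let `λ : Fin m → ℕ` be a partition (antitone) with `n = ∑ λ j`, and let
`z : Fin n → ℂ` be distinct. Write `X (j, a)` for the variable `y_a^{(j)}`.
The function
`P_z(λ) = ∑_I (∏_j ∏_{a∈I_j} y_a^{(j)}) / ∏_{j<k} ∏_{a∈I_j, b∈I_k} (z_a - z_b)`,
summed over ordered set partitions `I` of the index set with `|I_j| = λ j`
(encoded as functions `f` with fibers of cardinality `λ j`), is annihilated by
`e_{k,l} = ∑_a y_a^{(k)} ∂/∂y_a^{(l)}` whenever `k < l` and `λ k ≥ λ l`. -/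
theorem ekl_annihilates_P
    (m n : ℕ) (lam : Fin m → ℕ) (hlam : Antitone lam) (hn : n = ∑ j, lam j)
    (z : Fin n → ℂ) (hz : Function.Injective z)
    (k l : Fin m) (hkl : k < l) (hlamkl : lam l ≤ lam k)
    (P : MvPolynomial (Fin m × Fin n) ℂ)
    (hP : P = ∑ f ∈ Finset.univ.filter
        (fun f : Fin n → Fin m => ∀ j, (Finset.univ.filter fun a => f a = j).card = lam j),
      C ((∏ a : Fin n, ∏ b ∈ Finset.univ.filter (fun b => f a < f b), (z a - z b))⁻¹) *
        ∏ a : Fin n, X (f a, a)) :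
    ∑ a : Fin n, X (k, a) * pderiv (l, a) P = 0 := by
  subst hP
  exact main_aux lam z hz k l hkl hlamkl
end

section
/- With P_z(λ) as defined (sum over ordered set partitions I of {1,...,|λ|} with block sizes λ_j of ∏_j ∏_{a∈I_j} y_a^{(j)} divided by the generalized resultant of the z-variables), the operator e^z_{k,l} = ∑_a z_a y_a^{(k)} ∂/∂y_a^{(l)} satisfies e^z_{k,l} P_z(λ) = 0 whenever λ_k > λ_l. -/
/-!
Each monomial `∏ₐ y_a^{(f a)}` of `P_z(λ)` is indexed by a block assignment `f`, and `e^z_{k,l}`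
moves one index `a` from block `l` to block `k`. Regrouping by the resulting assignment `g`, the
coefficient of `∏ₐ y_a^{(g a)}` is `∑_{a ∈ S} z_a / R(g[a ↦ l])` with `S = g⁻¹(k)`, `T = g⁻¹(l)`.
Only the factors of the resultant involving `a` change when `a` moves, so up to a sign and a
factor independent of `a`, `z_a / R(g[a ↦ l])` is `p(z_a) / ∏_{b ∈ S ∖ a} (z_a - z_b)` with
`p(x) = x ∏_{b ∈ T} (x - z_b)`. By Lagrange interpolation this sum over `S` is the coefficient of
`x^{|S|-1}` in `p`, which vanishes since `deg p = λ_l < λ_k = |S| - 1`.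
-/

open MvPolynomial Finset Function

theorem card_filter_update_add {ι β : Type*} [Fintype ι] [DecidableEq ι] (p : β → Prop)
    [DecidablePred p] (f : ι → β) (a : ι) (v : β) :
    #{b | p (update f a v b)} + (if p (f a) then 1 else 0)
      = #{b | p (f b)} + (if p v then 1 else 0) := by
  simp only [card_filter]
  rw [← add_sum_erase univ _ (mem_univ a),
    ← add_sum_erase univ (fun b => if p (f b) then 1 else 0) (mem_univ a), update_self,
    sum_congr rfl fun b hb => by rw [update_of_ne (ne_of_mem_erase hb)]]
  ring

theorem sum_sum_filter_update_eq {ι β M : Type*} [Fintype ι] [DecidableEq ι] [Fintype β]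
    [DecidableEq β] [AddCommMonoid M] (F : Finset (ι → β)) (k l : β)
    (φ : (ι → β) → (ι → β) → ι → M) :
    ∑ f ∈ F, ∑ a with f a = l, φ f (update f a k) a
      = ∑ g, ∑ a with g a = k ∧ update g a l ∈ F, φ (update g a l) g a := by
  rw [sum_sigma', sum_sigma']
  refine sum_bij' (fun x _ => ⟨update x.1 x.2 k, x.2⟩) (fun y _ => ⟨update y.1 y.2 l, y.2⟩)
    ?_ ?_ ?_ ?_ ?_
  · rintro ⟨f, a⟩ h
    simp only [mem_sigma, mem_filter, mem_univ, true_and] at h ⊢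
    rw [update_idem, ← h.2, update_eq_self]
    exact ⟨update_self .., h.1⟩
  · rintro ⟨g, a⟩ h
    simp only [mem_sigma, mem_filter, mem_univ, true_and] at h ⊢
    exact ⟨h.2, update_self ..⟩
  · rintro ⟨f, a⟩ h
    simp only [mem_sigma, mem_filter] at h
    simp [update_idem, ← h.2.2]
  · rintro ⟨g, a⟩ h
    simp only [mem_sigma, mem_filter] at h
    simp [update_idem, ← h.2.2.1]
  · rintro ⟨f, a⟩ h
    simp only [mem_sigma, mem_filter] at h
    simp [update_idem, ← h.2.2]

theorem X_mul_pderiv_prod_X {ι β R : Type*} [Fintype ι] [DecidableEq ι] [DecidableEq β]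
    [CommSemiring R] (f : ι → β) (a : ι) (k l : β) :
    X (k, a) * pderiv (l, a) (∏ b, X (f b, b) : MvPolynomial (β × ι) R)
      = if f a = l then ∏ b, X (update f a k b, b) else 0 := by
  have hrest : pderiv (l, a) (∏ b ∈ univ.erase a, X (f b, b) : MvPolynomial (β × ι) R) = 0 :=
    prod_induction _ (fun p => pderiv (l, a) p = 0)
      (fun p q hp hq => by rw [Derivation.leibniz, hp, hq, smul_zero, smul_zero, add_zero])
      (Derivation.map_one_eq_zero _)
      fun b hb => pderiv_X_of_ne fun h => ne_of_mem_erase hb (congrArg Prod.snd h)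
  have hupdate : ∏ b ∈ univ.erase a, (X (update f a k b, b) : MvPolynomial (β × ι) R)
      = ∏ b ∈ univ.erase a, X (f b, b) :=
    prod_congr rfl fun b hb => by rw [update_of_ne (ne_of_mem_erase hb)]
  rw [← mul_prod_erase univ _ (mem_univ a), Derivation.leibniz, hrest, smul_zero, zero_add,
    pderiv_X, smul_eq_mul, ← mul_prod_erase univ (fun b => X (update f a k b, b)) (mem_univ a),
    update_self, hupdate]
  by_cases h : f a = l <;> simp [h]

section Resultant

variable {ι β K : Type*} [Fintype ι] [LinearOrder β]

/-- The generalized resultant `R(z_{I_1} | … | z_{I_m})` of the blocks `I_j = f⁻¹(j)`. -/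
def genResultant [CommRing K] (z : ι → K) (f : ι → β) : K :=
  ∏ a, ∏ b with f a < f b, (z a - z b)

theorem genResultant_ne_zero [CommRing K] [IsDomain K] {z : ι → K} (hz : Injective z)
    (f : ι → β) : genResultant z f ≠ 0 :=
  prod_ne_zero_iff.2 fun a _ => prod_ne_zero_iff.2 fun b hb =>
    sub_ne_zero.2 <| hz.ne <| by rintro rfl; exact lt_irrefl _ (mem_filter.1 hb).2

theorem genResultant_mul_prod_block_erase [DecidableEq ι] [CommRing K] (z : ι → K) (f : ι → β)
    (a : ι) :
    genResultant z f * ∏ b ∈ ({b | f b = f a} : Finset ι).erase a, (z a - z b)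
      = (∏ b ∈ univ.erase a, ∏ c ∈ univ.erase a, if f b < f c then z b - z c else 1)
        * ((-1) ^ #{b | f b < f a} * ∏ b ∈ univ.erase a, (z a - z b)) := by
  set h : ι → ι → K := fun b c => if f b < f c then z b - z c else 1
  have hrow : ∀ b, ∏ c, h b c = (∏ c ∈ univ.erase a, h b c) * h b a := fun b =>
    (prod_erase_mul _ _ (mem_univ a)).symm
  have hsplit : genResultant z f
      = (∏ b ∈ univ.erase a, ∏ c ∈ univ.erase a, h b c) * ∏ b ∈ univ.erase a, (h b a * h a b) := by
    have hfull : genResultant z f = ∏ b, ∏ c, h b c := by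
      simp only [genResultant, prod_filter, h]
    have hdiag : h a a = 1 := if_neg (lt_irrefl _)
    rw [hfull, ← prod_erase_mul _ _ (mem_univ a), prod_congr rfl fun b _ => hrow b, hrow a, hdiag,
      prod_mul_distrib, prod_mul_distrib]
    ring
  have hsign : ∏ b ∈ univ.erase a, (if f b < f a then (-1 : K) else 1)
      = (-1) ^ #{b | f b < f a} := by
    rw [prod_erase _ (by simp), prod_ite, prod_const, prod_const_one, mul_one]
  rw [hsplit, mul_assoc, ← hsign, ← prod_mul_distrib, ← filter_erase, prod_filter,
    ← prod_mul_distrib]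
  congr 1
  refine prod_congr rfl fun b _ => ?_
  rcases lt_trichotomy (f b) (f a) with hba | hba | hba
  · simp [h, hba, hba.ne, not_lt.2 hba.le]
  · simp [h, hba]
  · simp [h, hba, hba.ne', not_lt.2 hba.le]

theorem genResultant_update_mul [DecidableEq ι] [CommRing K] (z : ι → K) (f : ι → β) (a : ι)
    (v : β) :
    genResultant z (update f a v) * (∏ b ∈ ({b | f b = v} : Finset ι).erase a, (z a - z b))
        * (-1) ^ #{b | f b < f a}
      = genResultant z f * (∏ b ∈ ({b | f b = f a} : Finset ι).erase a, (z a - z b))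
        * (-1) ^ #{b | update f a v b < v} := by
  have hf := genResultant_mul_prod_block_erase z f a
  have hf' := genResultant_mul_prod_block_erase z (update f a v) a
  have hblock : ({b | update f a v b = v} : Finset ι).erase a
      = ({b | f b = v} : Finset ι).erase a := by
    ext b
    by_cases hb : b = a <;> simp [hb]
  have hoff : ∀ b ∈ univ.erase a, ∀ c ∈ univ.erase a,
      (if update f a v b < update f a v c then z b - z c else 1)
        = if f b < f c then z b - z c else 1 := fun b hb c hc => by
    rw [update_of_ne (ne_of_mem_erase hb), update_of_ne (ne_of_mem_erase hc)]
  rw [update_self, hblock, prod_congr rfl fun b hb => prod_congr rfl (hoff b hb)] at hf'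
  linear_combination
    (-1 : K) ^ #{b | f b < f a} * hf' - (-1 : K) ^ #{b | update f a v b < v} * hf

theorem sum_div_genResultant_update_eq_zero [DecidableEq ι] [Field K] {z : ι → K}
    (hz : Injective z) {g : ι → β} {k l : β} (hkl : k ≠ l)
    (hcard : #{b | g b = l} + 2 < #{b | g b = k}) :
    ∑ a with g a = k, z a / genResultant z (update g a l) = 0 := by
  set S : Finset ι := {b | g b = k}
  set T : Finset ι := {b | g b = l}
  obtain ⟨a₀, ha₀⟩ : S.Nonempty := card_pos.1 (by omega)
  have hsign : ∀ a ∈ S, #{b | update g a l b < l} = #{b | update g a₀ l b < l} := by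
    intro a ha
    have h := card_filter_update_add (· < l) g a l
    have h₀ := card_filter_update_add (· < l) g a₀ l
    simp only [(mem_filter.1 ha).2, (mem_filter.1 ha₀).2] at h h₀
    omega
  set c : K := (-1) ^ #{b | g b < k} / ((-1) ^ #{b | update g a₀ l b < l} * genResultant z g)
  have hterm : ∀ a ∈ S, z a / genResultant z (update g a l)
      = c * ((Polynomial.X * Lagrange.nodal T z).eval (z a) / ∏ b ∈ S.erase a, (z a - z b)) := by
    intro a ha
    have hga : g a = k := (mem_filter.1 ha).2
    have hT : T.erase a = T := erase_eq_of_notMem (by simp [T, hga, hkl])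
    have key := genResultant_update_mul z g a l
    rw [hga, hsign a ha, hT] at key
    have hS : ∏ b ∈ S.erase a, (z a - z b) ≠ 0 :=
      prod_ne_zero_iff.2 fun b hb => sub_ne_zero.2 (hz.ne (ne_of_mem_erase hb).symm)
    rw [Polynomial.eval_mul, Polynomial.eval_X, Lagrange.eval_nodal]
    simp only [c]
    field_simp [genResultant_ne_zero hz]
    linear_combination -z a * key
  have hnatDeg : (Polynomial.X * Lagrange.nodal T z).natDegree = #T + 1 := by
    rw [Polynomial.natDegree_mul Polynomial.X_ne_zero (Lagrange.nodal_monic).ne_zero,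
      Lagrange.natDegree_nodal, Polynomial.natDegree_X, add_comm]
  have hdeg : (Polynomial.X * Lagrange.nodal T z).degree < (#S : WithBot ℕ) :=
    (Polynomial.degree_le_natDegree).trans_lt (by rw [hnatDeg]; exact_mod_cast (by omega))
  rw [sum_congr rfl hterm, ← mul_sum, ← Lagrange.coeff_eq_sum hz.injOn hdeg,
    Polynomial.coeff_eq_zero_of_natDegree_lt (by rw [hnatDeg]; omega), mul_zero]

theorem sum_div_genResultant_update_of_card_eq [DecidableEq ι] [Fintype β] [Field K]
    {z : ι → K} (hz : Injective z) {lam : β → ℕ} {k l : β} (hlam : lam l < lam k) (g : ι → β) :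
    ∑ a with g a = k ∧ update g a l ∈ ({f | ∀ j, #{b | f b = j} = lam j} : Finset (ι → β)),
      z a / genResultant z (update g a l) = 0 := by
  by_cases h : ∃ a₀, g a₀ = k ∧
      update g a₀ l ∈ ({f | ∀ j, #{b | f b = j} = lam j} : Finset (ι → β))
  · obtain ⟨a₀, hga₀, hF₀⟩ := h
    simp only [mem_filter, mem_univ, true_and] at hF₀ ⊢
    have hkl : k ≠ l := by rintro rfl; exact lt_irrefl _ hlam
    have hfiber : ∀ a, g a = k → ∀ j, #{b | update g a l b = j} + (if k = j then 1 else 0)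
        = #{b | g b = j} + (if l = j then 1 else 0) := fun a hga j => by
      simpa only [hga] using card_filter_update_add (· = j) g a l
    have hfilter : univ.filter (fun a => g a = k ∧ ∀ j, #{b | update g a l b = j} = lam j)
        = univ.filter (fun a => g a = k) :=
      filter_congr fun a _ => ⟨And.left, fun hga => ⟨hga, fun j => by
        have := hfiber a hga j; have := hfiber a₀ hga₀ j; have := hF₀ j; omega⟩⟩
    rw [hfilter]
    refine sum_div_genResultant_update_eq_zero hz hkl ?_
    have hk := hfiber a₀ hga₀ k
    have hl := hfiber a₀ hga₀ l
    simp only [hkl, hkl.symm, if_true, if_false] at hk hl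
    have := hF₀ k; have := hF₀ l
    omega
  · exact sum_eq_zero fun a ha => absurd ⟨a, (mem_filter.1 ha).2⟩ h

end Resultant

/-- `X (j, a)` stands for `y_a^{(j)}`. -/
theorem ezkl_annihilates_P_general
    (m n : ℕ) (lam : Fin m → ℕ)
    (z : Fin n → ℂ) (hz : Function.Injective z)
    (k l : Fin m) (hlamkl : lam l < lam k)
    (P : MvPolynomial (Fin m × Fin n) ℂ)
    (hP : P = ∑ f ∈ Finset.univ.filter
        (fun f : Fin n → Fin m => ∀ j, (Finset.univ.filter fun a => f a = j).card = lam j),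
      C ((∏ a : Fin n, ∏ b ∈ Finset.univ.filter (fun b => f a < f b), (z a - z b))⁻¹) *
        ∏ a : Fin n, X (f a, a)) :
    ∑ a : Fin n, C (z a) * X (k, a) * pderiv (l, a) P = 0 := by
  subst hP
  set F : Finset (Fin n → Fin m) := {f | ∀ j, #{b | f b = j} = lam j}
  have hR : ∀ f : Fin n → Fin m,
      ∏ a : Fin n, ∏ b ∈ univ.filter (fun b => f a < f b), (z a - z b) = genResultant z f :=
    fun _ => rfl
  calc _ = ∑ f ∈ F, ∑ a with f a = l,
          C (z a / genResultant z f) * ∏ b, X (update f a k b, b) := by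
        simp only [hR, map_sum, pderiv_C_mul, mul_sum]
        rw [sum_comm]
        refine sum_congr rfl fun f _ => ?_
        rw [sum_filter]
        refine sum_congr rfl fun a _ => ?_
        rw [mul_left_comm, mul_assoc, X_mul_pderiv_prod_X, ← mul_assoc, ← C_mul,
          mul_comm (genResultant z f)⁻¹, ← div_eq_mul_inv, mul_ite, mul_zero]
    _ = ∑ g, ∑ a with g a = k ∧ update g a l ∈ F,
          C (z a / genResultant z (update g a l)) * ∏ b, X (g b, b) :=
        sum_sum_filter_update_eq F k l fun f g a => C (z a / genResultant z f) * ∏ b, X (g b, b)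
    _ = ∑ g, C (∑ a with g a = k ∧ update g a l ∈ F, z a / genResultant z (update g a l))
          * ∏ b, X (g b, b) := by
        simp only [map_sum, sum_mul]
    -- `convert` only reconciles instances: `DecidableEq (Fin m)` via `LinearOrder`, `Field ℂ`
    _ = 0 := sum_eq_zero fun g _ => mul_eq_zero_of_left
        (C_eq_zero.2 (by convert sum_div_genResultant_update_of_card_eq hz hlamkl g)) _

/-- With `P_z(λ)` as in the paper (sum over ordered set partitions with block sizes
`λ j` of the `y`-monomials divided by the generalized resultant of the `z`'s), the
operator `e^z_{k,l} = ∑_a z_a y_a^{(k)} ∂/∂y_a^{(l)}` annihilates `P_z(λ)` whenever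
`λ k > λ l`. Here `X (j, a)` stands for `y_a^{(j)}`. -/
theorem ezkl_annihilates_P
    (m n : ℕ) (lam : Fin m → ℕ) (hlam : Antitone lam) (hn : n = ∑ j, lam j)
    (z : Fin n → ℂ) (hz : Function.Injective z)
    (k l : Fin m) (hlamkl : lam l < lam k)
    (P : MvPolynomial (Fin m × Fin n) ℂ)
    (hP : P = ∑ f ∈ Finset.univ.filter
        (fun f : Fin n → Fin m => ∀ j, (Finset.univ.filter fun a => f a = j).card = lam j),
      C ((∏ a : Fin n, ∏ b ∈ Finset.univ.filter (fun b => f a < f b), (z a - z b))⁻¹) *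
        ∏ a : Fin n, X (f a, a)) :
    ∑ a : Fin n, C (z a) * X (k, a) * pderiv (l, a) P = 0 :=
  ezkl_annihilates_P_general m n lam z hz k l hlamkl P hP
end

section
/- For λ = (N,...,N) ∈ ℕ^m, an SL_m-invariant polynomial p in the multilinear subspace V^{⊗mN} ⊂ C[y_a^{(i)}] lies in the level-ℓ conformal block space (i.e., (e^z_{1,m})^{ℓ+1} p = 0 in addition to singular vector conditions) if and only if p vanishes to order ≥ N − ℓ on the linear subspace A(z) = { y : y_a^{(m)} = z_a y_a^{(1)} for all a }. -/
/-!
Write `u_a = y_a^{(m)}` and let `restrictA` be the restriction to `A(z)`, i.e. the substitution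
`u_a ↦ z_a y_a^{(1)}`. Invariance under the diagonal torus of `SL_m` forces every monomial of `p`
to have degree `N` in the `u`'s, and multilinearity makes `p` squarefree in them.

Because `restrictA (u_a) = z_a y_a^{(1)}`, restriction turns `e^z` into the Euler operator
`∑ u_a ∂/∂u_a`, so `(e^z)^n q = n! · restrictA q` whenever `q` has `u`-degree `n`. The operators
`∂_b = y_b^{(1)} ∂/∂u_b` commute with `e^z` and lower the `u`-degree by one. Hence
`(e^z)^{ℓ+1} p = 0` gives `(N - |B|)! · restrictA (∂_B p) = ∂_B (e^z)^{N - |B|} p = 0`.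
Conversely `q = (e^z)^{ℓ+1} p` is squarefree of `u`-degree `k = N - ℓ - 1` and
`∂_B q = (ℓ+1)! · restrictA (∂_B p) = 0` for `|B| = k`; since `∂_B` carries the coefficient of
`u^B` in `q` to that of `(y^{(1)})^B` in `∂_B q`, this forces `q = 0`.
-/

open MvPolynomial Finset
open scoped Nat

namespace MvPolynomial

variable {τ R : Type*} [CommSemiring R]

theorem pderiv_comm (u v : τ) (f : MvPolynomial τ R) :
    pderiv u (pderiv v f) = pderiv v (pderiv u f) := by
  classical
  ext d
  simp only [coeff_pderiv]
  rcases eq_or_ne u v with rfl | huv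
  · rfl
  rw [add_right_comm d]
  simp only [Finsupp.coe_add, Pi.add_apply, Finsupp.single_apply, if_neg huv, if_neg huv.symm,
    add_zero]
  ring

theorem IsWeightedHomogeneous.pderiv_eq_zero {w : τ → ℕ} {f : MvPolynomial τ R}
    (hf : IsWeightedHomogeneous w f 0) {v : τ} (hv : w v ≠ 0) : pderiv v f = 0 := by
  ext d
  rw [coeff_pderiv, hf.coeff_eq_zero, zero_mul, coeff_zero]
  simp [Finsupp.weight_single, hv]

theorem coeff_aeval_C_mul_X (t : τ → R) (f : MvPolynomial τ R) (d : τ →₀ ℕ) :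
    coeff d (aeval (fun v => C (t v) * X v) f) = (d.prod fun v e => t v ^ e) * coeff d f := by
  classical
  induction f using MvPolynomial.induction_on' with
  | add f g hf hg => rw [map_add, coeff_add, coeff_add, hf, hg, mul_add]
  | monomial s c =>
    simp_rw [aeval_monomial, algebraMap_eq, mul_pow, ← C_pow, Finsupp.prod_mul,
      ← map_finsuppProd C, ← mul_assoc, ← C_mul, ← monomial_eq, coeff_monomial]
    split_ifs with h
    · rw [h, mul_comm]
    · rw [mul_zero]

end MvPolynomial

namespace ConformalBlock

noncomputable section

variable {σ ι R : Type*}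

section Operators

variable [CommSemiring R] (i0 i1 : σ) (z : ι → R)

def eSite (b : ι) (f : MvPolynomial (σ × ι) R) : MvPolynomial (σ × ι) R :=
  X (i0, b) * pderiv (i1, b) f

def eSites (L : List ι) (f : MvPolynomial (σ × ι) R) : MvPolynomial (σ × ι) R :=
  L.foldr (eSite i0 i1) f

def eZ [Fintype ι] (f : MvPolynomial (σ × ι) R) : MvPolynomial (σ × ι) R :=
  ∑ a, C (z a) * X (i0, a) * pderiv (i1, a) f

def restrictA [DecidableEq σ] : MvPolynomial (σ × ι) R →ₐ[R] MvPolynomial (σ × ι) R :=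
  aeval fun v => if v.1 = i1 then C (z v.2) * X (i0, v.2) else X v

def rowWeight [DecidableEq σ] (i : σ) (v : σ × ι) : ℕ := if v.1 = i then 1 else 0

def rowIndicator (i : σ) (s : Finset ι) : σ × ι →₀ ℕ := ∑ b ∈ s, Finsupp.single (i, b) 1

def IsRowSquarefree (i : σ) (f : MvPolynomial (σ × ι) R) : Prop :=
  ∀ ⦃d : σ × ι →₀ ℕ⦄, coeff d f ≠ 0 → ∀ a, d (i, a) ≤ 1

variable {i0 i1 z}

@[simp] theorem eSites_cons (b : ι) (L : List ι) (f : MvPolynomial (σ × ι) R) :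
    eSites i0 i1 (b :: L) f = eSite i0 i1 b (eSites i0 i1 L f) := rfl

@[simp] theorem eSites_zero (L : List ι) : eSites i0 i1 L (0 : MvPolynomial (σ × ι) R) = 0 := by
  induction L with
  | nil => rfl
  | cons b L ih => simp [ih, eSite]

theorem rowIndicator_apply [DecidableEq σ] [DecidableEq ι] (i : σ) (s : Finset ι) (v : σ × ι) :
    rowIndicator i s v = if v.1 = i ∧ v.2 ∈ s then 1 else 0 := by
  obtain ⟨k, a⟩ := v
  by_cases hk : k = i
  · subst hk
    simp [rowIndicator, Finsupp.finsetSum_apply, Finsupp.single_apply]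
  · simp [rowIndicator, Finsupp.finsetSum_apply, hk]

theorem rowIndicator_insert [DecidableEq ι] {i : σ} {b : ι} {s : Finset ι} (hb : b ∉ s) :
    rowIndicator i (insert b s) = Finsupp.single (i, b) 1 + rowIndicator i s :=
  Finset.sum_insert hb

theorem coeff_eSites [DecidableEq ι] (h01 : i0 ≠ i1) {L : List ι} (hL : L.Nodup)
    (f : MvPolynomial (σ × ι) R) {d : σ × ι →₀ ℕ} (hd : ∀ b ∈ L, d (i1, b) = 0) :
    coeff (d + rowIndicator i0 L.toFinset) (eSites i0 i1 L f) =
      coeff (d + rowIndicator i1 L.toFinset) f := by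
  classical
  induction L generalizing d with
  | nil => rfl
  | cons b L ih =>
    obtain ⟨hbL, hL⟩ := List.nodup_cons.1 hL
    have hbL' : b ∉ L.toFinset := by simpa using hbL
    have hb : (d + rowIndicator i0 L.toFinset) (i1, b) = 0 := by
      simp [rowIndicator_apply, h01.symm, hd b List.mem_cons_self]
    have hd' : ∀ b' ∈ L, (d + Finsupp.single (i1, b) 1 : σ × ι →₀ ℕ) (i1, b') = 0 :=
      fun b' hb' => by simp [hd b' (List.mem_cons_of_mem b hb'), ne_of_mem_of_not_mem hb' hbL]
    rw [List.toFinset_cons, rowIndicator_insert hbL', rowIndicator_insert hbL', add_left_comm,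
      eSites_cons, eSite, coeff_X_mul, coeff_pderiv, hb, Nat.cast_zero, zero_add, mul_one,
      add_right_comm, ih hL hd', add_assoc]

theorem isWeightedHomogeneous_eSite [DecidableEq σ] (h01 : i0 ≠ i1) (b : ι) {n : ℕ}
    {f : MvPolynomial (σ × ι) R} (hf : IsWeightedHomogeneous (rowWeight i1) f (n + 1)) :
    IsWeightedHomogeneous (rowWeight i1) (eSite i0 i1 b f) n := by
  have hX : IsWeightedHomogeneous (rowWeight i1) (X (i0, b) : MvPolynomial (σ × ι) R) 0 := by
    simpa [rowWeight, h01] using isWeightedHomogeneous_X R (rowWeight i1) (i0, b)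
  rw [eSite]
  simpa using hX.mul (hf.pderiv (i := (i1, b)) (by simp [rowWeight]))

theorem isWeightedHomogeneous_eSites [DecidableEq σ] (h01 : i0 ≠ i1) :
    ∀ (L : List ι) {n : ℕ} {f : MvPolynomial (σ × ι) R},
      IsWeightedHomogeneous (rowWeight i1) f (n + L.length) →
      IsWeightedHomogeneous (rowWeight i1) (eSites i0 i1 L f) n
  | [], _, _, hf => hf
  | b :: L, _, _, hf => isWeightedHomogeneous_eSite h01 b <| isWeightedHomogeneous_eSites h01 L
      (by rwa [List.length_cons, ← add_assoc, add_right_comm] at hf)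

variable [Fintype ι]

@[simp] theorem eZ_zero : eZ i0 i1 z (0 : MvPolynomial (σ × ι) R) = 0 := by
  simp [eZ]

theorem eZ_eq_sum_eSite (f : MvPolynomial (σ × ι) R) :
    eZ i0 i1 z f = ∑ a, C (z a) * eSite i0 i1 a f := by
  simp only [eZ, eSite, mul_assoc]

theorem commute_eSite_eZ (h01 : i0 ≠ i1) (b : ι) :
    Function.Commute (eSite i0 i1 b) (eZ i0 i1 z : MvPolynomial (σ × ι) R → _) := by
  intro f
  simp only [eZ, eSite, map_sum, Finset.mul_sum]
  refine Finset.sum_congr rfl fun a _ => ?_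
  have hab : ((i0, a) : σ × ι) ≠ (i1, b) := fun h => h01 (congrArg Prod.fst h)
  have hba : ((i0, b) : σ × ι) ≠ (i1, a) := fun h => h01 (congrArg Prod.fst h)
  simp only [pderiv_mul, pderiv_X_of_ne hab, pderiv_X_of_ne hba, pderiv_C, mul_zero, zero_mul,
    zero_add]
  rw [pderiv_comm]
  ring

theorem commute_eSites_eZ (h01 : i0 ≠ i1) (L : List ι) :
    Function.Commute (eSites i0 i1 L) (eZ i0 i1 z : MvPolynomial (σ × ι) R → _) := by
  induction L with
  | nil => exact fun _ => rfl
  | cons b L ih => exact (commute_eSite_eZ h01 b).comp_left ih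

end Operators

section RowDegree

variable [CommSemiring R] [DecidableEq σ] [Fintype ι] {i0 i1 : σ} {z : ι → R}

theorem isWeightedHomogeneous_eZ (h01 : i0 ≠ i1) {n : ℕ} {f : MvPolynomial (σ × ι) R}
    (hf : IsWeightedHomogeneous (rowWeight i1) f (n + 1)) :
    IsWeightedHomogeneous (rowWeight i1) (eZ i0 i1 z f) n := by
  rw [eZ_eq_sum_eSite]
  exact IsWeightedHomogeneous.sum _ _ _ fun a _ => (isWeightedHomogeneous_eSite h01 a hf).C_mul _

theorem isWeightedHomogeneous_eZ_iterate (h01 : i0 ≠ i1) {n : ℕ} :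
    ∀ (k : ℕ) {f : MvPolynomial (σ × ι) R}, IsWeightedHomogeneous (rowWeight i1) f (n + k) →
      IsWeightedHomogeneous (rowWeight i1) ((eZ i0 i1 z)^[k] f) n
  | 0, _, hf => hf
  | k + 1, _, hf => isWeightedHomogeneous_eZ_iterate h01 k (isWeightedHomogeneous_eZ h01 hf)

theorem eZ_eq_zero {f : MvPolynomial (σ × ι) R} (hf : IsWeightedHomogeneous (rowWeight i1) f 0) :
    eZ i0 i1 z f = 0 := by
  simp [eZ, hf.pderiv_eq_zero (v := (i1, _)) (by simp [rowWeight])]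

theorem eZ_iterate_eq_zero (h01 : i0 ≠ i1) {n k : ℕ} {f : MvPolynomial (σ × ι) R}
    (hf : IsWeightedHomogeneous (rowWeight i1) f n) (hk : n < k) : (eZ i0 i1 z)^[k] f = 0 := by
  obtain ⟨j, rfl⟩ := Nat.exists_eq_add_of_lt hk
  rw [show n + j + 1 = j + 1 + n by omega, Function.iterate_add_apply,
    Function.iterate_succ_apply, eZ_eq_zero (isWeightedHomogeneous_eZ_iterate h01 n (by simpa)),
    Function.iterate_fixed eZ_zero]

theorem isRowSquarefree_eZ (h01 : i0 ≠ i1) {f : MvPolynomial (σ × ι) R}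
    (hf : IsRowSquarefree i1 f) : IsRowSquarefree i1 (eZ i0 i1 z f) := by
  classical
  intro d hd a
  by_contra! ha
  refine hd ?_
  rw [eZ_eq_sum_eSite, coeff_sum]
  refine Finset.sum_eq_zero fun b _ => ?_
  have hcoeff : coeff (d - Finsupp.single (i0, b) 1 + Finsupp.single (i1, b) 1) f = 0 := by
    by_contra hc
    have := hf hc a
    simp [Finsupp.single_apply, h01] at this
    omega
  rw [coeff_C_mul, eSite, coeff_X_mul', coeff_pderiv, hcoeff]
  simp

theorem isRowSquarefree_eZ_iterate (h01 : i0 ≠ i1) {f : MvPolynomial (σ × ι) R}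
    (hf : IsRowSquarefree i1 f) (k : ℕ) : IsRowSquarefree i1 ((eZ i0 i1 z)^[k] f) := by
  induction k generalizing f with
  | zero => exact hf
  | succ k ih => exact ih (isRowSquarefree_eZ h01 hf)

variable [Fintype σ]

theorem weight_rowWeight (i : σ) (d : σ × ι →₀ ℕ) :
    Finsupp.weight (rowWeight i) d = ∑ a, d (i, a) := by
  rw [Finsupp.weight_apply, Finsupp.sum_fintype _ _ (by simp), Fintype.sum_prod_type]
  simp [rowWeight]

theorem sum_X_mul_pderiv_row {i : σ} {n : ℕ} {f : MvPolynomial (σ × ι) R}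
    (hf : IsWeightedHomogeneous (rowWeight i) f n) :
    ∑ a, X (i, a) * pderiv (i, a) f = n • f := by
  rw [← hf.sum_weight_X_mul_pderiv, Fintype.sum_prod_type]
  simp [rowWeight]

theorem restrictA_of_isWeightedHomogeneous_zero {f : MvPolynomial (σ × ι) R}
    (hf : IsWeightedHomogeneous (rowWeight i1) f 0) : restrictA i0 i1 z f = f := by
  conv_rhs => rw [← aeval_X_left_apply f]
  refine eval₂_congr _ _ _ fun {v d} hv hd => if_neg fun hv1 => ?_
  obtain ⟨k, a⟩ := v
  obtain rfl : k = i1 := hv1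
  have := hf hd
  rw [weight_rowWeight, Finset.sum_eq_zero_iff] at this
  exact Finsupp.mem_support_iff.1 hv (this a (mem_univ a))

theorem restrictA_eZ (h01 : i0 ≠ i1) {n : ℕ} {f : MvPolynomial (σ × ι) R}
    (hf : IsWeightedHomogeneous (rowWeight i1) f n) :
    restrictA i0 i1 z (eZ i0 i1 z f) = n • restrictA i0 i1 z f := by
  rw [← map_nsmul, ← sum_X_mul_pderiv_row hf, eZ, map_sum, map_sum]
  refine Finset.sum_congr rfl fun a _ => ?_
  simp [restrictA, h01]

theorem eZ_iterate_eq_factorial_smul_restrictA (h01 : i0 ≠ i1) :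
    ∀ {n : ℕ} {f : MvPolynomial (σ × ι) R}, IsWeightedHomogeneous (rowWeight i1) f n →
      (eZ i0 i1 z)^[n] f = n ! • restrictA i0 i1 z f
  | 0, _, hf => by simp [restrictA_of_isWeightedHomogeneous_zero hf]
  | n + 1, _, hf => by
    rw [Function.iterate_succ_apply,
      eZ_iterate_eq_factorial_smul_restrictA h01 (isWeightedHomogeneous_eZ h01 hf),
      restrictA_eZ h01 hf, smul_smul, Nat.factorial_succ, mul_comm]

theorem eq_zero_of_forall_eSites_eq_zero (h01 : i0 ≠ i1) {k : ℕ}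
    {f : MvPolynomial (σ × ι) R} (hf : IsWeightedHomogeneous (rowWeight i1) f k)
    (hsq : IsRowSquarefree i1 f) (h : ∀ B : Finset ι, B.card = k → eSites i0 i1 B.toList f = 0) :
    f = 0 := by
  classical
  ext d
  rw [coeff_zero]
  by_contra hd
  set B := univ.filter fun a => d (i1, a) ≠ 0
  have hB : ∀ a, rowIndicator i1 B (i1, a) = d (i1, a) := fun a => by
    have := hsq hd a
    simp only [rowIndicator_apply, B, mem_filter, mem_univ, true_and]
    split_ifs <;> omega
  have hle : rowIndicator i1 B ≤ d := fun v => by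
    obtain ⟨i, a⟩ := v
    by_cases hi : i = i1
    · rw [hi, hB]
    · simp [rowIndicator_apply, hi]
  have hcard : B.card = k := by
    rw [← hf hd, weight_rowWeight, ← Finset.sum_congr rfl fun a _ => hB a]
    simp [rowIndicator_apply]
  have hd₀ : ∀ b ∈ B.toList, (d - rowIndicator i1 B) (i1, b) = 0 := fun b _ => by
    simp [hB]
  have := coeff_eSites h01 B.nodup_toList f hd₀
  rw [toList_toFinset, tsub_add_cancel_of_le hle, h B hcard, coeff_zero] at this
  exact hd this.symm

end RowDegree

theorem eZ_iterate_eq_zero_iff [CommSemiring R] [IsDomain R] [CharZero R] [DecidableEq σ]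
    [Fintype σ] [Fintype ι] {i0 i1 : σ} {z : ι → R} (h01 : i0 ≠ i1) {N ℓ : ℕ}
    {p : MvPolynomial (σ × ι) R} (hp : IsWeightedHomogeneous (rowWeight i1) p N)
    (hsq : IsRowSquarefree i1 p) :
    (eZ i0 i1 z)^[ℓ + 1] p = 0 ↔
      ∀ B : Finset ι, B.card + ℓ + 1 ≤ N → restrictA i0 i1 z (eSites i0 i1 B.toList p) = 0 := by
  constructor
  · intro h B hB
    have hBp : IsWeightedHomogeneous (rowWeight i1) (eSites i0 i1 B.toList p) (N - B.card) :=
      isWeightedHomogeneous_eSites h01 _ (by rwa [length_toList, Nat.sub_add_cancel (by omega)])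
    have hfac : (N - B.card) ! • restrictA i0 i1 z (eSites i0 i1 B.toList p) = 0 := by
      rw [← eZ_iterate_eq_factorial_smul_restrictA h01 hBp,
        ← (commute_eSites_eZ h01 _).iterate_right,
        show N - B.card = (N - B.card - (ℓ + 1)) + (ℓ + 1) by omega, Function.iterate_add_apply, h,
        Function.iterate_fixed eZ_zero, eSites_zero]
    exact (smul_eq_zero.1 hfac).resolve_left (Nat.factorial_ne_zero _)
  · intro h
    rcases lt_or_ge N (ℓ + 1) with hN | hN
    · exact eZ_iterate_eq_zero h01 hp hN
    refine eq_zero_of_forall_eSites_eq_zero h01 (k := N - (ℓ + 1))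
      (isWeightedHomogeneous_eZ_iterate h01 _ (by rwa [Nat.sub_add_cancel hN]))
      (isRowSquarefree_eZ_iterate h01 hsq _) fun B hB => ?_
    have hBp : IsWeightedHomogeneous (rowWeight i1) (eSites i0 i1 B.toList p) (ℓ + 1) :=
      isWeightedHomogeneous_eSites h01 _ (by rwa [length_toList, hB, Nat.add_sub_cancel' hN])
    rw [(commute_eSites_eZ h01 _).iterate_right, eZ_iterate_eq_factorial_smul_restrictA h01 hBp,
      h B (by omega), smul_zero]

theorem restrictA_eq_zero_iff [CommRing R] [IsDomain R] [Infinite R] [DecidableEq σ]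
    {i0 i1 : σ} {z : ι → R} (h01 : i0 ≠ i1) (f : MvPolynomial (σ × ι) R) :
    restrictA i0 i1 z f = 0 ↔
      ∀ v : σ × ι → R, (∀ a, v (i1, a) = z a * v (i0, a)) → eval v f = 0 := by
  have heval : ∀ v : σ × ι → R, eval v (restrictA i0 i1 z f) =
      eval (fun u => if u.1 = i1 then z u.2 * v (i0, u.2) else v u) f := fun v => by
    rw [restrictA, ← aeval_eq_eval, ← AlgHom.comp_apply, comp_aeval, aeval_eq_eval]
    congr 2 with u
    split_ifs <;> simp
  constructor
  · intro h v hv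
    have hv' : (fun u : σ × ι => if u.1 = i1 then z u.2 * v (i0, u.2) else v u) = v := by
      funext ⟨k, a⟩
      split_ifs with hk
      · obtain rfl : k = i1 := hk
        exact (hv a).symm
      · rfl
    rw [← hv', ← heval, h, map_zero]
  · intro h
    refine MvPolynomial.funext fun u => ?_
    rw [heval, map_zero]
    exact h _ fun a => by simp [h01]

section SpecialLinear

variable {K : Type*} [Field K] [CharZero K] [DecidableEq σ] [Fintype σ] [Fintype ι]

/-- The torus element `diag(2 at i, 1/2 at j)` multiplies the monomial with exponent `d` by
`2 ^ (r_i - r_j)`, where `r_k` is the degree of `d` in row `k`. -/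
theorem rowSum_eq_of_forall_specialLinear_invariant {p : MvPolynomial (σ × ι) K}
    (hinv : ∀ g : Matrix.SpecialLinearGroup σ K,
      aeval (fun v : σ × ι => ∑ j, C (g.1 v.1 j) * X (j, v.2)) p = p)
    {d : σ × ι →₀ ℕ} (hd : coeff d p ≠ 0) (i j : σ) :
    ∑ a, d (i, a) = ∑ a, d (j, a) := by
  rcases eq_or_ne i j with rfl | hij
  · rfl
  set s : σ → K := Pi.mulSingle i 2 * Pi.mulSingle j 2⁻¹
  have hpow : ∀ r : σ → ℕ, ∏ k, s k ^ r k = 2 ^ r i * 2⁻¹ ^ r j := fun r => by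
    simp only [s, Pi.mul_apply, mul_pow, Finset.prod_mul_distrib]
    rw [Fintype.prod_eq_single i fun k hk => by simp [hk],
      Fintype.prod_eq_single j fun k hk => by simp [hk]]
    simp
  have hdet : (Matrix.diagonal s).det = 1 := by
    simpa [hij] using hpow 1
  have hdiag : ∀ v : σ × ι, ∑ k, C (Matrix.diagonal s v.1 k) * X (k, v.2) = C (s v.1) * X v :=
    fun v => by
      rw [Finset.sum_eq_single v.1 (fun k _ hk => by simp [Matrix.diagonal_apply_ne _ hk.symm])
        (by simp)]
      simp
  have hg := congrArg (coeff d) (hinv ⟨Matrix.diagonal s, hdet⟩)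
  simp only [hdiag, coeff_aeval_C_mul_X] at hg
  have h1 : d.prod (fun v e => s v.1 ^ e) = 1 := mul_right_cancel₀ hd (hg.trans (one_mul _).symm)
  rw [Finsupp.prod_fintype _ _ (by simp), Fintype.prod_prod_type] at h1
  simp_rw [Finset.prod_pow_eq_pow_sum] at h1
  rw [hpow (fun k => ∑ a, d (k, a)), inv_pow, mul_inv_eq_one₀ (pow_ne_zero _ two_ne_zero)] at h1
  exact Nat.pow_right_injective le_rfl (by exact_mod_cast h1)

theorem isWeightedHomogeneous_of_forall_specialLinear_invariant [Nonempty σ] {N : ℕ}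
    (hcard : Fintype.card ι = Fintype.card σ * N) {p : MvPolynomial (σ × ι) K}
    (hmultilinear : ∀ d ∈ p.support, ∀ a, ∑ i, d (i, a) = 1)
    (hinv : ∀ g : Matrix.SpecialLinearGroup σ K,
      aeval (fun v : σ × ι => ∑ j, C (g.1 v.1 j) * X (j, v.2)) p = p) (i : σ) :
    IsWeightedHomogeneous (rowWeight i) p N := by
  intro d hd
  rw [weight_rowWeight]
  refine Nat.eq_of_mul_eq_mul_left (Fintype.card_pos (α := σ)) ?_
  calc Fintype.card σ * ∑ a, d (i, a)
      = ∑ k, ∑ a, d (k, a) := by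
        simp [rowSum_eq_of_forall_specialLinear_invariant hinv hd _ i]
    _ = Fintype.card ι := by
        rw [Finset.sum_comm,
          Finset.sum_congr rfl fun a _ => hmultilinear d (mem_support_iff.2 hd) a]
        simp
    _ = Fintype.card σ * N := hcard

end SpecialLinear

theorem isRowSquarefree_of_sum_eq_one [CommSemiring R] [Fintype σ] {p : MvPolynomial (σ × ι) R}
    (hmultilinear : ∀ d ∈ p.support, ∀ a, ∑ i, d (i, a) = 1) (i : σ) : IsRowSquarefree i p :=
  fun d hd a => hmultilinear d (mem_support_iff.2 hd) a ▸
    Finset.single_le_sum (f := fun k => d (k, a)) (fun _ _ => Nat.zero_le _) (mem_univ i)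

end

end ConformalBlock

/-- "Symmetry and vanishing" description of conformal blocks for `λ = (N,…,N)`:
an `SL_m`-invariant polynomial `p` in the multilinear subspace `V^{⊗ mN}` of
`ℂ[y_a^{(i)}]` satisfies the level-`ℓ` conformal block equation
`(e^z_{1,m})^{ℓ+1} p = 0` if and only if `p` vanishes to order `≥ N - ℓ` on the
subspace `A(z) = {y : y_a^{(m)} = z_a y_a^{(1)} ∀ a}`, the latter being expressed
by the vanishing on `A(z)` of `∂_B p = (∏_{b∈B} y_b^{(1)} ∂/∂y_b^{(m)}) p` for all
subsets `B` with `|B| ≤ N - ℓ - 1`. Here `X (i, a)` stands for `y_a^{(i)}`,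
`i = 0` corresponds to the superscript `(1)` and `i = m - 1` to `(m)`. -/
theorem conformal_block_iff_vanishing
    (m N ℓ : ℕ) (hm : 2 ≤ m)
    (z : Fin (m * N) → ℂ)
    (p : MvPolynomial (Fin m × Fin (m * N)) ℂ)
    (hmultilinear : ∀ d ∈ p.support, ∀ a : Fin (m * N), (∑ i : Fin m, d (i, a)) = 1)
    (hinv : ∀ g : Matrix.SpecialLinearGroup (Fin m) ℂ,
      aeval (fun v : Fin m × Fin (m * N) =>
        ∑ j : Fin m, C (g.1 v.1 j) * X (j, v.2)) p = p) :
    (fun q => ∑ a : Fin (m * N),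
        C (z a) * X ((⟨0, by omega⟩ : Fin m), a) * pderiv (⟨m - 1, by omega⟩, a) q)^[ℓ + 1]
      p = 0 ↔
    ∀ B : Finset (Fin (m * N)), B.card + ℓ + 1 ≤ N →
      ∀ v : Fin m × Fin (m * N) → ℂ,
        (∀ a : Fin (m * N), v (⟨m - 1, by omega⟩, a) = z a * v (⟨0, by omega⟩, a)) →
        MvPolynomial.eval v
          (B.toList.foldr
            (fun b q => X ((⟨0, by omega⟩ : Fin m), b) * pderiv (⟨m - 1, by omega⟩, b) q)
            p) = 0 := by
  have h01 : (⟨0, by omega⟩ : Fin m) ≠ ⟨m - 1, by omega⟩ :=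
    Fin.ne_of_val_ne (show 0 ≠ m - 1 by omega)
  have : Nonempty (Fin m) := ⟨⟨0, by omega⟩⟩
  have hp := ConformalBlock.isWeightedHomogeneous_of_forall_specialLinear_invariant (N := N)
    (by simp) hmultilinear hinv (⟨m - 1, by omega⟩ : Fin m)
  exact (ConformalBlock.eZ_iterate_eq_zero_iff h01 hp
    (ConformalBlock.isRowSquarefree_of_sum_eq_one hmultilinear _)).trans
    (forall₂_congr fun B _ => ConformalBlock.restrictA_eq_zero_iff h01 _)
end

section
/- For m = 2 and λ = (N, N), the function P̃ = P_z(N,N) · ∏_{1≤i<j≤2N}(z_i − z_j)^{m/(m+1)} with m = 2 satisfies the KZ equation at level 1; equivalently, P = P_z(N,N) satisfies (∂/∂z_i − (1/3)∑_{j≠i} Ω^{(i,j)}/(z_i − z_j)) P = P · ∑_{j≠i} a_{ij}/(z_i − z_j) with a_{ij} = −2/3 for all i ≠ j. -/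
/-!
Each summand `c_I / R(z_I | z_{Iᶜ})` of `P` satisfies the equation on its own. Replacing `I` by
`Iᶜ` only changes the sign of `R`, so one may assume `i ∈ I`. The logarithmic derivative of `R` in
`z_i` is `∑_{b ∉ I} 1/(z_i - z_b)`. The transposition `(i j)` fixes `I` when `j ∈ I`; when `j ∉ I`,
`R(z) / R(z ∘ (i j))` is, up to sign, the Lagrange basis polynomial of the node `z_j` among
`z_{Iᶜ}`, evaluated at `z_i`, times `G(z_j) / G(z_i)` for `G = ∏_{a ∈ I, a ≠ i} (X - z_a)`. As
`deg G < |Iᶜ|`, `G` is its own Lagrange interpolant on these nodes, and differentiating this at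
`z_i` sums the terms with `j ∉ I` to `∑_{a ∈ I, a ≠ i} 1/(z_i - z_a) - ∑_{b ∉ I} 1/(z_i - z_b)`.
The constants `-2/3` and `1/3` are the only ones that balance these contributions.
-/

open Finset

noncomputable section

/-- `P_z(N,N)` as a scalar-valued function of the `z`- and `y`-variables:
`∑_I (∏_{a∈I} y_a^{(1)}) (∏_{b∉I} y_b^{(2)}) / ∏_{a∈I, b∉I} (z_a - z_b)`,
summed over `N`-element subsets `I` of `{1,…,2N}`. Here `y 0 a = y_a^{(1)}`,
`y 1 a = y_a^{(2)}`. -/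
def Pfun (N : ℕ) (z : Fin (2 * N) → ℂ) (y : Fin 2 → Fin (2 * N) → ℂ) : ℂ :=
  ∑ I ∈ (Finset.univ : Finset (Fin (2 * N))).powersetCard N,
    ((∏ a ∈ I, y 0 a) * ∏ b ∈ Iᶜ, y 1 b) / ∏ a ∈ I, ∏ b ∈ Iᶜ, (z a - z b)

open Polynomial

namespace Lagrange

variable {F ι : Type*} [Field F] [DecidableEq ι] {s : Finset ι} {v : ι → F} {x : F}

theorem eval_derivative_nodal_not_at_node (hx : ∀ i ∈ s, x ≠ v i) :
    eval x (derivative (nodal s v)) = eval x (nodal s v) * ∑ i ∈ s, (x - v i)⁻¹ := by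
  rw [derivative_nodal, eval_finsetSum, mul_sum]
  refine sum_congr rfl fun i hi => ?_
  rw [nodal_eq_mul_nodal_erase hi, eval_mul, eval_sub, eval_X, eval_C, mul_comm (x - v i),
    mul_inv_cancel_right₀ (sub_ne_zero_of_ne (hx i hi))]

theorem eval_derivative_basis_not_at_node {i : ι} (hi : i ∈ s) (hx : ∀ j ∈ s, x ≠ v j) :
    eval x (derivative (Lagrange.basis s v i)) =
      eval x (Lagrange.basis s v i) * ∑ j ∈ s.erase i, (x - v j)⁻¹ := by
  rw [basis_eq_prod_sub_inv_mul_nodal_div hi, ← nodal_erase_eq_nodal_div hi, derivative_C_mul,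
    eval_mul, eval_mul, eval_C,
    eval_derivative_nodal_not_at_node fun j hj => hx j (mem_of_mem_erase hj), mul_assoc]

theorem eval_derivative_eq_of_degree_lt (hvs : Set.InjOn v s) {f : F[X]} (hf : f.degree < #s)
    (hx : ∀ i ∈ s, x ≠ v i) :
    eval x (derivative f) = eval x f * ∑ i ∈ s, (x - v i)⁻¹ -
      ∑ i ∈ s, eval (v i) f * eval x (Lagrange.basis s v i) * (x - v i)⁻¹ := by
  have hval : eval x f = ∑ i ∈ s, eval (v i) f * eval x (Lagrange.basis s v i) := by
    conv_lhs => rw [eq_interpolate hvs hf]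
    simp [interpolate_apply, eval_finsetSum]
  conv_lhs => rw [eq_interpolate hvs hf, interpolate_apply]
  simp only [derivative_sum, derivative_C_mul, eval_finsetSum, eval_mul, eval_C, hval, sum_mul,
    ← sum_sub_distrib]
  refine sum_congr rfl fun i hi => ?_
  rw [eval_derivative_basis_not_at_node hi hx, sum_erase_eq_sub hi]
  ring

end Lagrange

section crossDiff

variable {ι : Type*} [Fintype ι] [DecidableEq ι]

/-- The paper's `R(z_I | z_{Iᶜ})`. -/
def crossDiff {R : Type*} [CommRing R] (z : ι → R) (I : Finset ι) : R :=
  ∏ a ∈ I, ∏ b ∈ Iᶜ, (z a - z b)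

theorem crossDiff_ne_zero {K : Type*} [Field K] {z : ι → K} (hz : Function.Injective z)
    (I : Finset ι) : crossDiff z I ≠ 0 :=
  prod_ne_zero_iff.2 fun _ ha => prod_ne_zero_iff.2 fun _ hb =>
    sub_ne_zero.2 <| hz.ne <| ne_of_mem_of_not_mem ha (mem_compl.1 hb)

theorem crossDiff_compl {R : Type*} [CommRing R] (z : ι → R) (I : Finset ι) :
    crossDiff z Iᶜ = (-1) ^ (#I * #Iᶜ) * crossDiff z I := by
  rw [crossDiff, compl_compl, prod_comm]
  calc ∏ b ∈ I, ∏ a ∈ Iᶜ, (z a - z b)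
      = ∏ b ∈ I, ((-1) ^ #Iᶜ * ∏ a ∈ Iᶜ, (z b - z a)) :=
        prod_congr rfl fun b _ => by rw [← prod_neg]; simp only [neg_sub]
    _ = (-1) ^ (#I * #Iᶜ) * crossDiff z I := by
        rw [prod_mul_distrib, prod_const, ← pow_mul, mul_comm #Iᶜ, crossDiff]

theorem crossDiff_comp_perm_of_support_subset {R : Type*} [CommRing R] (z : ι → R)
    {I : Finset ι} {σ : Equiv.Perm ι} (hσ : {a | σ a ≠ a} ⊆ I) :
    crossDiff (z ∘ σ) I = crossDiff z I := by
  have hfix : ∀ b ∈ Iᶜ, σ b = b := fun b hb => by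
    by_contra h
    exact mem_compl.1 hb (hσ h)
  refine (prod_congr rfl fun a _ => prod_congr rfl fun b hb => ?_).trans
    (σ.prod_comp I (fun a => ∏ b ∈ Iᶜ, (z a - z b)) hσ)
  simp [hfix b hb]

theorem crossDiff_eq_of_mem_of_notMem {R : Type*} [CommRing R] (z : ι → R) {I : Finset ι}
    {i j : ι} (hi : i ∈ I) (hj : j ∉ I) :
    crossDiff z I = (z i - z j) * (∏ b ∈ Iᶜ.erase j, (z i - z b)) *
      ∏ a ∈ I.erase i, ((z a - z j) * ∏ b ∈ Iᶜ.erase j, (z a - z b)) := by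
  have hj' : j ∈ Iᶜ := mem_compl.2 hj
  rw [crossDiff, ← mul_prod_erase I _ hi, ← mul_prod_erase Iᶜ _ hj']
  congr 1
  exact prod_congr rfl fun a _ => (mul_prod_erase Iᶜ _ hj').symm

theorem crossDiff_comp_swap {R : Type*} [CommRing R] (z : ι → R) {I : Finset ι} {i j : ι}
    (hi : i ∈ I) (hj : j ∉ I) :
    crossDiff (z ∘ Equiv.swap i j) I = (z j - z i) * (∏ b ∈ Iᶜ.erase j, (z j - z b)) *
      ∏ a ∈ I.erase i, ((z a - z i) * ∏ b ∈ Iᶜ.erase j, (z a - z b)) := by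
  have hfixI : ∀ a ∈ I.erase i, Equiv.swap i j a = a := fun a ha =>
    Equiv.swap_apply_of_ne_of_ne (ne_of_mem_erase ha)
      (ne_of_mem_of_not_mem (mem_of_mem_erase ha) hj)
  have hfixJ : ∀ b ∈ Iᶜ.erase j, Equiv.swap i j b = b := fun b hb =>
    Equiv.swap_apply_of_ne_of_ne (ne_of_mem_of_not_mem hi (mem_compl.1 (mem_of_mem_erase hb))).symm
      (ne_of_mem_erase hb)
  rw [crossDiff_eq_of_mem_of_notMem _ hi hj]
  simp only [Function.comp_apply, Equiv.swap_apply_left, Equiv.swap_apply_right]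
  refine congr_arg₂ _ (congr_arg _ (prod_congr rfl fun b hb => by rw [hfixJ b hb]))
    (prod_congr rfl fun a ha => ?_)
  rw [hfixI a ha]
  exact congr_arg _ (prod_congr rfl fun b hb => by rw [hfixJ b hb])

theorem crossDiff_mul_eval_nodal {K : Type*} [Field K] {z : ι → K} (hz : Function.Injective z)
    {I : Finset ι} {i j : ι} (hi : i ∈ I) (hj : j ∉ I) :
    crossDiff z I * eval (z i) (Lagrange.nodal (I.erase i) z) =
      -(eval (z i) (Lagrange.basis Iᶜ z j) * eval (z j) (Lagrange.nodal (I.erase i) z)) *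
        crossDiff (z ∘ Equiv.swap i j) I := by
  have hW : ∏ b ∈ Iᶜ.erase j, (z j - z b) ≠ 0 :=
    prod_ne_zero_iff.2 fun b hb => sub_ne_zero.2 (hz.ne (ne_of_mem_erase hb).symm)
  have hsign : ∀ c, ∏ a ∈ I.erase i, (z a - c) = (-1) ^ #(I.erase i) * ∏ a ∈ I.erase i, (c - z a) :=
    fun c => by rw [← prod_neg]; simp only [neg_sub]
  rw [crossDiff_eq_of_mem_of_notMem z hi hj, crossDiff_comp_swap z hi hj]
  simp only [Lagrange.basis, Lagrange.basisDivisor, Lagrange.eval_nodal, eval_prod, eval_mul,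
    eval_C, eval_sub, eval_X, prod_mul_distrib, prod_inv_distrib, hsign]
  field_simp
  ring

theorem crossDiff_update_of_mem {R : Type*} [CommRing R] (z : ι → R) {I : Finset ι} {i : ι}
    (hi : i ∈ I) (t : R) :
    crossDiff (Function.update z i t) I =
      eval t (Lagrange.nodal Iᶜ z) * ∏ a ∈ I.erase i, eval (z a) (Lagrange.nodal Iᶜ z) := by
  have hfix : ∀ a ≠ i, Function.update z i t a = z a := fun a ha => Function.update_of_ne ha _ _
  rw [crossDiff, ← mul_prod_erase I _ hi]
  simp only [Lagrange.eval_nodal, Function.update_self]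
  refine congr_arg₂ _ (prod_congr rfl fun b hb => ?_) (prod_congr rfl fun a ha => ?_)
  · rw [hfix b (ne_of_mem_of_not_mem hi (mem_compl.1 hb)).symm]
  · rw [hfix a (ne_of_mem_erase ha)]
    exact prod_congr rfl fun b hb => by
      rw [hfix b (ne_of_mem_of_not_mem hi (mem_compl.1 hb)).symm]

theorem hasDerivAt_crossDiff_update {𝕜 : Type*} [NontriviallyNormedField 𝕜] {z : ι → 𝕜}
    (hz : Function.Injective z) {I : Finset ι} {i : ι} (hi : i ∈ I) :
    HasDerivAt (fun t => crossDiff (Function.update z i t) I)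
      (crossDiff z I * ∑ b ∈ Iᶜ, (z i - z b)⁻¹) (z i) := by
  simp only [crossDiff_update_of_mem z hi]
  refine (((Lagrange.nodal Iᶜ z).hasDerivAt (z i)).mul_const _).congr_deriv ?_
  rw [Lagrange.eval_derivative_nodal_not_at_node fun b hb =>
      hz.ne (ne_of_mem_of_not_mem hi (mem_compl.1 hb)),
    ← Function.update_eq_self i z, crossDiff_update_of_mem _ hi]
  simp only [Function.update_eq_self]
  ring

theorem sum_inv_crossDiff_comp_swap {K : Type*} [Field K] {z : ι → K} (hz : Function.Injective z)
    {I : Finset ι} {i : ι} (hi : i ∈ I) (hcard : #I ≤ #Iᶜ) :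
    ∑ j ∈ Iᶜ, (crossDiff (z ∘ Equiv.swap i j) I)⁻¹ / (z i - z j) =
      (crossDiff z I)⁻¹ * (∑ a ∈ I.erase i, (z i - z a)⁻¹ - ∑ b ∈ Iᶜ, (z i - z b)⁻¹) := by
  set G := Lagrange.nodal (I.erase i) z
  have hxA : ∀ a ∈ I.erase i, z i ≠ z a := fun a ha => hz.ne (ne_of_mem_erase ha).symm
  have hxB : ∀ b ∈ Iᶜ, z i ≠ z b := fun b hb => hz.ne (ne_of_mem_of_not_mem hi (mem_compl.1 hb))
  have hGx : eval (z i) G ≠ 0 := Lagrange.eval_nodal_not_at_node hxA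
  have hdeg : G.degree < #Iᶜ := by
    rw [Lagrange.degree_nodal, card_erase_of_mem hi]
    exact_mod_cast (Nat.sub_lt (card_pos.2 ⟨i, hi⟩) one_pos).trans_le hcard
  have hR := crossDiff_ne_zero hz I
  have hterm : ∀ j ∈ Iᶜ, (crossDiff (z ∘ Equiv.swap i j) I)⁻¹ / (z i - z j) =
      -((crossDiff z I)⁻¹ * (eval (z i) G)⁻¹) *
        (eval (z j) G * eval (z i) (Lagrange.basis Iᶜ z j) * (z i - z j)⁻¹) := fun j hj => by
    have hRj := crossDiff_ne_zero (hz.comp (Equiv.injective (Equiv.swap i j))) I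
    have key := crossDiff_mul_eval_nodal hz hi (mem_compl.1 hj)
    have hij : z i - z j ≠ 0 := sub_ne_zero.2 (hxB j hj)
    field_simp
    linear_combination key
  have hsum : ∑ j ∈ Iᶜ, eval (z j) G * eval (z i) (Lagrange.basis Iᶜ z j) * (z i - z j)⁻¹ =
      eval (z i) G * (∑ b ∈ Iᶜ, (z i - z b)⁻¹ - ∑ a ∈ I.erase i, (z i - z a)⁻¹) := by
    have h := Lagrange.eval_derivative_eq_of_degree_lt hz.injOn hdeg hxB
    rw [Lagrange.eval_derivative_nodal_not_at_node hxA] at h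
    linear_combination h
  rw [sum_congr rfl hterm, ← mul_sum, hsum]
  field_simp
  ring

theorem hasDerivAt_inv_crossDiff_update_of_mem {𝕜 : Type*} [NontriviallyNormedField 𝕜]
    [CharZero 𝕜] {z : ι → 𝕜} (hz : Function.Injective z) {I : Finset ι} {i : ι} (hi : i ∈ I)
    (hcard : #I ≤ #Iᶜ) :
    HasDerivAt (fun t => (crossDiff (Function.update z i t) I)⁻¹)
      ((crossDiff z I)⁻¹ * ∑ j ∈ univ.erase i, (-2 / 3) / (z i - z j) +
        1 / 3 * ∑ j ∈ univ.erase i, (crossDiff (z ∘ Equiv.swap i j) I)⁻¹ / (z i - z j)) (z i) := by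
  have hR := crossDiff_ne_zero hz I
  -- the `j = i` term is `f i / 0 = 0`
  have hsplit : ∀ f : ι → 𝕜, ∑ j ∈ univ.erase i, f j / (z i - z j) =
      ∑ j ∈ I, f j / (z i - z j) + ∑ j ∈ Iᶜ, f j / (z i - z j) := fun f => by
    rw [sum_erase _ (by simp), sum_add_sum_compl]
  have hsame : ∑ j ∈ I, (crossDiff (z ∘ Equiv.swap i j) I)⁻¹ / (z i - z j) =
      (crossDiff z I)⁻¹ * ∑ a ∈ I, (z i - z a)⁻¹ := by
    rw [mul_sum]
    refine sum_congr rfl fun j hj => ?_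
    rw [crossDiff_comp_perm_of_support_subset z fun a ha => ?_, div_eq_mul_inv]
    rcases (Equiv.swap_apply_ne_self_iff.1 ha).2 with rfl | rfl <;> assumption
  have hA : ∑ a ∈ I.erase i, (z i - z a)⁻¹ = ∑ a ∈ I, (z i - z a)⁻¹ := sum_erase _ (by simp)
  simp only [hsplit]
  rw [hsame, sum_inv_crossDiff_comp_swap hz hi hcard, hA]
  refine ((hasDerivAt_crossDiff_update hz hi).inv
    (by rwa [Function.update_eq_self])).congr_deriv ?_
  simp only [Function.update_eq_self, div_eq_mul_inv, ← mul_sum]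
  field_simp
  ring

theorem hasDerivAt_inv_crossDiff_update {𝕜 : Type*} [NontriviallyNormedField 𝕜]
    [CharZero 𝕜] {z : ι → 𝕜} (hz : Function.Injective z) {I : Finset ι} (hI : #I = #Iᶜ) (i : ι) :
    HasDerivAt (fun t => (crossDiff (Function.update z i t) I)⁻¹)
      ((crossDiff z I)⁻¹ * ∑ j ∈ univ.erase i, (-2 / 3) / (z i - z j) +
        1 / 3 * ∑ j ∈ univ.erase i, (crossDiff (z ∘ Equiv.swap i j) I)⁻¹ / (z i - z j)) (z i) := by
  by_cases hi : i ∈ I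
  · exact hasDerivAt_inv_crossDiff_update_of_mem hz hi hI.le
  have h := hasDerivAt_inv_crossDiff_update_of_mem hz (mem_compl.2 hi) (by rw [compl_compl, hI])
  have hflip : ∀ w : ι → 𝕜, (crossDiff w I)⁻¹ = (-1) ^ (#I * #Iᶜ) * (crossDiff w Iᶜ)⁻¹ :=
    fun w => by
      rw [crossDiff_compl, mul_inv]
      exact (mul_inv_cancel_left₀ (pow_ne_zero _ (neg_ne_zero.2 one_ne_zero)) _).symm
  simp only [hflip]
  refine (h.const_mul ((-1 : 𝕜) ^ (#I * #Iᶜ))).congr_deriv ?_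
  simp only [mul_add, mul_sum]
  congr 1 <;> exact sum_congr rfl fun _ _ => by ring

end crossDiff

theorem Pfun_eq_sum_div_crossDiff (N : ℕ) (z : Fin (2 * N) → ℂ) (y : Fin 2 → Fin (2 * N) → ℂ) :
    Pfun N z y = ∑ I ∈ (univ : Finset (Fin (2 * N))).powersetCard N,
      ((∏ a ∈ I, y 0 a) * ∏ b ∈ Iᶜ, y 1 b) / crossDiff z I :=
  rfl

theorem Pfun_comp_perm (N : ℕ) (z : Fin (2 * N) → ℂ) (y : Fin 2 → Fin (2 * N) → ℂ)
    (σ : Equiv.Perm (Fin (2 * N))) :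
    Pfun N z (fun k a => y k (σ a)) = Pfun N (z ∘ σ.symm) y := by
  simp only [Pfun_eq_sum_div_crossDiff]
  refine sum_nbij' (fun I => I.map σ.toEmbedding) (fun I => I.map σ.symm.toEmbedding) ?_ ?_ ?_ ?_ ?_
  · simp
  · simp
  · intro I _; simp [map_map]
  · intro I _; simp [map_map]
  · intro I _
    have hc : (I.map σ.toEmbedding)ᶜ = Iᶜ.map σ.toEmbedding := by ext; simp
    simp [crossDiff, hc, prod_map]

theorem P_satisfies_KZ_level_one_general
    (N : ℕ)
    (z : Fin (2 * N) → ℂ) (hz : Function.Injective z)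
    (y : Fin 2 → Fin (2 * N) → ℂ) (i : Fin (2 * N)) :
    deriv (fun t => Pfun N (Function.update z i t) y) (z i) -
      (1 / 3) * ∑ j ∈ Finset.univ.erase i,
        Pfun N z (fun k a => y k (Equiv.swap i j a)) / (z i - z j) =
    Pfun N z y * ∑ j ∈ Finset.univ.erase i, (-2 / 3) / (z i - z j) := by
  have hP : HasDerivAt (fun t => Pfun N (Function.update z i t) y)
      (∑ I ∈ (univ : Finset (Fin (2 * N))).powersetCard N, (∏ a ∈ I, y 0 a) * (∏ b ∈ Iᶜ, y 1 b) *
        ((crossDiff z I)⁻¹ * ∑ j ∈ univ.erase i, (-2 / 3) / (z i - z j) +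
          1 / 3 * ∑ j ∈ univ.erase i, (crossDiff (z ∘ Equiv.swap i j) I)⁻¹ / (z i - z j)))
      (z i) := by
    refine HasDerivAt.fun_sum (A := fun I t =>
      (∏ a ∈ I, y 0 a) * (∏ b ∈ Iᶜ, y 1 b) / crossDiff (Function.update z i t) I) fun I hI => ?_
    have hI : #I = #Iᶜ := by
      rw [card_compl, Fintype.card_fin, mem_powersetCard_univ.1 hI]; omega
    simpa only [div_eq_mul_inv] using (hasDerivAt_inv_crossDiff_update hz hI i).const_mul _
  rw [hP.deriv]
  simp only [Pfun_comp_perm, Equiv.symm_swap]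
  simp only [Pfun_eq_sum_div_crossDiff]
  simp only [mul_add, sum_add_distrib, sum_div, mul_sum, sum_mul]
  rw [sum_comm (s := univ.erase i), sum_comm (s := univ.erase i)]
  ring_nf

/-- For `m = 2`, `P = P_z(N,N)` satisfies the level-one KZ equation in the form
`(∂/∂z_i - (1/3) ∑_{j≠i} Ω^{(i,j)}/(z_i - z_j)) P = P · ∑_{j≠i} (-2/3)/(z_i - z_j)`,
where `Ω^{(i,j)}` swaps the `y`-variables attached to the points `i` and `j`;
equivalently, `P̃ = P · ∏_{i<j} (z_i - z_j)^{2/3}` satisfies the KZ equations at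
level 1. -/
theorem P_satisfies_KZ_level_one
    (N : ℕ) (hN : 0 < N)
    (z : Fin (2 * N) → ℂ) (hz : Function.Injective z)
    (y : Fin 2 → Fin (2 * N) → ℂ) (i : Fin (2 * N)) :
    deriv (fun t => Pfun N (Function.update z i t) y) (z i) -
      (1 / 3) * ∑ j ∈ Finset.univ.erase i,
        Pfun N z (fun k a => y k (Equiv.swap i j a)) / (z i - z j) =
    Pfun N z y * ∑ j ∈ Finset.univ.erase i, (-2 / 3) / (z i - z j) :=
  P_satisfies_KZ_level_one_general N z hz y i

end
end

section
/- For any N and m, with R = R(z_1,...,z_N | z_{N+1},...,z_{2N} | ... | z_{(m−1)N+1},...,z_{mN}) the generalized resultant of the consecutive blocks of size N, the identity R · ∑_{j=N+1}^{mN} ∂_{1,j}(1/R) = (1−m) ∑_{j=2}^{N} 1/(z_1 − z_j) + 2 ∑_{j=N+1}^{mN} 1/(z_1 − z_j) holds, where ∂_{1,j}(f) = (f − f(z_1↔z_j))/(z_1 − z_j) is the divided difference operator exchanging z_1 and z_j. -/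
open Finset

section ResultantResidueHelpers
open Polynomial

lemma polyDerivProd {ι : Type*} [DecidableEq ι] (s : Finset ι) (f : ι → Polynomial ℂ) :
    derivative (∏ i ∈ s, f i) = ∑ b ∈ s, (∏ a ∈ s.erase b, f a) * derivative (f b) := by
  induction s using Finset.induction_on with
  | empty => simp
  | @insert a s ha ih =>
    have hsum : ∑ b ∈ s, f a * ((∏ x ∈ s.erase b, f x) * derivative (f b)) =
        ∑ b ∈ s, (∏ x ∈ (insert a s).erase b, f x) * derivative (f b) := by
      refine Finset.sum_congr rfl fun b hb => ?_
      rw [Finset.erase_insert_of_ne (by rintro rfl; exact ha hb), Finset.prod_insert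
        (fun h => ha (Finset.erase_subset _ _ h))]
      ring
    rw [Finset.prod_insert ha, derivative_mul, Finset.sum_insert ha, ih, Finset.erase_insert ha,
      Finset.mul_sum, hsum]
    ring

lemma derivC_mul (c : ℂ) (p : Polynomial ℂ) : derivative (C c * p) = C c * derivative p := by
  rw [derivative_mul, derivative_C, zero_mul, zero_add]

lemma deriv_basisDivisor (x y : ℂ) : derivative (Lagrange.basisDivisor x y) = C (x - y)⁻¹ := by
  rw [Lagrange.basisDivisor, derivC_mul, derivative_sub, derivative_X, derivative_C, sub_zero,
    mul_one]

lemma lagrange_key {ι : Type*} [DecidableEq ι] (v : ι → ℂ) (s : Finset ι) (x0 : ι)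
    (hx : x0 ∉ s) (hinj : Set.InjOn v (insert x0 s : Finset ι))
    (A : Polynomial ℂ) (hdeg : A.degree < s.card + 1) :
    eval (v x0) (derivative A) =
      eval (v x0) A * ∑ y ∈ s, (v x0 - v y)⁻¹ +
      ∑ y ∈ s, eval (v y) A *
        ((v y - v x0)⁻¹ * ∏ i ∈ s.erase y, ((v y - v i)⁻¹ * (v x0 - v i))) := by
  classical
  have hcard : (insert x0 s).card = s.card + 1 := card_insert_of_notMem hx
  have hvne : ∀ i ∈ s, v x0 ≠ v i := by
    intro i hi h
    exact hx ((hinj (by simp) (by simp [hi]) h) ▸ hi)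
  have hA : A = ∑ i ∈ insert x0 s, C (eval (v i) A) * Lagrange.basis (insert x0 s) v i := by
    have := Lagrange.eq_interpolate (v := v) (s := insert x0 s) hinj
      (by rw [hcard]; exact_mod_cast hdeg)
    conv_lhs => rw [this]
    rw [Lagrange.interpolate_apply]
  have hdA : derivative A = ∑ i ∈ insert x0 s,
      C (eval (v i) A) * derivative (Lagrange.basis (insert x0 s) v i) := by
    conv_lhs => rw [hA]
    rw [derivative_sum]
    exact Finset.sum_congr rfl fun i _ => derivC_mul _ _
  rw [hdA, eval_finset_sum, Finset.sum_insert hx]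
  congr 1
  · rw [eval_mul, eval_C]
    congr 1
    rw [Lagrange.basis, Finset.erase_insert hx, polyDerivProd, eval_finset_sum]
    refine Finset.sum_congr rfl fun b hb => ?_
    rw [eval_mul, deriv_basisDivisor, eval_C, eval_prod]
    rw [Finset.prod_congr rfl fun a ha => Lagrange.eval_basisDivisor_left_of_ne
      (hvne a (Finset.erase_subset _ _ ha))]
    rw [Finset.prod_const_one, one_mul]
  · refine Finset.sum_congr rfl fun y hy => ?_
    rw [eval_mul, eval_C]
    congr 1
    have hyx : y ≠ x0 := fun h => hx (h ▸ hy)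
    have hx' : x0 ∉ s.erase y := fun h => hx (Finset.erase_subset _ _ h)
    have hE : (insert x0 s).erase y = insert x0 (s.erase y) := by
      rw [Finset.erase_insert_of_ne hyx.symm]
    rw [Lagrange.basis, hE, polyDerivProd, eval_finset_sum, Finset.sum_insert hx']
    have hz : ∀ b ∈ s.erase y, eval (v x0)
        ((∏ a ∈ (insert x0 (s.erase y)).erase b, Lagrange.basisDivisor (v y) (v a)) *
          derivative (Lagrange.basisDivisor (v y) (v b))) = 0 := by
      intro b hb
      rw [eval_mul, eval_prod]
      have hmem : x0 ∈ (insert x0 (s.erase y)).erase b :=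
        Finset.mem_erase.mpr ⟨fun h => hx' (h ▸ hb), Finset.mem_insert_self _ _⟩
      rw [Finset.prod_eq_zero hmem (Lagrange.eval_basisDivisor_right), zero_mul]
    rw [Finset.sum_congr rfl hz, Finset.sum_const_zero, add_zero, Finset.erase_insert hx',
      eval_mul, deriv_basisDivisor, eval_C, eval_prod]
    rw [Finset.prod_congr rfl fun i hi => show eval (v x0) (Lagrange.basisDivisor (v y) (v i)) =
      (v y - v i)⁻¹ * (v x0 - v i) by
        rw [Lagrange.basisDivisor, eval_mul, eval_C, eval_sub, eval_X, eval_C]]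
    ring

lemma eval_deriv_prodXsub {ι : Type*} [DecidableEq ι] (v : ι → ℂ) (t : Finset ι) (x : ℂ)
    (hx : ∀ i ∈ t, x ≠ v i) :
    eval x (derivative (∏ i ∈ t, (X - C (v i)))) =
      (∏ i ∈ t, (x - v i)) * ∑ i ∈ t, (x - v i)⁻¹ := by
  rw [polyDerivProd, eval_finset_sum, Finset.mul_sum]
  refine Finset.sum_congr rfl fun b hb => ?_
  rw [eval_mul, derivative_sub, derivative_X, derivative_C, sub_zero, eval_one, mul_one, eval_prod]
  have h1 : ∀ a ∈ t.erase b, eval x (X - C (v a)) = x - v a := fun a _ => by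
    rw [eval_sub, eval_X, eval_C]
  rw [Finset.prod_congr rfl h1, ← Finset.mul_prod_erase t _ hb,
    mul_comm (x - v b), mul_assoc, mul_inv_cancel₀ (sub_ne_zero.mpr (hx b hb)), mul_one]

lemma core_residue {ι : Type*} [DecidableEq ι] (v : ι → ℂ) (s t : Finset ι) (x0 : ι)
    (hx : x0 ∉ s) (hinj : Set.InjOn v (insert x0 s : Finset ι))
    (hvt : ∀ i ∈ t, v x0 ≠ v i) (hcard : t.card ≤ s.card) :
    ∑ y ∈ s, (∏ u ∈ t, (v y - v u)) *
        ((v y - v x0)⁻¹ * ∏ i ∈ s.erase y, ((v y - v i)⁻¹ * (v x0 - v i)))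
      = (∏ u ∈ t, (v x0 - v u)) *
        ((∑ u ∈ t, (v x0 - v u)⁻¹) - ∑ y ∈ s, (v x0 - v y)⁻¹) := by
  classical
  have hdeg : (∏ u ∈ t, (X - C (v u))).degree < (s.card : WithBot ℕ) + 1 := by
    rw [Polynomial.degree_prod]
    simp only [Polynomial.degree_X_sub_C]
    rw [Finset.sum_const, nsmul_eq_mul, mul_one]
    exact_mod_cast Nat.lt_succ_of_le hcard
  have h1 := lagrange_key v s x0 hx hinj (∏ u ∈ t, (X - C (v u))) hdeg
  have h2 := eval_deriv_prodXsub v t (v x0) hvt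
  have hev : ∀ w : ℂ, eval w (∏ u ∈ t, (X - C (v u))) = ∏ u ∈ t, (w - v u) := by
    intro w
    rw [eval_prod]
    exact Finset.prod_congr rfl fun u _ => by rw [eval_sub, eval_X, eval_C]
  simp only [hev] at h1
  rw [h2] at h1
  linear_combination -h1

end ResultantResidueHelpers


lemma ratio_lemma (m N : ℕ) (hm : 0 < m) (hN : 0 < N)
    (z : Fin (m * N) → ℂ) (j : Fin (m * N)) (hj : N ≤ j.val) :
    (∏ a : Fin (m * N), ∏ b ∈ univ.filter (fun b : Fin (m * N) => a.val / N < b.val / N),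
        ((z ∘ Equiv.swap (⟨0, Nat.mul_pos hm hN⟩ : Fin (m * N)) j) a -
         (z ∘ Equiv.swap (⟨0, Nat.mul_pos hm hN⟩ : Fin (m * N)) j) b))
      * ((∏ d ∈ univ.filter (fun d : Fin (m * N) =>
            1 ≤ d.val / N ∧ d.val / N ≤ j.val / N), (z ⟨0, Nat.mul_pos hm hN⟩ - z d))
         * ∏ c ∈ univ.filter (fun c : Fin (m * N) =>
            c ≠ ⟨0, Nat.mul_pos hm hN⟩ ∧ c.val / N < j.val / N), (z c - z j))
    = (∏ a : Fin (m * N), ∏ b ∈ univ.filter (fun b : Fin (m * N) => a.val / N < b.val / N),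
        (z a - z b))
      * ((∏ d ∈ insert (⟨0, Nat.mul_pos hm hN⟩ : Fin (m * N))
            ((univ.filter (fun d : Fin (m * N) =>
              1 ≤ d.val / N ∧ d.val / N ≤ j.val / N)).erase j), (z j - z d))
         * ∏ c ∈ univ.filter (fun c : Fin (m * N) =>
            c ≠ ⟨0, Nat.mul_pos hm hN⟩ ∧ c.val / N < j.val / N), (z c - z ⟨0, Nat.mul_pos hm hN⟩)) := by
  classical
  set e0 : Fin (m * N) := ⟨0, Nat.mul_pos hm hN⟩ with he0
  set k := j.val / N with hk
  set σ := Equiv.swap e0 j with hσdef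
  have he0v : (e0 : ℕ) = 0 := rfl
  have hk1 : 1 ≤ k := (Nat.one_le_div_iff hN).mpr hj
  have he0j : e0 ≠ j := by
    intro h
    have : (e0 : ℕ) = (j : ℕ) := by rw [h]
    rw [he0v] at this
    omega
  have hσ0 : σ e0 = j := Equiv.swap_apply_left _ _
  have hσj : σ j = e0 := Equiv.swap_apply_right _ _
  have hσo : ∀ x : Fin (m * N), x ≠ e0 → x ≠ j → σ x = x := fun x h1 h2 =>
    Equiv.swap_apply_of_ne_of_ne h1 h2
  have hσσ : ∀ x : Fin (m * N), σ (σ x) = x := fun x => Equiv.swap_apply_self _ _ x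
  set P : Finset (Fin (m * N) × Fin (m * N)) :=
    (univ ×ˢ univ).filter (fun p : Fin (m * N) × Fin (m * N) => p.1.val / N < p.2.val / N) with hP
  set P' : Finset (Fin (m * N) × Fin (m * N)) :=
    (univ ×ˢ univ).filter (fun p : Fin (m * N) × Fin (m * N) => (σ p.1).val / N < (σ p.2).val / N) with hP'
  have dp : ∀ w : Fin (m * N) → ℂ,
      (∏ a : Fin (m * N), ∏ b ∈ univ.filter (fun b : Fin (m * N) => a.val / N < b.val / N), (w a - w b))
      = ∏ p ∈ P, (w p.1 - w p.2) := by
    intro w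
    rw [hP, Finset.prod_filter,
      Finset.prod_product' (f := fun a b : Fin (m * N) =>
        if (a : ℕ) / N < (b : ℕ) / N then w a - w b else 1)]
    exact Finset.prod_congr rfl fun a _ => (Finset.prod_filter _ _)
  have hmem1 : ∀ a b : Fin (m * N), ((a, b) ∈ P ↔ a.val / N < b.val / N) := by
    intro a b; simp [hP]
  have hmem2 : ∀ a b : Fin (m * N), ((a, b) ∈ P' ↔ (σ a).val / N < (σ b).val / N) := by
    intro a b; simp [hP']
  have hKa : ∀ a : Fin (m * N), a = j → (a : ℕ) / N = (j : ℕ) / N := fun a h => by rw [h]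
  have hchar1 : ∀ a b : Fin (m * N), ((a, b) ∈ P \ P') ↔
      ((a = e0 ∧ 1 ≤ (b : ℕ) / N ∧ (b : ℕ) / N ≤ (j : ℕ) / N) ∨
       (b = j ∧ a ≠ e0 ∧ (a : ℕ) / N < (j : ℕ) / N)) := by
    intro a b
    rw [Finset.mem_sdiff, hmem1, hmem2]
    by_cases hae : a = e0
    · subst hae
      rw [hσ0]
      by_cases hbj : b = j
      · have hσb : σ b = e0 := by rw [hbj, hσj]
        rw [hσb]
        simp only [he0v, Nat.zero_div]
        constructor
        · intro _
          exact Or.inl ⟨trivial, by rw [hKa b hbj]; exact hk1, (hKa b hbj).le⟩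
        · intro _
          exact ⟨by rw [hKa b hbj]; exact hk1, Nat.not_lt_zero _⟩
      · by_cases hbe : b = e0
        · subst hbe
          simp [he0v, Nat.zero_div, hbj]
        · rw [hσo b hbe hbj]
          simp only [he0v, Nat.zero_div, hbj, false_and, or_false, true_and]
          constructor
          · rintro ⟨h1, h2⟩
            exact ⟨h1, Nat.le_of_not_lt h2⟩
          · rintro ⟨h1, h2⟩
            exact ⟨h1, Nat.not_lt.mpr h2⟩
    · by_cases haj : a = j
      · have hσa : σ a = e0 := by rw [haj, hσj]
        have hav : (a : ℕ) / N = (j : ℕ) / N := hKa a haj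
        rw [hσa]
        simp only [he0v, Nat.zero_div]
        refine iff_of_false ?_ ?_
        · rintro ⟨h1, h2⟩
          by_cases hbe : b = e0
          · rw [hbe, he0v, Nat.zero_div] at h1
            exact Nat.not_lt_zero _ h1
          · by_cases hbj : b = j
            · rw [hav, hKa b hbj] at h1
              exact lt_irrefl _ h1
            · rw [hσo b hbe hbj] at h2
              exact h2 (Nat.lt_of_le_of_lt (Nat.zero_le _) h1)
        · rintro (⟨h1, _⟩ | ⟨_, _, h1⟩)
          · exact hae h1
          · rw [hav] at h1
            exact lt_irrefl _ h1
      · rw [hσo a hae haj]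
        by_cases hbj : b = j
        · have hσb : σ b = e0 := by rw [hbj, hσj]
          rw [hσb]
          simp only [he0v, Nat.zero_div, hae, false_and, false_or]
          constructor
          · rintro ⟨h1, _⟩
            exact ⟨hbj, hae, by rw [← hKa b hbj]; exact h1⟩
          · rintro ⟨_, _, h1⟩
            exact ⟨by rw [hKa b hbj]; exact h1, Nat.not_lt_zero _⟩
        · by_cases hbe : b = e0
          · subst hbe
            simp [he0v, Nat.zero_div, hae, hbj]
          · rw [hσo b hbe hbj]
            simp [hae, hbj]
  have hσae0 : ∀ a : Fin (m * N), (σ a = e0 ↔ a = j) := by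
    intro a
    constructor
    · intro h
      have := congrArg σ h
      rwa [hσσ, hσ0] at this
    · intro h
      rw [h, hσj]
  have hσbj : ∀ b : Fin (m * N), (σ b = j ↔ b = e0) := by
    intro b
    constructor
    · intro h
      have := congrArg σ h
      rwa [hσσ, hσj] at this
    · intro h
      rw [h, hσ0]
  have hchar2 : ∀ a b : Fin (m * N), ((a, b) ∈ P' \ P) ↔
      ((σ a = e0 ∧ 1 ≤ ((σ b : Fin (m * N)) : ℕ) / N ∧ ((σ b : Fin (m * N)) : ℕ) / N ≤ (j : ℕ) / N) ∨
       (σ b = j ∧ σ a ≠ e0 ∧ ((σ a : Fin (m * N)) : ℕ) / N < (j : ℕ) / N)) := by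
    intro a b
    rw [← hchar1 (σ a) (σ b), Finset.mem_sdiff, Finset.mem_sdiff, hmem1, hmem2, hmem1, hmem2,
      hσσ, hσσ]
  set F1 : Finset (Fin (m * N)) :=
    univ.filter (fun d : Fin (m * N) => 1 ≤ (d : ℕ) / N ∧ (d : ℕ) / N ≤ (j : ℕ) / N) with hF1
  set F2 : Finset (Fin (m * N)) :=
    univ.filter (fun c : Fin (m * N) => c ≠ e0 ∧ (c : ℕ) / N < (j : ℕ) / N) with hF2
  set G1 : Finset (Fin (m * N)) := insert e0 (F1.erase j) with hG1
  have he0F1 : (e0 : Fin (m * N)) ∉ F1 := by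
    simp [hF1, he0v, Nat.zero_div]
  have hjF2 : j ∉ F2 := by
    simp [hF2]
  have hset1 : P \ P' = F1.image (fun d => ((e0 : Fin (m * N)), d)) ∪
      F2.image (fun c => (c, j)) := by
    ext ⟨a, b⟩
    rw [hchar1 a b]
    simp only [Finset.mem_union, Finset.mem_image, hF1, hF2, Finset.mem_filter, Finset.mem_univ,
      true_and, Prod.mk.injEq]
    constructor
    · rintro (⟨rfl, h1, h2⟩ | ⟨rfl, h1, h2⟩)
      · exact Or.inl ⟨b, ⟨h1, h2⟩, rfl, rfl⟩
      · exact Or.inr ⟨a, ⟨h1, h2⟩, rfl, rfl⟩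
    · rintro (⟨d, hd, rfl, rfl⟩ | ⟨c, hc, rfl, rfl⟩)
      · exact Or.inl ⟨rfl, hd⟩
      · exact Or.inr ⟨rfl, hc⟩
  have hset2 : P' \ P = G1.image (fun d => (j, d)) ∪
      F2.image (fun c => (c, (e0 : Fin (m * N)))) := by
    ext ⟨a, b⟩
    rw [hchar2 a b]
    simp only [Finset.mem_union, Finset.mem_image, hG1, hF1, hF2, Finset.mem_insert,
      Finset.mem_erase, Finset.mem_filter, Finset.mem_univ, true_and, Prod.mk.injEq]
    constructor
    · rintro (⟨ha, h1, h2⟩ | ⟨hb, ha, h1⟩)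
      · rw [hσae0 a] at ha
        by_cases hbe : b = e0
        · exact Or.inl ⟨b, Or.inl hbe, ha.symm, rfl⟩
        · by_cases hbj : b = j
          · rw [hbj, hσj, he0v, Nat.zero_div] at h1
            omega
          · rw [hσo b hbe hbj] at h1 h2
            exact Or.inl ⟨b, Or.inr ⟨hbj, h1, h2⟩, ha.symm, rfl⟩
      · rw [hσbj b] at hb
        have ha' : a ≠ j := fun h => ha ((hσae0 a).mpr h)
        by_cases hae : a = e0
        · rw [hae, hσ0] at h1
          omega
        · rw [hσo a hae ha'] at h1
          exact Or.inr ⟨a, ⟨hae, h1⟩, rfl, hb.symm⟩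
    · rintro (⟨d, hd, rfl, rfl⟩ | ⟨c, ⟨hce, hck⟩, rfl, rfl⟩)
      · left
        refine ⟨hσj, ?_⟩
        rcases hd with rfl | ⟨hdj, h1, h2⟩
        · rw [hσ0]
          exact ⟨hk1, le_refl _⟩
        · have hde : d ≠ e0 := by
            intro h
            rw [h, he0v, Nat.zero_div] at h1
            omega
          rw [hσo d hde hdj]
          exact ⟨h1, h2⟩
      · right
        have hcj : c ≠ j := by
          intro h
          rw [h] at hck
          omega
        refine ⟨hσ0, ?_, ?_⟩
        · rw [hσo c hce hcj]
          exact hce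
        · rw [hσo c hce hcj]
          exact hck
  have hprod1 : ∏ p ∈ P \ P', (z p.1 - z p.2) =
      (∏ d ∈ F1, (z e0 - z d)) * ∏ c ∈ F2, (z c - z j) := by
    rw [hset1, Finset.prod_union, Finset.prod_image, Finset.prod_image]
    · intro x _ y _ h
      exact congrArg Prod.fst h
    · intro x _ y _ h
      exact congrArg Prod.snd h
    · rw [Finset.disjoint_left]
      rintro p hp hq
      rw [Finset.mem_image] at hp hq
      obtain ⟨d, hd, rfl⟩ := hp
      obtain ⟨c, hc, hcd⟩ := hq
      rw [hF2, Finset.mem_filter] at hc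
      exact hc.2.1 (congrArg Prod.fst hcd)
  have hprod2 : ∏ p ∈ P' \ P, (z p.1 - z p.2) =
      (∏ d ∈ G1, (z j - z d)) * ∏ c ∈ F2, (z c - z e0) := by
    rw [hset2, Finset.prod_union, Finset.prod_image, Finset.prod_image]
    · intro x _ y _ h
      exact congrArg Prod.fst h
    · intro x _ y _ h
      exact congrArg Prod.snd h
    · rw [Finset.disjoint_left]
      rintro p hp hq
      rw [Finset.mem_image] at hp hq
      obtain ⟨d, hd, rfl⟩ := hp
      obtain ⟨c, hc, hcd⟩ := hq
      rw [hF2, Finset.mem_filter] at hc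
      have : c = j := congrArg Prod.fst hcd
      rw [this] at hc
      exact absurd hc.2.2 (lt_irrefl _)
  have hre : ∏ p ∈ P, ((z ∘ σ) p.1 - (z ∘ σ) p.2) = ∏ p ∈ P', (z p.1 - z p.2) := by
    refine Finset.prod_nbij' (fun p => (σ p.1, σ p.2)) (fun p => (σ p.1, σ p.2))
      ?_ ?_ ?_ ?_ ?_
    · intro p hp
      simp only [hP, hP', Finset.mem_filter, Finset.mem_product, Finset.mem_univ, true_and,
        hσσ] at hp ⊢
      exact hp
    · intro p hp
      simp only [hP, hP', Finset.mem_filter, Finset.mem_product, Finset.mem_univ, true_and,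
        hσσ] at hp ⊢
      exact hp
    · intro p _
      simp [hσσ]
    · intro p _
      simp [hσσ]
    · intro p _
      rfl
  have hsplit : ∀ Q R : Finset (Fin (m * N) × Fin (m * N)),
      ∏ p ∈ Q, (z p.1 - z p.2) =
        (∏ p ∈ Q \ R, (z p.1 - z p.2)) * ∏ p ∈ Q ∩ R, (z p.1 - z p.2) := by
    intro Q R
    rw [← Finset.prod_sdiff (Finset.inter_subset_left (s₁ := Q) (s₂ := R)),
      Finset.sdiff_inter_self_left]
  rw [dp (z ∘ σ), dp z, hre, hsplit P' P, hsplit P P', Finset.inter_comm P' P, hprod1, hprod2]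
  ring

theorem term_lemma (m N : ℕ) (hm : 0 < m) (hN : 0 < N)
    (z : Fin (m * N) → ℂ) (hz : Function.Injective z)
    (R : (Fin (m * N) → ℂ) → ℂ)
    (hR : ∀ w, R w = ∏ a : Fin (m * N),
      ∏ b ∈ Finset.univ.filter (fun b : Fin (m * N) => (a : ℕ) / N < (b : ℕ) / N),
        (w a - w b))
    (j : Fin (m * N)) (hj : N ≤ j.val) :
    R z * (((R z)⁻¹ - (R (z ∘ Equiv.swap (⟨0, Nat.mul_pos hm hN⟩ : Fin (m * N)) j))⁻¹) /
        (z ⟨0, Nat.mul_pos hm hN⟩ - z j)) =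
      (z ⟨0, Nat.mul_pos hm hN⟩ - z j)⁻¹ -
        (∏ u ∈ univ.filter (fun c : Fin (m * N) => 1 ≤ (c : ℕ) ∧ (c : ℕ) < N),
            (z ⟨0, Nat.mul_pos hm hN⟩ - z u))⁻¹ *
        ((∏ u ∈ univ.filter (fun c : Fin (m * N) => 1 ≤ (c : ℕ) ∧ (c : ℕ) < N), (z j - z u)) *
          ((z j - z ⟨0, Nat.mul_pos hm hN⟩)⁻¹ *
            ∏ i ∈ (univ.filter (fun d : Fin (m * N) => (d : ℕ) / N = (j : ℕ) / N)).erase j,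
              ((z j - z i)⁻¹ * (z ⟨0, Nat.mul_pos hm hN⟩ - z i)))) := by
  classical
  set e0 : Fin (m * N) := ⟨0, Nat.mul_pos hm hN⟩ with he0
  set σ := Equiv.swap e0 j with hσdef
  have he0v : (e0 : ℕ) = 0 := rfl
  have hk1 : 1 ≤ (j : ℕ) / N := (Nat.one_le_div_iff hN).mpr hj
  have he0j : e0 ≠ j := by
    intro h
    have : (e0 : ℕ) = (j : ℕ) := by rw [h]
    rw [he0v] at this
    omega
  have hzne : ∀ a b : Fin (m * N), a ≠ b → z a - z b ≠ 0 := fun a b h =>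
    sub_ne_zero.mpr (fun hq => h (hz hq))
  have hR0 : R z ≠ 0 := by
    rw [hR]
    refine Finset.prod_ne_zero_iff.mpr fun a _ => Finset.prod_ne_zero_iff.mpr fun b hb => ?_
    refine hzne a b fun h => ?_
    rw [Finset.mem_filter] at hb
    rw [h] at hb
    exact lt_irrefl _ hb.2
  have hRσ0 : R (z ∘ σ) ≠ 0 := by
    rw [hR]
    refine Finset.prod_ne_zero_iff.mpr fun a _ => Finset.prod_ne_zero_iff.mpr fun b hb => ?_
    refine sub_ne_zero.mpr fun hq => ?_
    rw [Finset.mem_filter] at hb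
    have : a = b := σ.injective (hz hq)
    rw [this] at hb
    exact lt_irrefl _ hb.2
  -- named finsets
  set F1 : Finset (Fin (m * N)) :=
    univ.filter (fun d : Fin (m * N) => 1 ≤ (d : ℕ) / N ∧ (d : ℕ) / N ≤ (j : ℕ) / N) with hF1
  set F2 : Finset (Fin (m * N)) :=
    univ.filter (fun c : Fin (m * N) => c ≠ e0 ∧ (c : ℕ) / N < (j : ℕ) / N) with hF2
  set S1 : Finset (Fin (m * N)) :=
    (univ.filter (fun d : Fin (m * N) => (d : ℕ) / N = (j : ℕ) / N)).erase j with hS1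
  set S2 : Finset (Fin (m * N)) :=
    univ.filter (fun c : Fin (m * N) => 1 ≤ (c : ℕ) ∧ (c : ℕ) < N) with hS2
  set S3 : Finset (Fin (m * N)) :=
    univ.filter (fun d : Fin (m * N) => 1 ≤ (d : ℕ) / N ∧ (d : ℕ) / N < (j : ℕ) / N) with hS3
  have hjF1 : j ∈ F1 := by
    simp [hF1, hk1]
  have he0F1e : e0 ∉ F1.erase j := by
    simp [hF1, he0v, Nat.zero_div]
  have hsplit1 : F1.erase j = S1 ∪ S3 := by
    ext d
    simp only [hF1, hS1, hS3, Finset.mem_erase, Finset.mem_union, Finset.mem_filter,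
      Finset.mem_univ, true_and]
    constructor
    · rintro ⟨hdj, h1, h2⟩
      rcases lt_or_eq_of_le h2 with h | h
      · exact Or.inr ⟨h1, h⟩
      · exact Or.inl ⟨hdj, h⟩
    · rintro (⟨hdj, h⟩ | ⟨h1, h2⟩)
      · exact ⟨hdj, h ▸ hk1, le_of_eq h⟩
      · refine ⟨fun hd => ?_, h1, le_of_lt h2⟩
        rw [hd] at h2
        exact lt_irrefl _ h2
  have hdisj13 : Disjoint S1 S3 := by
    rw [Finset.disjoint_left]
    intro d hd1 hd3
    rw [hS1, Finset.mem_erase, Finset.mem_filter] at hd1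
    rw [hS3, Finset.mem_filter] at hd3
    rw [hd1.2.2] at hd3
    exact lt_irrefl _ hd3.2.2
  have hsplit2 : F2 = S2 ∪ S3 := by
    ext c
    simp only [hF2, hS2, hS3, Finset.mem_union, Finset.mem_filter, Finset.mem_univ, true_and]
    constructor
    · rintro ⟨hce, h1⟩
      by_cases hcn : (c : ℕ) < N
      · refine Or.inl ⟨?_, hcn⟩
        rcases Nat.eq_zero_or_pos (c : ℕ) with h | h
        · exact absurd (Fin.ext (h.trans he0v.symm)) hce
        · exact h
      · refine Or.inr ⟨?_, h1⟩
        rw [Nat.one_le_div_iff hN]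
        omega
    · rintro (⟨h1, h2⟩ | ⟨h1, h2⟩)
      · refine ⟨fun hc => ?_, ?_⟩
        · rw [hc, he0v] at h1
          omega
        · calc (c : ℕ) / N = 0 := Nat.div_eq_of_lt h2
          _ < (j : ℕ) / N := hk1
      · refine ⟨fun hc => ?_, h2⟩
        rw [hc, he0v, Nat.zero_div] at h1
        omega
  have hdisj23 : Disjoint S2 S3 := by
    rw [Finset.disjoint_left]
    intro c hc2 hc3
    rw [hS2, Finset.mem_filter] at hc2
    rw [hS3, Finset.mem_filter] at hc3
    rw [Nat.div_eq_of_lt hc2.2.2] at hc3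
    omega
  set X : ℂ := (∏ d ∈ F1, (z e0 - z d)) * ∏ c ∈ F2, (z c - z j) with hXdef
  set Y : ℂ := (∏ d ∈ insert e0 (F1.erase j), (z j - z d)) * ∏ c ∈ F2, (z c - z e0) with hYdef
  have hXY : R (z ∘ σ) * X = R z * Y := by
    rw [hR (z ∘ σ), hR z]
    exact ratio_lemma m N hm hN z j hj
  have hX0 : X ≠ 0 := by
    refine mul_ne_zero (Finset.prod_ne_zero_iff.mpr fun d hd => ?_)
      (Finset.prod_ne_zero_iff.mpr fun c hc => ?_)
    · rw [hF1, Finset.mem_filter] at hd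
      refine hzne e0 d fun h => ?_
      rw [← h, he0v, Nat.zero_div] at hd
      omega
    · rw [hF2, Finset.mem_filter] at hc
      refine hzne c j fun h => ?_
      rw [h] at hc
      exact lt_irrefl _ hc.2.2
  have hY0 : Y ≠ 0 := by
    refine mul_ne_zero (Finset.prod_ne_zero_iff.mpr fun d hd => ?_)
      (Finset.prod_ne_zero_iff.mpr fun c hc => ?_)
    · rw [Finset.mem_insert] at hd
      rcases hd with rfl | hd
      · exact hzne j e0 (Ne.symm he0j)
      · rw [Finset.mem_erase] at hd
        exact hzne j d (Ne.symm hd.1)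
    · rw [hF2, Finset.mem_filter] at hc
      exact hzne c e0 hc.2.1
  have hprodF1 : ∀ f : Fin (m * N) → ℂ, ∏ d ∈ F1, f d = f j * (∏ d ∈ S1, f d) * ∏ d ∈ S3, f d := by
    intro f
    rw [← Finset.mul_prod_erase F1 f hjF1, hsplit1, Finset.prod_union hdisj13, mul_assoc]
  have hprodF2 : ∀ f : Fin (m * N) → ℂ, ∏ c ∈ F2, f c = (∏ c ∈ S2, f c) * ∏ c ∈ S3, f c := by
    intro f
    rw [hsplit2, Finset.prod_union hdisj23]
  have hprodG1 : ∀ f : Fin (m * N) → ℂ,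
      ∏ d ∈ insert e0 (F1.erase j), f d = f e0 * (∏ d ∈ S1, f d) * ∏ d ∈ S3, f d := by
    intro f
    rw [Finset.prod_insert he0F1e, hsplit1, Finset.prod_union hdisj13, mul_assoc]
  set Q : ℂ := (∏ i ∈ S1, ((z e0 - z i) * (z j - z i)⁻¹)) *
      ∏ c ∈ S2, ((z j - z c) * (z e0 - z c)⁻¹) with hQdef
  have m1 : (∏ i ∈ S1, ((z e0 - z i) * (z j - z i)⁻¹)) * ∏ i ∈ S1, (z j - z i) =
      ∏ i ∈ S1, (z e0 - z i) := by
    rw [← Finset.prod_mul_distrib]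
    refine Finset.prod_congr rfl fun i hi => ?_
    have hij : z j - z i ≠ 0 := by
      rw [hS1, Finset.mem_erase] at hi
      exact hzne j i (Ne.symm hi.1)
    field_simp
  have m2 : (∏ c ∈ S2, ((z j - z c) * (z e0 - z c)⁻¹)) * ∏ c ∈ S2, (z c - z e0) =
      ∏ c ∈ S2, (z c - z j) := by
    rw [← Finset.prod_mul_distrib]
    refine Finset.prod_congr rfl fun c hc => ?_
    have hce : z e0 - z c ≠ 0 := by
      refine hzne e0 c fun h => ?_
      rw [hS2, Finset.mem_filter, ← h, he0v] at hc
      omega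
    field_simp
    ring
  have m3 : (∏ d ∈ S3, (z j - z d)) * ∏ d ∈ S3, (z d - z e0) =
      (∏ d ∈ S3, (z e0 - z d)) * ∏ d ∈ S3, (z d - z j) := by
    rw [← Finset.prod_mul_distrib, ← Finset.prod_mul_distrib]
    refine Finset.prod_congr rfl fun d _ => ?_
    ring
  have hXQ : X = -Q * Y := by
    have hXe : X = (z e0 - z j) * ((∏ d ∈ S1, (z e0 - z d)) * ∏ d ∈ S3, (z e0 - z d)) *
        ((∏ c ∈ S2, (z c - z j)) * ∏ c ∈ S3, (z c - z j)) := by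
      rw [hXdef, hprodF1 (fun d => z e0 - z d), hprodF2 (fun c => z c - z j)]
      ring
    have hYe : Y = (z j - z e0) * ((∏ d ∈ S1, (z j - z d)) * ∏ d ∈ S3, (z j - z d)) *
        ((∏ c ∈ S2, (z c - z e0)) * ∏ c ∈ S3, (z c - z e0)) := by
      rw [hYdef, hprodG1 (fun d => z j - z d), hprodF2 (fun c => z c - z e0)]
      ring
    have hexp : -Q * Y = (z e0 - z j) *
        (((∏ i ∈ S1, ((z e0 - z i) * (z j - z i)⁻¹)) * ∏ i ∈ S1, (z j - z i)) *
         ((∏ c ∈ S2, ((z j - z c) * (z e0 - z c)⁻¹)) * ∏ c ∈ S2, (z c - z e0)) *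
         ((∏ d ∈ S3, (z j - z d)) * ∏ d ∈ S3, (z d - z e0))) := by
      rw [hYe, hQdef]
      have : ∀ c : Fin (m * N), z c - z e0 = z c - z e0 := fun _ => rfl
      ring
    rw [hexp, m1, m2, m3, hXe]
    ring
  have hinv : (R (z ∘ σ))⁻¹ = (R z)⁻¹ * (X * Y⁻¹) := by
    rw [hXQ] at hXY ⊢
    field_simp
    field_simp at hXY
    linear_combination -hXY
  rw [hinv]
  have hQX : X * Y⁻¹ = -Q := by
    rw [hXQ, mul_assoc, mul_inv_cancel₀ hY0, mul_one]
  rw [hQX]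
  have he0jz : z e0 - z j ≠ 0 := hzne e0 j he0j
  have hA0 : (∏ u ∈ S2, (z e0 - z u)) ≠ 0 := by
    refine Finset.prod_ne_zero_iff.mpr fun u hu => hzne e0 u fun h => ?_
    rw [hS2, Finset.mem_filter, ← h, he0v] at hu
    omega
  -- final algebraic identity
  have hQexp : Q * (z e0 - z j)⁻¹ = -((∏ u ∈ S2, (z e0 - z u))⁻¹ *
      ((∏ u ∈ S2, (z j - z u)) * ((z j - z e0)⁻¹ *
        ∏ i ∈ S1, ((z j - z i)⁻¹ * (z e0 - z i))))) := by
    have e1 : ∏ i ∈ S1, ((z e0 - z i) * (z j - z i)⁻¹) =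
        ∏ i ∈ S1, ((z j - z i)⁻¹ * (z e0 - z i)) :=
      Finset.prod_congr rfl fun i _ => mul_comm _ _
    have e2 : ∏ c ∈ S2, ((z j - z c) * (z e0 - z c)⁻¹) =
        (∏ c ∈ S2, (z j - z c)) * (∏ c ∈ S2, (z e0 - z c))⁻¹ := by
      rw [Finset.prod_mul_distrib, Finset.prod_inv_distrib]
    have e3 : (z e0 - z j)⁻¹ = -(z j - z e0)⁻¹ := by
      rw [show z e0 - z j = -(z j - z e0) by ring, neg_inv]
    rw [hQdef, e1, e2, e3]
    ring
  rw [div_eq_mul_inv]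
  have hstep : R z * (((R z)⁻¹ - (R z)⁻¹ * -Q) * (z e0 - z j)⁻¹) =
      (R z * (R z)⁻¹) * ((1 + Q) * (z e0 - z j)⁻¹) := by ring
  rw [hstep, mul_inv_cancel₀ hR0, one_mul, add_mul, one_mul, hQexp]
  ring

/-- The residue identity for the generalized resultant of consecutive blocks of
size `N`: with `R = R(z_1,…,z_N | z_{N+1},…,z_{2N} | … | z_{(m-1)N+1},…,z_{mN})`
(0-based: block of index `a` is `a / N`),
`R · ∑_{j=N+1}^{mN} ∂_{1,j}(1/R) = (1-m) ∑_{j=2}^{N} 1/(z_1-z_j) + 2 ∑_{j=N+1}^{mN} 1/(z_1-z_j)`,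
where `∂_{1,j} f = (f - f(z_1 ↔ z_j))/(z_1 - z_j)`. -/
theorem resultant_residue_identity
    (m N : ℕ) (hm : 0 < m) (hN : 0 < N)
    (z : Fin (m * N) → ℂ) (hz : Function.Injective z)
    (R : (Fin (m * N) → ℂ) → ℂ)
    (hR : ∀ w, R w = ∏ a : Fin (m * N),
      ∏ b ∈ Finset.univ.filter (fun b : Fin (m * N) => (a : ℕ) / N < (b : ℕ) / N),
        (w a - w b)) :
    R z * ∑ j ∈ Finset.univ.filter (fun j : Fin (m * N) => N ≤ (j : ℕ)),
        ((R z)⁻¹ - (R (z ∘ Equiv.swap (⟨0, Nat.mul_pos hm hN⟩ : Fin (m * N)) j))⁻¹) /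
          (z ⟨0, Nat.mul_pos hm hN⟩ - z j) =
      (1 - (m : ℂ)) * ∑ j ∈ Finset.univ.filter
          (fun j : Fin (m * N) => 1 ≤ (j : ℕ) ∧ (j : ℕ) < N),
          1 / (z ⟨0, Nat.mul_pos hm hN⟩ - z j) +
        2 * ∑ j ∈ Finset.univ.filter (fun j : Fin (m * N) => N ≤ (j : ℕ)),
          1 / (z ⟨0, Nat.mul_pos hm hN⟩ - z j) := by
  classical
  set e0 : Fin (m * N) := ⟨0, Nat.mul_pos hm hN⟩ with he0
  have he0v : (e0 : ℕ) = 0 := rfl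
  have hzne : ∀ a b : Fin (m * N), a ≠ b → z a - z b ≠ 0 := fun a b h =>
    sub_ne_zero.mpr (fun hq => h (hz hq))
  set S2 : Finset (Fin (m * N)) :=
    univ.filter (fun c : Fin (m * N) => 1 ≤ (c : ℕ) ∧ (c : ℕ) < N) with hS2
  set A : ℂ := ∏ u ∈ S2, (z e0 - z u) with hA
  have hA0 : A ≠ 0 := by
    refine Finset.prod_ne_zero_iff.mpr fun u hu => hzne e0 u fun h => ?_
    rw [hS2, Finset.mem_filter, ← h, he0v] at hu
    omega
  have hfib : ∀ f : Fin (m * N) → ℂ,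
      ∑ j ∈ univ.filter (fun j : Fin (m * N) => N ≤ (j : ℕ)), f j =
      ∑ k ∈ Finset.Ico 1 m, ∑ j ∈ univ.filter (fun d : Fin (m * N) => (d : ℕ) / N = k), f j := by
    intro f
    have hmap : ∀ j ∈ univ.filter (fun j : Fin (m * N) => N ≤ (j : ℕ)),
        (j : ℕ) / N ∈ Finset.Ico 1 m := by
      intro j hjm
      rw [Finset.mem_filter] at hjm
      rw [Finset.mem_Ico]
      exact ⟨(Nat.one_le_div_iff hN).mpr hjm.2, (Nat.div_lt_iff_lt_mul hN).mpr j.isLt⟩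
    rw [← Finset.sum_fiberwise_of_maps_to hmap f]
    refine Finset.sum_congr rfl fun k hk => ?_
    rw [Finset.mem_Ico] at hk
    refine Finset.sum_congr ?_ fun _ _ => rfl
    rw [Finset.filter_filter]
    refine Finset.filter_congr fun d _ => ?_
    constructor
    · rintro ⟨_, h2⟩
      exact h2
    · intro h
      refine ⟨?_, h⟩
      rw [← Nat.one_le_div_iff hN, h]
      exact hk.1
  have hBk : ∀ k, 1 ≤ k → k < m →
      ∑ j ∈ univ.filter (fun d : Fin (m * N) => (d : ℕ) / N = k),
        ((z e0 - z j)⁻¹ - A⁻¹ *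
          ((∏ u ∈ S2, (z j - z u)) * ((z j - z e0)⁻¹ *
            ∏ i ∈ (univ.filter (fun d : Fin (m * N) => (d : ℕ) / N = (j : ℕ) / N)).erase j,
              ((z j - z i)⁻¹ * (z e0 - z i)))))
      = 2 * (∑ j ∈ univ.filter (fun d : Fin (m * N) => (d : ℕ) / N = k), (z e0 - z j)⁻¹) -
          ∑ u ∈ S2, (z e0 - z u)⁻¹ := by
    intro k hk1 hkm
    set Bk : Finset (Fin (m * N)) :=
      univ.filter (fun d : Fin (m * N) => (d : ℕ) / N = k) with hBkdef
    have he0Bk : e0 ∉ Bk := by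
      rw [hBkdef, Finset.mem_filter, he0v]
      push_neg
      intro
      rw [Nat.zero_div]
      omega
    have hcard : S2.card ≤ Bk.card := by
      refine Finset.card_le_card_of_injOn
        (fun c => (⟨(k * N + (c : ℕ)) % (m * N), Nat.mod_lt _ (Nat.mul_pos hm hN)⟩ : Fin (m * N)))
        ?_ ?_
      · intro c hc
        rw [Finset.mem_coe] at hc ⊢
        rw [hS2, Finset.mem_filter] at hc
        have h1 : k * N + (c : ℕ) < (k + 1) * N := by
          rw [add_mul, one_mul]
          omega
        have h2 : (k + 1) * N ≤ m * N := Nat.mul_le_mul_right N hkm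
        have h3 : k * N + (c : ℕ) < m * N := lt_of_lt_of_le h1 h2
        rw [hBkdef, Finset.mem_filter]
        refine ⟨Finset.mem_univ _, ?_⟩
        show ((k * N + (c : ℕ)) % (m * N)) / N = k
        rw [Nat.mod_eq_of_lt h3, mul_comm k N, Nat.mul_add_div hN, Nat.div_eq_of_lt hc.2.2,
          add_zero]
      · intro c1 hc1 c2 hc2 hf
        rw [hS2, Finset.coe_filter, Set.mem_setOf_eq] at hc1 hc2
        have h1 : k * N + (c1 : ℕ) < m * N := by
          have : k * N + (c1 : ℕ) < (k + 1) * N := by rw [add_mul, one_mul]; omega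
          exact lt_of_lt_of_le this (Nat.mul_le_mul_right N hkm)
        have h2 : k * N + (c2 : ℕ) < m * N := by
          have : k * N + (c2 : ℕ) < (k + 1) * N := by rw [add_mul, one_mul]; omega
          exact lt_of_lt_of_le this (Nat.mul_le_mul_right N hkm)
        have := congrArg Fin.val hf
        simp only [Nat.mod_eq_of_lt h1, Nat.mod_eq_of_lt h2] at this
        exact Fin.ext (by omega)
    have hcore := core_residue z Bk S2 e0 he0Bk hz.injOn ?_ hcard
    · have hCrw : ∀ j ∈ Bk,
          (z e0 - z j)⁻¹ - A⁻¹ *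
            ((∏ u ∈ S2, (z j - z u)) * ((z j - z e0)⁻¹ *
              ∏ i ∈ (univ.filter (fun d : Fin (m * N) => (d : ℕ) / N = (j : ℕ) / N)).erase j,
                ((z j - z i)⁻¹ * (z e0 - z i))))
          = (z e0 - z j)⁻¹ - A⁻¹ *
            ((∏ u ∈ S2, (z j - z u)) * ((z j - z e0)⁻¹ *
              ∏ i ∈ Bk.erase j, ((z j - z i)⁻¹ * (z e0 - z i)))) := by
        intro j hjB
        rw [hBkdef, Finset.mem_filter] at hjB
        rw [hjB.2]
      rw [Finset.sum_congr rfl hCrw, Finset.sum_sub_distrib, ← Finset.mul_sum, hcore]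
      rw [← hA, ← mul_assoc, inv_mul_cancel₀ hA0, one_mul]
      ring
    · intro i hi
      intro h
      have : e0 = i := hz h
      rw [hS2, Finset.mem_filter, ← this, he0v] at hi
      omega
  -- assemble
  rw [Finset.mul_sum]
  have hL : ∑ j ∈ univ.filter (fun j : Fin (m * N) => N ≤ (j : ℕ)),
      R z * (((R z)⁻¹ - (R (z ∘ Equiv.swap e0 j))⁻¹) / (z e0 - z j)) =
      ∑ j ∈ univ.filter (fun j : Fin (m * N) => N ≤ (j : ℕ)),
        ((z e0 - z j)⁻¹ - A⁻¹ *
          ((∏ u ∈ S2, (z j - z u)) * ((z j - z e0)⁻¹ *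
            ∏ i ∈ (univ.filter (fun d : Fin (m * N) => (d : ℕ) / N = (j : ℕ) / N)).erase j,
              ((z j - z i)⁻¹ * (z e0 - z i))))) := by
    refine Finset.sum_congr rfl fun j hjm => ?_
    rw [Finset.mem_filter] at hjm
    exact term_lemma m N hm hN z hz R hR j hjm.2
  rw [hL, hfib]
  have hsum2 : ∀ k ∈ Finset.Ico 1 m,
      ∑ j ∈ univ.filter (fun d : Fin (m * N) => (d : ℕ) / N = k),
        ((z e0 - z j)⁻¹ - A⁻¹ *
          ((∏ u ∈ S2, (z j - z u)) * ((z j - z e0)⁻¹ *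
            ∏ i ∈ (univ.filter (fun d : Fin (m * N) => (d : ℕ) / N = (j : ℕ) / N)).erase j,
              ((z j - z i)⁻¹ * (z e0 - z i)))))
      = 2 * (∑ j ∈ univ.filter (fun d : Fin (m * N) => (d : ℕ) / N = k), (z e0 - z j)⁻¹) -
          ∑ u ∈ S2, (z e0 - z u)⁻¹ := by
    intro k hk
    rw [Finset.mem_Ico] at hk
    exact hBk k hk.1 hk.2
  rw [Finset.sum_congr rfl hsum2, Finset.sum_sub_distrib, Finset.sum_const, ← Finset.mul_sum,
    ← hfib (fun j => (z e0 - z j)⁻¹)]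
  simp only [one_div, Nat.card_Ico, nsmul_eq_mul]
  have : ((m - 1 : ℕ) : ℂ) = (m : ℂ) - 1 := by
    push_cast [Nat.cast_sub hm]
    ring
  rw [this]
  ring
end

section
/- Let λ = (λ_1, λ_2) with λ_2 > 0 and d = λ_1 − λ_2. For a partitioning U = (U_1,...,U_ℓ) of {1,...,λ_1+λ_2} into ℓ (possibly empty) blocks, exactly d of odd cardinality, define R(U) = ∏_blocks ∏ (y_{u_{2i−1}} − y_{u_{2i}}) pairing up consecutive elements of each block in increasing order (dropping a leftover element in odd blocks). Then for any such U, the polynomial R(U)·(y_1 + ... + y_{λ_1+λ_2} − d·y_{λ_1+λ_2+1}), after dropping all non-square-free monomials, equals R(U)·(∑_a (y_a − y_{λ_1+λ_2+1})), where a runs over the largest elements of the odd-cardinality blocks of U. -/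
/-!
Splitting every block into its consecutive pairs, `y_1 + ⋯ + y_n` becomes the sum of the pair
sums `y_a + y_b` plus the largest elements of the odd blocks, while `d · y_{n+1}` contributes one
`y_{n+1}` for each odd block. Since `(y_a - y_b)(y_a + y_b) = y_a² - y_b²`, the product of `R(U)`
with a pair sum has no square-free monomial. The remaining terms `R(U)(y_a - y_{n+1})` are
already square-free: `R(U)` is a product of binomials in pairwise distinct variables, none of
which is `y_a` (the unpaired top of its block) or `y_{n+1}`.
-/

open MvPolynomial Finset

noncomputable section

def SF (p : MvPolynomial ℕ ℂ) : MvPolynomial ℕ ℂ :=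
  ∑ d ∈ p.support.filter (fun d => ∀ i ∈ d.support, d i ≤ 1),
    monomial d (coeff d p)

/-- `R` of a block `{u_1 < u_2 < … < u_r}`:
`(y_{u_1} - y_{u_2})(y_{u_3} - y_{u_4}) ⋯ (y_{u_{2⌊r/2⌋-1}} - y_{u_{2⌊r/2⌋}})`. -/
def Rblock (B : Finset ℕ) : MvPolynomial ℕ ℂ :=
  ∏ i ∈ Finset.range (B.card / 2),
    (X ((B.sort (· ≤ ·)).getD (2 * i) 0) - X ((B.sort (· ≤ ·)).getD (2 * i + 1) 0))

def RU {l : ℕ} (U : Fin l → Finset ℕ) : MvPolynomial ℕ ℂ :=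
  ∏ j, Rblock (U j)

section DegreeOf

variable {σ ι R : Type*} [CommSemiring R]

lemma degreeOf_mul_le_one {p q : MvPolynomial σ R} (hp : ∀ v, degreeOf v p ≤ 1)
    (hq : ∀ v, degreeOf v q ≤ 1) (hpq : Disjoint p.vars q.vars) (v : σ) :
    degreeOf v (p * q) ≤ 1 := by
  refine (degreeOf_mul_le v p q).trans ?_
  by_cases hv : v ∈ p.vars
  · have : degreeOf v q = 0 := by
      simpa [mem_vars_iff_degreeOf_ne_zero] using Finset.disjoint_left.mp hpq hv
    simpa [this] using hp v
  · have : degreeOf v p = 0 := by simpa [mem_vars_iff_degreeOf_ne_zero] using hv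
    simpa [this] using hq v

lemma degreeOf_prod_le_one {s : Finset ι} {f : ι → MvPolynomial σ R}
    (hf : ∀ i ∈ s, ∀ v, degreeOf v (f i) ≤ 1)
    (hdisj : (s : Set ι).PairwiseDisjoint fun i => (f i).vars) (v : σ) :
    degreeOf v (∏ i ∈ s, f i) ≤ 1 := by
  classical
  have hsum : ∑ i ∈ s, degreeOf v (f i) = ∑ i ∈ s with v ∈ (f i).vars, degreeOf v (f i) := by
    refine (Finset.sum_filter_of_ne fun i _ h => ?_).symm
    exact mem_vars_iff_degreeOf_ne_zero.mpr h
  have hcard : #{i ∈ s | v ∈ (f i).vars} ≤ 1 := by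
    refine Finset.card_le_one.mpr fun i hi j hj => ?_
    simp only [Finset.mem_filter] at hi hj
    by_contra hij
    exact Finset.disjoint_left.mp (hdisj hi.1 hj.1 hij) hi.2 hj.2
  calc degreeOf v (∏ i ∈ s, f i) ≤ ∑ i ∈ s, degreeOf v (f i) := degreeOf_prod_le v s f
    _ = ∑ i ∈ s with v ∈ (f i).vars, degreeOf v (f i) := hsum
    _ ≤ ∑ i ∈ s with v ∈ (f i).vars, 1 :=
        Finset.sum_le_sum fun i hi => hf i (Finset.mem_filter.mp hi).1 v
    _ ≤ 1 := by simpa using hcard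

end DegreeOf

section Binomial

variable {σ R : Type*} [CommRing R]

lemma degreeOf_X_sub_X_le_one [Nontrivial R] (a b v : σ) :
    degreeOf v (X a - X b : MvPolynomial σ R) ≤ 1 := by
  classical
  refine (degreeOf_sub_le v _ _).trans (max_le ?_ ?_) <;>
    · rw [degreeOf_X]; split_ifs <;> omega

lemma vars_X_sub_X_subset [DecidableEq σ] [Nontrivial R] (a b : σ) :
    (X a - X b : MvPolynomial σ R).vars ⊆ {a, b} := by
  refine (vars_sub_subset _).trans ?_
  rw [vars_X, vars_X]; rfl

end Binomial

lemma coeff_SF (p : MvPolynomial ℕ ℂ) (d : ℕ →₀ ℕ) :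
    coeff d (SF p) = if ∀ i ∈ d.support, d i ≤ 1 then coeff d p else 0 := by
  classical
  simp only [SF, coeff_sum, coeff_monomial, Finset.sum_ite_eq', Finset.mem_filter, mem_support_iff]
  by_cases hd : coeff d p = 0 <;> simp [hd]

lemma SF_add (p q : MvPolynomial ℕ ℂ) : SF (p + q) = SF p + SF q := by
  ext d
  simp only [coeff_SF, coeff_add]
  split_ifs <;> simp

lemma SF_sum {ι : Type*} (s : Finset ι) (f : ι → MvPolynomial ℕ ℂ) :
    SF (∑ i ∈ s, f i) = ∑ i ∈ s, SF (f i) :=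
  map_sum (AddMonoidHom.mk' SF SF_add) f s

lemma SF_X_sq_mul (a : ℕ) (q : MvPolynomial ℕ ℂ) : SF (X a ^ 2 * q) = 0 := by
  ext d
  rw [coeff_SF, coeff_zero, X_pow_eq_monomial, coeff_monomial_mul']
  split_ifs with hsf h2 <;> try rfl
  have ha : 2 ≤ d a := by simpa using Finsupp.single_le_iff.mp h2
  have := hsf a (Finsupp.mem_support_iff.mpr (by omega))
  omega

lemma SF_eq_self {p : MvPolynomial ℕ ℂ} (hp : ∀ v, degreeOf v p ≤ 1) : SF p = p := by
  ext d
  rw [coeff_SF, ite_eq_left_iff]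
  intro hsf
  by_contra hd
  exact hsf fun i _ => (monomial_le_degreeOf i (mem_support_iff.mpr (Ne.symm hd))).trans (hp i)

/-- The `k`-th smallest element of `B`, counting from `0`; junk value `0` when `#B ≤ k`. -/
def sortedEntry (B : Finset ℕ) (k : ℕ) : ℕ := (B.sort (· ≤ ·)).getD k 0

section SortedEntry

variable {B : Finset ℕ}

lemma sortedEntry_eq_getElem {k : ℕ} (hk : k < #B) :
    sortedEntry B k = (B.sort (· ≤ ·))[k]'(by rwa [Finset.length_sort]) :=
  List.getD_eq_getElem _ _ _

lemma sortedEntry_mem {k : ℕ} (hk : k < #B) : sortedEntry B k ∈ B := by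
  rw [sortedEntry_eq_getElem hk]
  exact (Finset.mem_sort _).mp (List.getElem_mem _)

lemma sortedEntry_injOn (B : Finset ℕ) : Set.InjOn (sortedEntry B) (Set.Iio #B) := by
  intro k hk k' hk' h
  rw [sortedEntry_eq_getElem hk, sortedEntry_eq_getElem hk'] at h
  exact (B.sort_nodup _).getElem_inj_iff.mp h

lemma sortedEntry_card_sub_one (hB : B.Nonempty) :
    sortedEntry B (#B - 1) = WithBot.unbotD 0 B.max := by
  have hlt : (B.sort (· ≤ ·)).length - 1 < (B.sort (· ≤ ·)).length := by
    simp [Finset.length_sort, hB.card_pos]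
  rw [sortedEntry, ← Finset.length_sort (· ≤ ·), List.getD_eq_getElem _ _ hlt,
    Finset.sorted_last_eq_max'_aux B hlt hB, ← Finset.coe_max' hB, WithBot.unbotD_coe]

lemma sum_eq_sum_range_sortedEntry {M : Type*} [AddCommMonoid M] (B : Finset ℕ) (f : ℕ → M) :
    ∑ x ∈ B, f x = ∑ k ∈ range #B, f (sortedEntry B k) := by
  refine (Finset.sum_nbij (sortedEntry B) (fun k hk => sortedEntry_mem (mem_range.mp hk))
    (fun k hk k' hk' => sortedEntry_injOn B (mem_range.mp hk) (mem_range.mp hk')) ?_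
    fun _ _ => rfl).symm
  intro x hx
  obtain ⟨k, hk, rfl⟩ := List.mem_iff_getElem.mp ((Finset.mem_sort (· ≤ ·)).mpr hx)
  rw [Finset.length_sort] at hk
  exact ⟨k, mem_range.mpr hk, sortedEntry_eq_getElem hk⟩

end SortedEntry

lemma sum_range_two_mul {M : Type*} [AddCommMonoid M] (m : ℕ) (f : ℕ → M) :
    ∑ k ∈ range (2 * m), f k = ∑ i ∈ range m, (f (2 * i) + f (2 * i + 1)) := by
  induction m with
  | zero => simp
  | succ m ih => rw [Nat.mul_succ, sum_range_succ, sum_range_succ, sum_range_succ, ih, add_assoc]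

lemma sum_eq_sum_pairs_add {M : Type*} [AddCommMonoid M] (B : Finset ℕ) (f : ℕ → M) :
    ∑ x ∈ B, f x =
      ∑ i ∈ range (#B / 2), (f (sortedEntry B (2 * i)) + f (sortedEntry B (2 * i + 1))) +
        if Odd #B then f (WithBot.unbotD 0 B.max) else 0 := by
  rw [sum_eq_sum_range_sortedEntry, ← sum_range_two_mul _ fun k => f (sortedEntry B k)]
  rcases Nat.even_or_odd #B with heven | hodd
  · rw [Nat.two_mul_div_two_of_even heven, if_neg (Nat.not_odd_iff_even.mpr heven), add_zero]
  · rw [if_pos hodd, ← sortedEntry_card_sub_one (Finset.card_pos.mp hodd.pos)]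
    obtain ⟨m, hm⟩ := hodd
    rw [show #B / 2 = m by omega, hm, sum_range_succ, Nat.add_sub_cancel]

lemma vars_Rblock_subset (B : Finset ℕ) :
    (Rblock B).vars ⊆ (range (2 * (#B / 2))).image (sortedEntry B) := by
  classical
  refine (vars_prod _).trans (Finset.biUnion_subset.mpr fun i hi => ?_)
  refine (vars_X_sub_X_subset _ _).trans ?_
  have hi := mem_range.mp hi
  simp only [Finset.insert_subset_iff, Finset.singleton_subset_iff, Finset.mem_image, mem_range]
  exact ⟨⟨2 * i, by omega, rfl⟩, ⟨2 * i + 1, by omega, rfl⟩⟩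

lemma vars_Rblock_subset_self (B : Finset ℕ) : (Rblock B).vars ⊆ B := by
  refine (vars_Rblock_subset B).trans fun x hx => ?_
  obtain ⟨k, hk, rfl⟩ := Finset.mem_image.mp hx
  exact sortedEntry_mem (by have := mem_range.mp hk; omega)

lemma max_notMem_vars_Rblock {B : Finset ℕ} (hB : Odd #B) :
    WithBot.unbotD 0 B.max ∉ (Rblock B).vars := by
  intro hmem
  obtain ⟨k, hk, hkmax⟩ := Finset.mem_image.mp (vars_Rblock_subset B hmem)
  have hcard : #B = 2 * (#B / 2) + 1 := (Nat.two_mul_div_two_add_one_of_odd hB).symm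
  have hk' := mem_range.mp hk
  rw [← sortedEntry_card_sub_one (Finset.card_pos.mp hB.pos)] at hkmax
  have hk_eq := sortedEntry_injOn B (show k < #B by omega) (show #B - 1 < #B by omega) hkmax
  omega

lemma degreeOf_Rblock_le_one (B : Finset ℕ) (v : ℕ) : degreeOf v (Rblock B) ≤ 1 := by
  refine degreeOf_prod_le_one (fun i _ => degreeOf_X_sub_X_le_one _ _) ?_ v
  intro i hi i' hi' hne
  classical
  refine Finset.disjoint_of_subset_left (vars_X_sub_X_subset _ _)
    (Finset.disjoint_of_subset_right (vars_X_sub_X_subset _ _) ?_)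
  have hi := mem_range.mp hi
  have hi' := mem_range.mp hi'
  have hinj : ∀ k k', k < #B → k' < #B → sortedEntry B k = sortedEntry B k' → k = k' :=
    fun k k' hk hk' h => sortedEntry_injOn B hk hk' h
  rw [Finset.disjoint_left]
  intro x hx hx'
  simp only [Finset.mem_insert, Finset.mem_singleton] at hx hx'
  rcases hx with rfl | rfl <;> rcases hx' with h | h <;>
    · have := hinj _ _ (by omega) (by omega) h
      omega

lemma SF_prod_mul_X_add_X_eq_zero {ι : Type*} [DecidableEq ι] {T : Finset ι} {a b : ι → ℕ}
    {e : ι} (he : e ∈ T) :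
    SF ((∏ e' ∈ T, (X (a e') - X (b e') : MvPolynomial ℕ ℂ)) * (X (a e) + X (b e))) = 0 := by
  set q := ∏ e' ∈ T.erase e, (X (a e') - X (b e') : MvPolynomial ℕ ℂ)
  rw [← Finset.mul_prod_erase T _ he,
    show (X (a e) - X (b e)) * q * (X (a e) + X (b e)) = X (a e) ^ 2 * q + X (b e) ^ 2 * -q by
      ring,
    SF_add, SF_X_sq_mul, SF_X_sq_mul, add_zero]

open Function

section Partition

variable {l : ℕ} {U : Fin l → Finset ℕ}

def pairIndex (U : Fin l → Finset ℕ) : Finset (Σ _ : Fin l, ℕ) :=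
  univ.sigma fun j => range (#(U j) / 2)

lemma RU_eq_prod_pairIndex (U : Fin l → Finset ℕ) :
    RU U = ∏ e ∈ pairIndex U,
      (X (sortedEntry (U e.1) (2 * e.2)) - X (sortedEntry (U e.1) (2 * e.2 + 1))) := by
  rw [pairIndex, prod_sigma]; rfl

lemma sum_biUnion_eq_sum_pairIndex_add {M : Type*} [AddCommMonoid M]
    (hdisj : Pairwise (Disjoint on U)) (f : ℕ → M) :
    ∑ x ∈ univ.biUnion U, f x =
      ∑ e ∈ pairIndex U, (f (sortedEntry (U e.1) (2 * e.2)) +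
          f (sortedEntry (U e.1) (2 * e.2 + 1))) +
        ∑ j with Odd #(U j), f (WithBot.unbotD 0 (U j).max) := by
  classical
  rw [sum_biUnion fun i _ j _ hij => hdisj hij, pairIndex, sum_sigma, sum_filter,
    ← sum_add_distrib]
  exact sum_congr rfl fun j _ => sum_eq_sum_pairs_add (U j) f

lemma vars_RU_subset (U : Fin l → Finset ℕ) : (RU U).vars ⊆ univ.biUnion U := by
  classical
  exact (vars_prod _).trans (biUnion_subset_biUnion_of_subset_left _ le_rfl |>.trans
    (Finset.biUnion_mono fun j _ => vars_Rblock_subset_self (U j)))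

lemma degreeOf_RU_le_one (hdisj : Pairwise (Disjoint on U)) (v : ℕ) :
    degreeOf v (RU U) ≤ 1 :=
  degreeOf_prod_le_one (fun j _ => degreeOf_Rblock_le_one (U j))
    (fun _ _ _ _ hij => (hdisj hij).mono (vars_Rblock_subset_self _) (vars_Rblock_subset_self _)) v

lemma max_notMem_vars_RU (hdisj : Pairwise (Disjoint on U)) {j : Fin l} (hj : Odd #(U j)) :
    WithBot.unbotD 0 (U j).max ∉ (RU U).vars := by
  classical
  intro hmem
  obtain ⟨i, -, hi⟩ := Finset.mem_biUnion.mp (vars_prod _ hmem)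
  by_cases hij : i = j
  · exact max_notMem_vars_Rblock hj (hij ▸ hi)
  · have hmax : WithBot.unbotD 0 (U j).max ∈ U j := by
      rw [← sortedEntry_card_sub_one (card_pos.mp hj.pos)]
      exact sortedEntry_mem (Nat.sub_lt hj.pos one_pos)
    exact disjoint_left.mp (hdisj hij) (vars_Rblock_subset_self _ hi) hmax

lemma degreeOf_RU_mul_X_sub_X_le_one (hdisj : Pairwise (Disjoint on U)) {a c : ℕ}
    (ha : a ∉ (RU U).vars) (hc : c ∉ (RU U).vars) (v : ℕ) :
    degreeOf v (RU U * (X a - X c)) ≤ 1 := by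
  classical
  refine degreeOf_mul_le_one (degreeOf_RU_le_one hdisj) (degreeOf_X_sub_X_le_one a c)
    (Finset.disjoint_of_subset_right (vars_X_sub_X_subset a c) ?_) v
  simp [ha, hc]

end Partition

/-- Indices are 0-based: the variables are `y_0, y_1, …`, the set being partitioned is
`{0,…,n-1}` with `n = λ₁ + λ₂`, and the new variable is `y_n`. -/
theorem SF_RU_mul_eq_general
    (lam1 lam2 l : ℕ)
    (U : Fin l → Finset ℕ)
    (hdisj : ∀ i j, i ≠ j → Disjoint (U i) (U j))
    (hcover : Finset.univ.biUnion U = Finset.range (lam1 + lam2))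
    (hodd : (Finset.univ.filter fun j => Odd (U j).card).card = lam1 - lam2) :
    SF (RU U * ((∑ i ∈ Finset.range (lam1 + lam2), X i) -
        C ((lam1 - lam2 : ℕ) : ℂ) * X (lam1 + lam2))) =
      RU U * ∑ j ∈ Finset.univ.filter (fun j => Odd (U j).card),
        (X (WithBot.unbotD 0 (U j).max) - X (lam1 + lam2)) := by
  classical
  set n := lam1 + lam2
  have hdisj' : Pairwise (Disjoint on U) := fun i j h => hdisj i j h
  have hsum := sum_biUnion_eq_sum_pairIndex_add hdisj' (X : ℕ → MvPolynomial ℕ ℂ)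
  rw [hcover] at hsum
  have hscalar : C ((lam1 - lam2 : ℕ) : ℂ) * X n =
      ∑ j with Odd #(U j), (X n : MvPolynomial ℕ ℂ) := by
    rw [sum_const, hodd, nsmul_eq_mul, map_natCast]
  have hn : n ∉ (RU U).vars := fun h => by simpa [hcover] using vars_RU_subset U h
  rw [hsum, hscalar, add_sub_assoc, ← sum_sub_distrib, mul_add, mul_sum, mul_sum, SF_add,
    SF_sum, SF_sum, sum_eq_zero fun e he => ?_, zero_add]
  · exact sum_congr rfl fun j hj => SF_eq_self <| degreeOf_RU_mul_X_sub_X_le_one hdisj'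
      (max_notMem_vars_RU hdisj' (mem_filter.mp hj).2) hn
  · rw [RU_eq_prod_pairIndex]
    exact SF_prod_mul_X_add_X_eq_zero he

/-- Lemma on the square-free map: for a partitioning `U` of `{1,…,λ₁+λ₂}` into `ℓ`
(possibly empty) blocks, exactly `d = λ₁ - λ₂` of odd cardinality, we have
`SF(R(U)·(y_1 + … + y_{λ₁+λ₂} - d·y_{λ₁+λ₂+1})) = R(U)·∑_a (y_a - y_{λ₁+λ₂+1})`,
where `a` runs over the largest elements of the odd-cardinality blocks of `U`.
(Indices are 0-based: the variables of `ℂ[y]` are `y_0, y_1, …`, the set being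
partitioned is `{0,…,n-1}` with `n = λ₁ + λ₂`, and the new variable is `y_n`.) -/
theorem SF_RU_mul_eq
    (lam1 lam2 l : ℕ) (hlam : lam2 ≤ lam1) (hlam2 : 0 < lam2)
    (U : Fin l → Finset ℕ)
    (hdisj : ∀ i j, i ≠ j → Disjoint (U i) (U j))
    (hcover : Finset.univ.biUnion U = Finset.range (lam1 + lam2))
    (hodd : (Finset.univ.filter fun j => Odd (U j).card).card = lam1 - lam2) :
    SF (RU U * ((∑ i ∈ Finset.range (lam1 + lam2), X i) -
        C ((lam1 - lam2 : ℕ) : ℂ) * X (lam1 + lam2))) =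
      RU U * ∑ j ∈ Finset.univ.filter (fun j => Odd (U j).card),
        (X (WithBot.unbotD 0 (U j).max) - X (lam1 + lam2)) :=
  SF_RU_mul_eq_general lam1 lam2 l U hdisj hcover hodd
end
end
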